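/- arXiv:2507.03554 — 5 statements merged into one kernel-verified Lean document; each statement's English description precedes it below -/
import Mathlib

section
/- Fix γ > 0, and let θ = [a₀; a₁, a₂, …] be the continued fraction with a₀ = 1 and a_{k+1} = ⌊q_k^γ⌋ + 1 for every k ≥ 0, where q_k is the denominator of the k-th convergent of θ. Then ω̂̂(Λ_θ) = γ/(2 + 2γ). -/
set_option linter.unusedSectionVars false

open Filter

/-- sup-norm of a point of `ℝ²`. -/
noncomputable def latNorm (z : ℝ × ℝ) : ℝ := max |z.1| |z.2|

/-- `Π(z) = (|z₁|·|z₂|)^(1/2)`. -/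
noncomputable def latProd (z : ℝ × ℝ) : ℝ := (|z.1| * |z.2|) ^ ((1 : ℝ) / 2)

/-- The lattice `Λ_θ = {(θq − p, q + θp) : (q, p) ∈ ℤ²}`. -/
def latticeOf (θ : ℝ) : Set (ℝ × ℝ) :=
  {z | ∃ q p : ℤ, z = (θ * (q : ℝ) - (p : ℝ), (q : ℝ) + θ * (p : ℝ))}

/-- The weak uniform Diophantine exponent of a lattice `Λ ⊆ ℝ²`:
the supremum (in `EReal`) of real `γ` such that for every sufficiently large `t`
there is a nonzero `z ∈ Λ` with `|z| ≤ t` and `Π(z) ≤ t^(−γ)`. -/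
noncomputable def weakUniformExpLat (Λ : Set (ℝ × ℝ)) : EReal :=
  sSup {g : EReal | ∃ γ : ℝ, g = (γ : EReal) ∧
    ∀ᶠ t : ℝ in atTop, ∃ z ∈ Λ, z ≠ 0 ∧ latNorm z ≤ t ∧ latProd z ≤ t ^ (-γ)}

open Filter

private theorem twoStep {P : ℕ → Prop} (h0 : P 0) (h1 : P 1)
    (h : ∀ k, P k → P (k + 1) → P (k + 2)) : ∀ k, P k := by
  have key : ∀ k, P k ∧ P (k + 1) := by
    intro k
    induction k with
    | zero => exact ⟨h0, h1⟩
    | succ n ih => exact ⟨ih.2, h n ih.1 ih.2⟩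
  exact fun k => (key k).1

section CF

variable (γ : ℝ) (hγ : 0 < γ) (a p q : ℕ → ℕ)
  (ha0 : a 0 = 1)
  (haS : ∀ k, a (k + 1) = ⌊(q k : ℝ) ^ γ⌋₊ + 1)
  (hp0 : p 0 = a 0) (hq0 : q 0 = 1)
  (hp1 : p 1 = a 1 * a 0 + 1) (hq1 : q 1 = a 1)
  (hpS : ∀ k, p (k + 2) = a (k + 2) * p (k + 1) + p k)
  (hqS : ∀ k, q (k + 2) = a (k + 2) * q (k + 1) + q k)

include ha0 haS hq0 hq1 in
theorem cf_a1 : a 1 = 2 := by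
  have := haS 0
  rw [hq0] at this
  simpa using this

include haS in
include ha0 haS hq0 hq1 hqS in
theorem cf_q_lt : ∀ k, q k < q (k + 1) := by
  have ha1 : a 1 = 2 := cf_a1 γ a q ha0 haS hq0 hq1
  have hq_pos : ∀ k, 1 ≤ q k := by
    refine twoStep ?_ ?_ ?_
    · omega
    · omega
    · intro k h1 h2
      rw [hqS k]
      have : 1 ≤ a (k + 2) := by rw [haS (k+1)]; omega
      nlinarith
  intro k
  match k with
  | 0 => rw [hq0, hq1, ha1]; omega
  | Nat.succ n =>
    rw [hqS n]
    have h1 : 1 ≤ a (n + 2) := by rw [haS (n+1)]; omega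
    have h2 : 1 ≤ q n := hq_pos n
    have h3 : 1 ≤ q (n+1) := hq_pos (n+1)
    nlinarith

include ha0 haS hq0 hq1 hqS in
theorem cf_q_pos : ∀ k, 1 ≤ q k := by
  intro k
  induction k with
  | zero => omega
  | succ n ih => exact le_trans ih (le_of_lt (cf_q_lt γ a q ha0 haS hq0 hq1 hqS n))

include ha0 haS hq0 hq1 hqS in
theorem cf_q_mono : StrictMono q :=
  strictMono_nat_of_lt_succ (cf_q_lt γ a q ha0 haS hq0 hq1 hqS)

include ha0 haS hq0 hq1 hqS in
theorem cf_q_ge : ∀ k, k + 1 ≤ q k := by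
  intro k
  induction k with
  | zero => omega
  | succ n ih => have := cf_q_lt γ a q ha0 haS hq0 hq1 hqS n; omega

include ha0 hp0 hp1 hpS haS hq0 hq1 in
theorem cf_p_pos : ∀ k, 1 ≤ p k := by
  refine twoStep ?_ ?_ ?_
  · omega
  · omega
  · intro k h1 h2; rw [hpS k]; omega

include ha0 hp0 hq0 hp1 hq1 hpS hqS in
theorem cf_det : ∀ k, (p (k + 1) : ℤ) * q k - (p k : ℤ) * q (k + 1) = (-1) ^ k := by
  intro k
  induction k with
  | zero =>
    rw [hp0, hq0, hp1, hq1, ha0]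
    push_cast; ring
  | succ n ih =>
    rw [hpS n, hqS n]
    push_cast
    push_cast at ih
    rw [pow_succ]
    nlinarith [ih]

end CF

section CFreal

variable (γ : ℝ) (hγ : 0 < γ) (a p q : ℕ → ℕ) (θ : ℝ)
  (ha0 : a 0 = 1)
  (haS : ∀ k, a (k + 1) = ⌊(q k : ℝ) ^ γ⌋₊ + 1)
  (hp0 : p 0 = a 0) (hq0 : q 0 = 1)
  (hp1 : p 1 = a 1 * a 0 + 1) (hq1 : q 1 = a 1)
  (hpS : ∀ k, p (k + 2) = a (k + 2) * p (k + 1) + p k)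
  (hqS : ∀ k, q (k + 2) = a (k + 2) * q (k + 1) + q k)
  (hθ : Filter.Tendsto (fun k => (p k : ℝ) / (q k : ℝ)) Filter.atTop (nhds θ))

include ha0 haS hq0 hq1 hqS in
theorem cf_q_posR : ∀ k, (0 : ℝ) < q k := by
  intro k
  exact_mod_cast Nat.lt_of_lt_of_le Nat.zero_lt_one (cf_q_pos γ a q ha0 haS hq0 hq1 hqS k)

include ha0 haS hp0 hq0 hp1 hq1 hpS hqS in
theorem cf_diff : ∀ k, (p (k+1) : ℝ) / q (k+1) - (p k : ℝ) / q k
    = (-1) ^ k / ((q k : ℝ) * q (k+1)) := by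
  intro k
  have hd := cf_det a p q ha0 hp0 hq0 hp1 hq1 hpS hqS k
  have hdr : (p (k + 1) : ℝ) * q k - (p k : ℝ) * q (k + 1) = (-1) ^ k := by
    exact_mod_cast congrArg (fun z : ℤ => (z : ℝ)) hd
  have h1 := cf_q_posR γ a q ha0 haS hq0 hq1 hqS k
  have h2 := cf_q_posR γ a q ha0 haS hq0 hq1 hqS (k+1)
  rw [div_sub_div _ _ (ne_of_gt h2) (ne_of_gt h1)]
  congr 1 <;> [linear_combination hdr; ring]

include ha0 haS hp0 hq0 hp1 hq1 hpS hqS in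
theorem cf_diff2 : ∀ k, (p (k+2) : ℝ) / q (k+2) - (p k : ℝ) / q k
    = (-1) ^ k * (a (k+2) : ℝ) * q (k+1) / ((q k : ℝ) * q (k+1) * q (k+2)) := by
  intro k
  have d1 := cf_diff γ a p q ha0 haS hp0 hq0 hp1 hq1 hpS hqS k
  have d2 := cf_diff γ a p q ha0 haS hp0 hq0 hp1 hq1 hpS hqS (k+1)
  have h1 := cf_q_posR γ a q ha0 haS hq0 hq1 hqS k
  have h2 := cf_q_posR γ a q ha0 haS hq0 hq1 hqS (k+1)
  have h3 := cf_q_posR γ a q ha0 haS hq0 hq1 hqS (k+2)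
  have hq2 : (q (k+2) : ℝ) = (a (k+2) : ℝ) * q (k+1) + q k := by
    rw [hqS k]; push_cast; ring
  have : (p (k+2) : ℝ) / q (k+2) - (p k : ℝ) / q k
      = ((-1) ^ (k+1)) / ((q (k+1) : ℝ) * q (k+2)) + ((-1) ^ k) / ((q k : ℝ) * q (k+1)) := by
    rw [← d1, ← d2]; ring
  rw [this, pow_succ]
  rw [div_add_div _ _ (by positivity) (by positivity), div_eq_div_iff (by positivity) (by positivity)]
  linear_combination ((q k : ℝ) * (q (k+1)) ^ 2 * q (k+2) * (-1) ^ k) * hq2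

end CFreal

section CFsign

variable (γ : ℝ) (hγ : 0 < γ) (a p q : ℕ → ℕ) (θ : ℝ)
  (ha0 : a 0 = 1)
  (haS : ∀ k, a (k + 1) = ⌊(q k : ℝ) ^ γ⌋₊ + 1)
  (hp0 : p 0 = a 0) (hq0 : q 0 = 1)
  (hp1 : p 1 = a 1 * a 0 + 1) (hq1 : q 1 = a 1)
  (hpS : ∀ k, p (k + 2) = a (k + 2) * p (k + 1) + p k)
  (hqS : ∀ k, q (k + 2) = a (k + 2) * q (k + 1) + q k)
  (hθ : Filter.Tendsto (fun k => (p k : ℝ) / (q k : ℝ)) Filter.atTop (nhds θ))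

include γ hγ ha0 haS hp0 hq0 hp1 hq1 hpS hqS in
theorem cf_a_posR : ∀ k, (1 : ℝ) ≤ a k := by
  intro k
  match k with
  | 0 => rw [ha0]; norm_num
  | Nat.succ n =>
    rw [haS n]; push_cast
    have : (0:ℝ) ≤ (⌊(q n : ℝ) ^ γ⌋₊ : ℝ) := by positivity
    linarith

include γ hγ ha0 haS hp0 hq0 hp1 hq1 hpS hqS in
theorem cf_step2 : ∀ k, (0 : ℝ) < (-1) ^ k * ((p (k+2) : ℝ) / q (k+2) - (p k : ℝ) / q k) := by
  intro k
  rw [cf_diff2 γ a p q ha0 haS hp0 hq0 hp1 hq1 hpS hqS k]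
  have h1 := cf_q_posR γ a q ha0 haS hq0 hq1 hqS k
  have h2 := cf_q_posR γ a q ha0 haS hq0 hq1 hqS (k+1)
  have h3 := cf_q_posR γ a q ha0 haS hq0 hq1 hqS (k+2)
  have h4 := cf_a_posR γ hγ a p q ha0 haS hp0 hq0 hp1 hq1 hpS hqS (k+2)
  have hsq : ((-1 : ℝ)) ^ k * (-1) ^ k = 1 := by
    rw [← pow_add, Even.neg_one_pow ⟨k, by ring⟩]
  calc (0:ℝ) < ((a (k+2) : ℝ) * q (k+1) / ((q k : ℝ) * q (k+1) * q (k+2)))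
        * ((-1) ^ k * (-1) ^ k) := by rw [hsq]; positivity
    _ = (-1) ^ k * ((-1) ^ k * (a (k+2) : ℝ) * q (k+1) / ((q k : ℝ) * q (k+1) * q (k+2))) := by
        ring

include γ hγ ha0 haS hp0 hq0 hp1 hq1 hpS hqS hθ in
theorem cf_even_le : ∀ i, (p (2*i) : ℝ) / q (2*i) ≤ θ := by
  have hmono : Monotone (fun i => (p (2*i) : ℝ) / q (2*i)) := by
    apply monotone_nat_of_le_succ
    intro i
    have h := cf_step2 γ hγ a p q ha0 haS hp0 hq0 hp1 hq1 hpS hqS (2*i)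
    have he : ((-1:ℝ)) ^ (2*i) = 1 := Even.neg_one_pow ⟨i, by ring⟩
    rw [he, one_mul] at h
    have h2 : 2*(i+1) = 2*i+2 := by ring
    rw [h2]
    linarith
  have htt : Filter.Tendsto (fun i => (p (2*i) : ℝ) / q (2*i)) Filter.atTop (nhds θ) :=
    hθ.comp (tendsto_atTop_mono (fun i => (by omega : i ≤ 2*i)) tendsto_id)
  exact fun i => hmono.ge_of_tendsto htt i

include γ hγ ha0 haS hp0 hq0 hp1 hq1 hpS hqS in
theorem cf_odd_anti : Antitone (fun i => (p (2*i+1) : ℝ) / q (2*i+1)) := by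
  apply antitone_nat_of_succ_le
  intro i
  have h := cf_step2 γ hγ a p q ha0 haS hp0 hq0 hp1 hq1 hpS hqS (2*i+1)
  have he : ((-1:ℝ)) ^ (2*i+1) = -1 := Odd.neg_one_pow ⟨i, by ring⟩
  rw [he] at h
  have h2 : 2*(i+1)+1 = 2*i+1+2 := by ring
  rw [h2]
  linarith

include γ hγ ha0 haS hp0 hq0 hp1 hq1 hpS hqS hθ in
theorem cf_odd_ge : ∀ i, θ ≤ (p (2*i+1) : ℝ) / q (2*i+1) := by
  have htt : Filter.Tendsto (fun i => (p (2*i+1) : ℝ) / q (2*i+1)) Filter.atTop (nhds θ) :=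
    hθ.comp (tendsto_atTop_mono (fun i => (by omega : i ≤ 2*i+1)) tendsto_id)
  exact fun i => (cf_odd_anti γ hγ a p q ha0 haS hp0 hq0 hp1 hq1 hpS hqS).le_of_tendsto htt i

include γ hγ ha0 haS hp0 hq0 hp1 hq1 hpS hqS hθ in
theorem cf_sign : ∀ k, 0 < (-1 : ℝ) ^ k * (θ - (p k : ℝ) / q k) := by
  intro k
  rcases Nat.even_or_odd k with ⟨i, hi⟩ | ⟨i, hi⟩
  · subst hi
    have he : ((-1:ℝ)) ^ (i+i) = 1 := Even.neg_one_pow ⟨i, rfl⟩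
    rw [he, one_mul]
    have h1 : (p (2*(i+1)) : ℝ) / q (2*(i+1)) ≤ θ :=
      cf_even_le γ hγ a p q θ ha0 haS hp0 hq0 hp1 hq1 hpS hqS hθ (i+1)
    have h2 := cf_step2 γ hγ a p q ha0 haS hp0 hq0 hp1 hq1 hpS hqS (i+i)
    have he2 : ((-1:ℝ)) ^ (i+i) = 1 := he
    rw [he2, one_mul] at h2
    have h3 : 2*(i+1) = i+i+2 := by ring
    rw [h3] at h1
    linarith
  · subst hi
    have he : ((-1:ℝ)) ^ (2*i+1) = -1 := Odd.neg_one_pow ⟨i, by ring⟩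
    rw [he]
    have h1 : θ ≤ (p (2*(i+1)+1) : ℝ) / q (2*(i+1)+1) :=
      cf_odd_ge γ hγ a p q θ ha0 haS hp0 hq0 hp1 hq1 hpS hqS hθ (i+1)
    have h2 := cf_step2 γ hγ a p q ha0 haS hp0 hq0 hp1 hq1 hpS hqS (2*i+1)
    have he2 : ((-1:ℝ)) ^ (2*i+1) = -1 := he
    rw [he2] at h2
    have h3 : 2*(i+1)+1 = 2*i+1+2 := by ring
    rw [h3] at h1
    linarith

end CFsign

section CFbounds

variable (γ : ℝ) (hγ : 0 < γ) (a p q : ℕ → ℕ) (θ : ℝ)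
  (ha0 : a 0 = 1)
  (haS : ∀ k, a (k + 1) = ⌊(q k : ℝ) ^ γ⌋₊ + 1)
  (hp0 : p 0 = a 0) (hq0 : q 0 = 1)
  (hp1 : p 1 = a 1 * a 0 + 1) (hq1 : q 1 = a 1)
  (hpS : ∀ k, p (k + 2) = a (k + 2) * p (k + 1) + p k)
  (hqS : ∀ k, q (k + 2) = a (k + 2) * q (k + 1) + q k)
  (hθ : Filter.Tendsto (fun k => (p k : ℝ) / (q k : ℝ)) Filter.atTop (nhds θ))

include γ hγ ha0 haS hp0 hq0 hp1 hq1 hpS hqS hθ in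
theorem cf_E_upper : ∀ k, (-1 : ℝ) ^ k * (θ * q k - p k) ≤ 1 / (q (k+1) : ℝ) := by
  intro k
  have hq1pos := cf_q_posR γ a q ha0 haS hq0 hq1 hqS (k+1)
  have hqpos := cf_q_posR γ a q ha0 haS hq0 hq1 hqS k
  -- sign upper bound
  have s1 := cf_sign γ hγ a p q θ ha0 haS hp0 hq0 hp1 hq1 hpS hqS hθ (k+1)
  have d := cf_diff γ a p q ha0 haS hp0 hq0 hp1 hq1 hpS hqS k
  have hsq : ((-1 : ℝ)) ^ k * (-1) ^ k = 1 := by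
    rw [← pow_add, Even.neg_one_pow ⟨k, by ring⟩]
  have d2 : (-1:ℝ) ^ k * ((p (k+1) : ℝ) / q (k+1) - (p k : ℝ) / q k)
      = 1 / ((q k : ℝ) * q (k+1)) := by
    calc (-1:ℝ) ^ k * ((p (k+1) : ℝ) / q (k+1) - (p k : ℝ) / q k)
        = (-1:ℝ) ^ k * ((-1) ^ k / ((q k : ℝ) * q (k+1))) := by rw [d]
      _ = ((-1:ℝ) ^ k * (-1) ^ k) * (1 / ((q k : ℝ) * q (k+1))) := by ring
      _ = 1 / ((q k : ℝ) * q (k+1)) := by rw [hsq, one_mul]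
  rw [pow_succ] at s1
  have hup : (-1:ℝ) ^ k * (θ - (p k : ℝ) / q k) ≤ 1 / ((q k : ℝ) * q (k+1)) := by
    nlinarith [s1, d2]
  have h2 : (q k : ℝ) * ((-1:ℝ) ^ k * (θ - (p k : ℝ) / q k))
      ≤ (q k : ℝ) * (1 / ((q k : ℝ) * q (k+1))) :=
    mul_le_mul_of_nonneg_left hup (le_of_lt hqpos)
  have h3 : (q k : ℝ) * (1 / ((q k : ℝ) * q (k+1))) = 1 / (q (k+1) : ℝ) := by
    field_simp
  have h4 : (-1:ℝ) ^ k * (θ * q k - p k)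
      = (q k : ℝ) * ((-1:ℝ) ^ k * (θ - (p k : ℝ) / q k)) := by
    field_simp
  linarith

include γ hγ ha0 haS hp0 hq0 hp1 hq1 hpS hqS hθ in
theorem cf_E_lower : ∀ k, 1 / (2 * (q (k+1) : ℝ)) ≤ (-1 : ℝ) ^ k * (θ * q k - p k) := by
  intro k
  have hqpos := cf_q_posR γ a q ha0 haS hq0 hq1 hqS k
  have hq1pos := cf_q_posR γ a q ha0 haS hq0 hq1 hqS (k+1)
  have hq2pos := cf_q_posR γ a q ha0 haS hq0 hq1 hqS (k+2)
  have hApos := cf_a_posR γ hγ a p q ha0 haS hp0 hq0 hp1 hq1 hpS hqS (k+2)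
  have hsq : ((-1 : ℝ)) ^ k * (-1) ^ k = 1 := by
    rw [← pow_add, Even.neg_one_pow ⟨k, by ring⟩]
  have s2 := cf_sign γ hγ a p q θ ha0 haS hp0 hq0 hp1 hq1 hpS hqS hθ (k+2)
  have hpow : ((-1:ℝ)) ^ (k+2) = (-1) ^ k := by rw [pow_add]; norm_num
  rw [hpow] at s2
  have d := cf_diff2 γ a p q ha0 haS hp0 hq0 hp1 hq1 hpS hqS k
  have key : (-1:ℝ) ^ k * ((p (k+2) : ℝ) / q (k+2) - (p k : ℝ) / q k)
      = (a (k+2) : ℝ) * q (k+1) / ((q k : ℝ) * q (k+1) * q (k+2)) := by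
    calc (-1:ℝ) ^ k * ((p (k+2) : ℝ) / q (k+2) - (p k : ℝ) / q k)
        = (-1:ℝ) ^ k * ((-1) ^ k * (a (k+2) : ℝ) * q (k+1)
            / ((q k : ℝ) * q (k+1) * q (k+2))) := by rw [d]
      _ = ((-1:ℝ) ^ k * (-1) ^ k) * ((a (k+2) : ℝ) * q (k+1)
            / ((q k : ℝ) * q (k+1) * q (k+2))) := by ring
      _ = (a (k+2) : ℝ) * q (k+1) / ((q k : ℝ) * q (k+1) * q (k+2)) := by rw [hsq, one_mul]
  have hlow : (a (k+2) : ℝ) * q (k+1) / ((q k : ℝ) * q (k+1) * q (k+2))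
      ≤ (-1:ℝ) ^ k * (θ - (p k : ℝ) / q k) := by
    nlinarith [s2, key]
  have h2 : (q k : ℝ) * ((a (k+2) : ℝ) * q (k+1) / ((q k : ℝ) * q (k+1) * q (k+2)))
      ≤ (q k : ℝ) * ((-1:ℝ) ^ k * (θ - (p k : ℝ) / q k)) :=
    mul_le_mul_of_nonneg_left hlow (le_of_lt hqpos)
  have h3 : (q k : ℝ) * ((a (k+2) : ℝ) * q (k+1) / ((q k : ℝ) * q (k+1) * q (k+2)))
      = (a (k+2) : ℝ) / q (k+2) := by
    field_simp
  have h4 : (-1:ℝ) ^ k * (θ * q k - p k)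
      = (q k : ℝ) * ((-1:ℝ) ^ k * (θ - (p k : ℝ) / q k)) := by
    field_simp
  have hq2cast : (q (k+2) : ℝ) = (a (k+2) : ℝ) * q (k+1) + q k := by
    rw [hqS k]; push_cast; ring
  have hqle : (q k : ℝ) ≤ q (k+1) := by
    exact_mod_cast le_of_lt (cf_q_lt γ a q ha0 haS hq0 hq1 hqS k)
  have h5 : 1 / (2 * (q (k+1) : ℝ)) ≤ (a (k+2) : ℝ) / q (k+2) := by
    rw [div_le_div_iff₀ (by linarith) hq2pos]
    nlinarith
  linarith

include γ hγ ha0 haS hp0 hq0 hp1 hq1 hpS hqS hθ in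
theorem cf_E_pos : ∀ k, 0 < (-1 : ℝ) ^ k * (θ * q k - p k) := by
  intro k
  have := cf_E_lower γ hγ a p q θ ha0 haS hp0 hq0 hp1 hq1 hpS hqS hθ k
  have hq1pos := cf_q_posR γ a q ha0 haS hq0 hq1 hqS (k+1)
  have : (0:ℝ) < 1 / (2 * (q (k+1) : ℝ)) := by positivity
  linarith [cf_E_lower γ hγ a p q θ ha0 haS hp0 hq0 hp1 hq1 hpS hqS hθ k]

include γ hγ ha0 haS hp0 hq0 hp1 hq1 hpS hqS hθ in
theorem cf_abs_E : ∀ k, |θ * q k - p k| = (-1 : ℝ) ^ k * (θ * q k - p k) := by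
  intro k
  have h1 : |θ * (q k : ℝ) - p k| = |(-1 : ℝ) ^ k * (θ * q k - p k)| := by
    rw [abs_mul, abs_pow, abs_neg, abs_one, one_pow, one_mul]
  rw [h1, abs_of_pos (cf_E_pos γ hγ a p q θ ha0 haS hp0 hq0 hp1 hq1 hpS hqS hθ k)]

include γ hγ ha0 haS hp0 hq0 hp1 hq1 hpS hqS hθ in
theorem cf_theta_bounds : 1 < θ ∧ θ < 3/2 := by
  have h0 := cf_sign γ hγ a p q θ ha0 haS hp0 hq0 hp1 hq1 hpS hqS hθ 0
  have h1 := cf_sign γ hγ a p q θ ha0 haS hp0 hq0 hp1 hq1 hpS hqS hθ 1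
  have ha1 : a 1 = 2 := cf_a1 γ a q ha0 haS hq0 hq1
  have hp0' : (p 0 : ℝ) = 1 := by rw [hp0, ha0]; norm_num
  have hq0' : (q 0 : ℝ) = 1 := by rw [hq0]; norm_num
  have hp1' : (p 1 : ℝ) = 3 := by rw [hp1, ha1, ha0]; norm_num
  have hq1' : (q 1 : ℝ) = 2 := by rw [hq1, ha1]; norm_num
  rw [hp0', hq0'] at h0
  rw [hp1', hq1'] at h1
  norm_num at h0 h1
  exact ⟨h0, by linarith⟩

include γ hγ ha0 haS hp0 hq0 hp1 hq1 hpS hqS hθ in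
theorem cf_p_le : ∀ k, (p k : ℝ) ≤ 2 * q k := by
  have hb := cf_theta_bounds γ hγ a p q θ ha0 haS hp0 hq0 hp1 hq1 hpS hqS hθ
  have ha1 : a 1 = 2 := cf_a1 γ a q ha0 haS hq0 hq1
  have hc1 : (p 1 : ℝ) / q 1 = 3/2 := by
    rw [hp1, hq1, ha1, ha0]; norm_num
  have hle : ∀ k, (p k : ℝ) / q k ≤ 3/2 := by
    intro k
    rcases Nat.even_or_odd k with ⟨i, hi⟩ | ⟨i, hi⟩
    · have h2 : k = 2*i := by omega
      subst h2
      have := cf_even_le γ hγ a p q θ ha0 haS hp0 hq0 hp1 hq1 hpS hqS hθ i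
      linarith [hb.2]
    · subst hi
      have := cf_odd_anti γ hγ a p q ha0 haS hp0 hq0 hp1 hq1 hpS hqS (Nat.zero_le i)
      simpa [hc1] using this
  intro k
  have hqpos := cf_q_posR γ a q ha0 haS hq0 hq1 hqS k
  have := hle k
  rw [div_le_iff₀ hqpos] at this
  linarith

end CFbounds

section CFbest

variable (γ : ℝ) (hγ : 0 < γ) (a p q : ℕ → ℕ) (θ : ℝ)
  (ha0 : a 0 = 1)
  (haS : ∀ k, a (k + 1) = ⌊(q k : ℝ) ^ γ⌋₊ + 1)
  (hp0 : p 0 = a 0) (hq0 : q 0 = 1)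
  (hp1 : p 1 = a 1 * a 0 + 1) (hq1 : q 1 = a 1)
  (hpS : ∀ k, p (k + 2) = a (k + 2) * p (k + 1) + p k)
  (hqS : ∀ k, q (k + 2) = a (k + 2) * q (k + 1) + q k)
  (hθ : Filter.Tendsto (fun k => (p k : ℝ) / (q k : ℝ)) Filter.atTop (nhds θ))

include γ hγ ha0 haS hp0 hq0 hp1 hq1 hpS hqS hθ in
set_option maxHeartbeats 1600000 in
theorem cf_best_pos : ∀ (k : ℕ) (n m : ℤ), 0 < n → n < (q (k+1) : ℤ) →
    (-1 : ℝ) ^ k * (θ * q k - p k) ≤ |θ * (n : ℝ) - (m : ℝ)| := by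
  intro k n m hn hlt
  have det := cf_det a p q ha0 hp0 hq0 hp1 hq1 hpS hqS k
  have hε2 : ((-1:ℤ) ^ k) * ((-1:ℤ) ^ k) = 1 := by
    rw [← pow_add]; exact Even.neg_one_pow ⟨k, by ring⟩
  obtain ⟨x, y, hxdef, hydef⟩ :
      ∃ x y : ℤ, x = (-1) ^ k * ((p (k+1) : ℤ) * n - (q (k+1) : ℤ) * m) ∧
        y = (-1) ^ k * ((q k : ℤ) * m - (p k : ℤ) * n) := ⟨_, _, rfl, rfl⟩
  have hn_eq : n = x * q k + y * q (k+1) := by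
    rw [hxdef, hydef]
    linear_combination (-(-1:ℤ)^k * n) * det + (-n) * hε2
  have hm_eq : m = x * p k + y * p (k+1) := by
    rw [hxdef, hydef]
    linear_combination (-(-1:ℤ)^k * m) * det + (-m) * hε2
  have hnR : (n : ℝ) = (x : ℝ) * q k + (y : ℝ) * q (k+1) := by exact_mod_cast hn_eq
  have hmR : (m : ℝ) = (x : ℝ) * p k + (y : ℝ) * p (k+1) := by exact_mod_cast hm_eq
  have hval : θ * (n : ℝ) - m = (x : ℝ) * (θ * q k - p k) + (y : ℝ) * (θ * q (k+1) - p (k+1)) := by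
    linear_combination θ * hnR - hmR
  have hEu : 0 < (-1:ℝ) ^ k * (θ * q k - p k) :=
    cf_E_pos γ hγ a p q θ ha0 haS hp0 hq0 hp1 hq1 hpS hqS hθ k
  have hEv : 0 < (-1:ℝ) ^ (k+1) * (θ * q (k+1) - p (k+1)) :=
    cf_E_pos γ hγ a p q θ ha0 haS hp0 hq0 hp1 hq1 hpS hqS hθ (k+1)
  have hEv' : 0 < -((-1:ℝ) ^ k * (θ * q (k+1) - p (k+1))) := by
    rw [pow_succ] at hEv; nlinarith [hEv]
  have habs : |(-1:ℝ) ^ k * (θ * (n:ℝ) - m)| = |θ * (n:ℝ) - m| := by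
    rw [abs_mul, abs_pow, abs_neg, abs_one, one_pow, one_mul]
  have hexp : (-1:ℝ) ^ k * (θ * (n:ℝ) - m)
      = (x : ℝ) * ((-1:ℝ) ^ k * (θ * q k - p k))
        + (y : ℝ) * ((-1:ℝ) ^ k * (θ * q (k+1) - p (k+1))) := by
    rw [hval]; ring
  have hqposZ : (0:ℤ) < (q k : ℤ) := by
    exact_mod_cast cf_q_pos γ a q ha0 haS hq0 hq1 hqS k
  have hq1posZ : (0:ℤ) < (q (k+1) : ℤ) := by
    exact_mod_cast cf_q_pos γ a q ha0 haS hq0 hq1 hqS (k+1)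
  by_cases hy : y = 0
  · -- n = x * q k with x ≠ 0
    have hx0 : x ≠ 0 := by
      intro h
      rw [h, hy] at hn_eq
      simp at hn_eq
      omega
    have hx1 : (1:ℝ) ≤ |(x:ℝ)| := by
      have : (1:ℤ) ≤ |x| := Int.one_le_abs hx0
      calc (1:ℝ) ≤ ((|x| : ℤ) : ℝ) := by exact_mod_cast this
        _ = |(x:ℝ)| := by push_cast; rfl
    have hyR : (y : ℝ) = 0 := by rw [hy]; norm_num
    have : |θ * (n:ℝ) - m| = |(x:ℝ)| * |θ * q k - p k| := by
      rw [hval, hyR, zero_mul, add_zero, abs_mul]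
    rw [this]
    have hEabs : |θ * (q k : ℝ) - p k| = (-1:ℝ) ^ k * (θ * q k - p k) :=
      cf_abs_E γ hγ a p q θ ha0 haS hp0 hq0 hp1 hq1 hpS hqS hθ k
    rw [hEabs]
    nlinarith [hEu, hx1]
  · by_cases hx : x = 0
    · exfalso
      have h' : n = y * (q (k+1) : ℤ) := by rw [hx] at hn_eq; simpa using hn_eq
      rcases lt_or_gt_of_ne hy with h | h
      · have hy1 : y ≤ -1 := by omega
        have h2 : y * (q (k+1):ℤ) ≤ -1 * (q (k+1):ℤ) :=
          mul_le_mul_of_nonneg_right hy1 hq1posZ.le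
        linarith [h', h2, hn, hq1posZ]
      · have hy1 : (1:ℤ) ≤ y := by omega
        have h2 : 1 * (q (k+1):ℤ) ≤ y * (q (k+1):ℤ) :=
          mul_le_mul_of_nonneg_right hy1 hq1posZ.le
        linarith [h', h2, hlt]
    · -- both nonzero; they must have opposite signs
      rcases lt_or_gt_of_ne hx with hxneg | hxpos
      · rcases lt_or_gt_of_ne hy with hyneg | hypos
        · exfalso
          have hxle : x ≤ -1 := by omega
          have hyle : y ≤ -1 := by omega
          have h2 : x * (q k:ℤ) ≤ -1 * (q k:ℤ) := mul_le_mul_of_nonneg_right hxle hqposZ.le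
          have h3 : y * (q (k+1):ℤ) ≤ -1 * (q (k+1):ℤ) :=
            mul_le_mul_of_nonneg_right hyle hq1posZ.le
          linarith [hn_eq, h2, h3, hn, hqposZ, hq1posZ]
        · -- x < 0, y > 0
          have hx1 : (x:ℝ) ≤ -1 := by exact_mod_cast (by omega : x ≤ -1)
          have hy1 : (1:ℝ) ≤ (y:ℝ) := by exact_mod_cast (by omega : (1:ℤ) ≤ y)
          calc (-1:ℝ) ^ k * (θ * q k - p k)
              ≤ -((-1:ℝ) ^ k * (θ * (n:ℝ) - m)) := by
                have t1 := mul_nonneg (by linarith : (0:ℝ) ≤ -(x:ℝ) - 1) hEu.le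
                have t2 := mul_nonneg (by linarith : (0:ℝ) ≤ (y:ℝ) - 1) hEv'.le
                linarith [hexp, hEu, hEv', t1, t2]
            _ ≤ |(-1:ℝ) ^ k * (θ * (n:ℝ) - m)| := neg_le_abs _
            _ = |θ * (n:ℝ) - m| := habs
      · rcases lt_or_gt_of_ne hy with hyneg | hypos
        · -- x > 0, y < 0
          have hx1 : (1:ℝ) ≤ (x:ℝ) := by exact_mod_cast (by omega : (1:ℤ) ≤ x)
          have hy1 : (y:ℝ) ≤ -1 := by exact_mod_cast (by omega : y ≤ -1)
          calc (-1:ℝ) ^ k * (θ * q k - p k)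
              ≤ (-1:ℝ) ^ k * (θ * (n:ℝ) - m) := by
                have t1 := mul_nonneg (by linarith : (0:ℝ) ≤ (x:ℝ) - 1) hEu.le
                have t2 := mul_nonneg (by linarith : (0:ℝ) ≤ -(y:ℝ) - 1) hEv'.le
                linarith [hexp, hEu, hEv', t1, t2]
            _ ≤ |(-1:ℝ) ^ k * (θ * (n:ℝ) - m)| := le_abs_self _
            _ = |θ * (n:ℝ) - m| := habs
        · exfalso
          have hxge : 1 ≤ x := by omega
          have hyge : 1 ≤ y := by omega
          have h2 : 1 * (q k:ℤ) ≤ x * (q k:ℤ) := mul_le_mul_of_nonneg_right hxge hqposZ.le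
          have h3 : 1 * (q (k+1):ℤ) ≤ y * (q (k+1):ℤ) :=
            mul_le_mul_of_nonneg_right hyge hq1posZ.le
          linarith [hn_eq, h2, h3, hlt, hqposZ, hq1posZ]

include γ hγ ha0 haS hp0 hq0 hp1 hq1 hpS hqS hθ in
theorem cf_best : ∀ (k : ℕ) (n m : ℤ), n ≠ 0 → |n| < (q (k+1) : ℤ) →
    (-1 : ℝ) ^ k * (θ * q k - p k) ≤ |θ * (n : ℝ) - (m : ℝ)| := by
  intro k n m hn hlt
  rcases lt_or_gt_of_ne hn with h | h
  · have h1 : 0 < -n := by omega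
    have h2 : -n < (q (k+1) : ℤ) := by
      have : |n| = -n := abs_of_neg h
      omega
    have := cf_best_pos γ hγ a p q θ ha0 haS hp0 hq0 hp1 hq1 hpS hqS hθ k (-n) (-m) h1 h2
    have heq : |θ * ((-n : ℤ) : ℝ) - ((-m : ℤ) : ℝ)| = |θ * (n:ℝ) - m| := by
      push_cast
      rw [show θ * -(n:ℝ) - -(m:ℝ) = -(θ * n - m) by ring, abs_neg]
    rw [heq] at this
    exact this
  · have h2 : n < (q (k+1) : ℤ) := by
      have : |n| = n := abs_of_pos h
      omega
    exact cf_best_pos γ hγ a p q θ ha0 haS hp0 hq0 hp1 hq1 hpS hqS hθ k n m h h2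

include γ hγ ha0 haS hp0 hq0 hp1 hq1 hpS hqS in
theorem cf_growth1 : ∀ k, ((q k : ℝ)) ^ (1 + γ) ≤ (q (k+1) : ℝ) := by
  intro k
  have hqpos := cf_q_posR γ a q ha0 haS hq0 hq1 hqS k
  have haR : (q k : ℝ) ^ γ ≤ (a (k+1) : ℝ) := by
    rw [haS k]
    push_cast
    have := Nat.lt_floor_add_one ((q k : ℝ) ^ γ)
    linarith
  have hstep : (a (k+1) : ℝ) * q k ≤ (q (k+1) : ℝ) := by
    have : a (k+1) * q k ≤ q (k+1) := by
      match k with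
      | 0 =>
        show a 1 * q 0 ≤ q 1
        rw [hq0, hq1]; omega
      | Nat.succ j =>
        show a (j+2) * q (j+1) ≤ q (j+2)
        rw [hqS j]; omega
    exact_mod_cast this
  have hrw : (q k : ℝ) ^ (1 + γ) = (q k : ℝ) * (q k : ℝ) ^ γ := by
    rw [Real.rpow_add hqpos, Real.rpow_one]
  rw [hrw]
  calc (q k : ℝ) * (q k : ℝ) ^ γ ≤ (q k : ℝ) * (a (k+1) : ℝ) :=
        mul_le_mul_of_nonneg_left haR hqpos.le
    _ = (a (k+1) : ℝ) * q k := by ring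
    _ ≤ (q (k+1) : ℝ) := hstep

include γ hγ ha0 haS hp0 hq0 hp1 hq1 hpS hqS in
theorem cf_growth2 : ∀ k, (q (k+1) : ℝ) ≤ 3 * ((q k : ℝ)) ^ (1 + γ) := by
  intro k
  match k with
  | 0 =>
    have ha1 : a 1 = 2 := cf_a1 γ a q ha0 haS hq0 hq1
    rw [hq1, ha1, hq0]
    push_cast
    rw [Real.one_rpow]
    norm_num
  | Nat.succ j =>
    have hqpos := cf_q_posR γ a q ha0 haS hq0 hq1 hqS (j+1)
    have hq1R : (1:ℝ) ≤ (q (j+1) : ℝ) := by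
      exact_mod_cast cf_q_pos γ a q ha0 haS hq0 hq1 hqS (j+1)
    have haR : (a (j+2) : ℝ) ≤ (q (j+1) : ℝ) ^ γ + 1 := by
      rw [haS (j+1)]
      push_cast
      have := Nat.floor_le (by positivity : (0:ℝ) ≤ (q (j+1) : ℝ) ^ γ)
      linarith
    have hrec : (q (j+2) : ℝ) = (a (j+2) : ℝ) * q (j+1) + q j := by
      rw [hqS j]; push_cast; ring
    have hqle : (q j : ℝ) ≤ q (j+1) := by
      exact_mod_cast le_of_lt (cf_q_lt γ a q ha0 haS hq0 hq1 hqS j)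
    have hrw : (q (j+1) : ℝ) ^ (1 + γ) = (q (j+1) : ℝ) * (q (j+1) : ℝ) ^ γ := by
      rw [Real.rpow_add hqpos, Real.rpow_one]
    have hle1 : (q (j+1) : ℝ) ≤ (q (j+1) : ℝ) ^ (1 + γ) := by
      calc (q (j+1) : ℝ) = (q (j+1) : ℝ) ^ (1:ℝ) := (Real.rpow_one _).symm
        _ ≤ (q (j+1) : ℝ) ^ (1 + γ) :=
          Real.rpow_le_rpow_of_exponent_le hq1R (by linarith)
    have hγq : (0:ℝ) ≤ (q (j+1) : ℝ) ^ γ := by positivity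
    calc (q (j+2) : ℝ) = (a (j+2) : ℝ) * q (j+1) + q j := hrec
      _ ≤ ((q (j+1) : ℝ) ^ γ + 1) * q (j+1) + q (j+1) := by nlinarith [haR, hqle, hqpos]
      _ = (q (j+1) : ℝ) * (q (j+1) : ℝ) ^ γ + 2 * q (j+1) := by ring
      _ ≤ (q (j+1) : ℝ) ^ (1 + γ) + 2 * (q (j+1) : ℝ) ^ (1 + γ) := by
          rw [hrw]; linarith [hle1]
      _ = 3 * (q (j+1) : ℝ) ^ (1 + γ) := by ring

end CFbest

section CFmain

variable (γ : ℝ) (hγ : 0 < γ) (a p q : ℕ → ℕ) (θ : ℝ)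
  (ha0 : a 0 = 1)
  (haS : ∀ k, a (k + 1) = ⌊(q k : ℝ) ^ γ⌋₊ + 1)
  (hp0 : p 0 = a 0) (hq0 : q 0 = 1)
  (hp1 : p 1 = a 1 * a 0 + 1) (hq1 : q 1 = a 1)
  (hpS : ∀ k, p (k + 2) = a (k + 2) * p (k + 1) + p k)
  (hqS : ∀ k, q (k + 2) = a (k + 2) * q (k + 1) + q k)
  (hθ : Filter.Tendsto (fun k => (p k : ℝ) / (q k : ℝ)) Filter.atTop (nhds θ))

include γ hγ ha0 haS hp0 hq0 hp1 hq1 hpS hqS hθ in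
theorem cf_member : ∀ c : ℝ, 0 < c → c < γ / (2 + 2*γ) →
    ∀ᶠ t : ℝ in Filter.atTop, ∃ z ∈ latticeOf θ, z ≠ 0 ∧ latNorm z ≤ t ∧
      latProd z ≤ t ^ (-c) := by
  intro c hc hcG
  classical
  have hθb := cf_theta_bounds γ hγ a p q θ ha0 haS hp0 hq0 hp1 hq1 hpS hqS hθ
  have hδ : 0 < γ - 2*c*(1+γ) := by
    have h2 : (0:ℝ) < 2 + 2*γ := by linarith
    have h3 : c * (2+2*γ) < γ := (lt_div_iff₀ h2).mp hcG
    nlinarith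
  set δ : ℝ := γ - 2*c*(1+γ) with hδdef
  set C : ℝ := (4*15^(2*c)) ^ (1/δ) with hCdef
  have hCpos : 0 < C := by positivity
  set K : ℕ := ⌈C⌉₊ with hKdef
  rw [Filter.eventually_atTop]
  refine ⟨5*(q K : ℝ) + 1, fun t ht => ?_⟩
  have hqK1 : (1:ℝ) ≤ (q K : ℝ) := by
    exact_mod_cast cf_q_pos γ a q ha0 haS hq0 hq1 hqS K
  have htpos : (0:ℝ) < t := by linarith
  -- find k with K ≤ k, 5 q k ≤ t < 5 q (k+1)
  have hex : ∃ j, t < 5*(q j : ℝ) := by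
    refine ⟨⌈t⌉₊, ?_⟩
    have h1 : (⌈t⌉₊ : ℝ) + 1 ≤ (q ⌈t⌉₊ : ℝ) := by
      exact_mod_cast cf_q_ge γ a q ha0 haS hq0 hq1 hqS ⌈t⌉₊
    have h2 : t ≤ (⌈t⌉₊ : ℝ) := Nat.le_ceil t
    linarith
  have hj0 : t < 5*(q (Nat.find hex) : ℝ) := Nat.find_spec hex
  have hj0K : K < Nat.find hex := by
    by_contra hcon
    push_neg at hcon
    have hmono : q (Nat.find hex) ≤ q K :=
      (cf_q_mono γ a q ha0 haS hq0 hq1 hqS).monotone hcon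
    have : (q (Nat.find hex) : ℝ) ≤ (q K : ℝ) := by exact_mod_cast hmono
    linarith
  obtain ⟨k, hKk, hk1⟩ : ∃ k, K ≤ k ∧ k + 1 = Nat.find hex :=
    ⟨Nat.find hex - 1, by omega, by omega⟩
  have hklow : ¬ (t < 5*(q k : ℝ)) := Nat.find_min hex (by omega)
  push_neg at hklow
  have hkup : t < 5*(q (k+1) : ℝ) := by rw [hk1]; exact hj0
  clear hk1 hj0 hj0K hex
  have hQkpos : (0:ℝ) < (q k : ℝ) := cf_q_posR γ a q ha0 haS hq0 hq1 hqS k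
  have hQk1 : (1:ℝ) ≤ (q k : ℝ) := by
    exact_mod_cast cf_q_pos γ a q ha0 haS hq0 hq1 hqS k
  have hQ1pos : (0:ℝ) < (q (k+1) : ℝ) := cf_q_posR γ a q ha0 haS hq0 hq1 hqS (k+1)
  have hQ11 : (1:ℝ) ≤ (q (k+1) : ℝ) := by
    exact_mod_cast cf_q_pos γ a q ha0 haS hq0 hq1 hqS (k+1)
  have hpk1 : (1:ℝ) ≤ (p k : ℝ) := by
    exact_mod_cast cf_p_pos γ a p q ha0 haS hp0 hq0 hp1 hq1 hpS k
  have hpk0 : (0:ℝ) ≤ (p k : ℝ) := by linarith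
  have hE := cf_abs_E γ hγ a p q θ ha0 haS hp0 hq0 hp1 hq1 hpS hqS hθ k
  have hEup := cf_E_upper γ hγ a p q θ ha0 haS hp0 hq0 hp1 hq1 hpS hqS hθ k
  have hpk2 : (p k : ℝ) ≤ 2*(q k : ℝ) :=
    cf_p_le γ hγ a p q θ ha0 haS hp0 hq0 hp1 hq1 hpS hqS hθ k
  have hz2pos : 0 < (q k : ℝ) + θ*(p k : ℝ) := by nlinarith [hθb.1]
  have h1 : |θ*(q k : ℝ) - (p k : ℝ)| ≤ 1/(q (k+1) : ℝ) := by rw [hE]; exact hEup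
  have h2 : |(q k : ℝ) + θ*(p k : ℝ)| ≤ 4*(q k : ℝ) := by
    rw [abs_of_pos hz2pos]
    nlinarith [hθb.2]
  refine ⟨(θ*(q k : ℝ) - (p k : ℝ), (q k : ℝ) + θ*(p k : ℝ)),
    ⟨(q k : ℤ), (p k : ℤ), by push_cast; rfl⟩, ?_, ?_, ?_⟩
  · -- nonzero
    refine ne_of_apply_ne Prod.snd ?_
    show (q k : ℝ) + θ*(p k : ℝ) ≠ (0 : ℝ × ℝ).2
    simpa using ne_of_gt hz2pos
  · -- norm bound
    have h3 : (1:ℝ)/(q (k+1) : ℝ) ≤ 1 := by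
      rw [div_le_one hQ1pos]; exact hQ11
    unfold latNorm
    apply max_le
    · calc |(θ*(q k : ℝ) - (p k : ℝ), (q k : ℝ) + θ*(p k : ℝ)).1|
          = |θ*(q k : ℝ) - (p k : ℝ)| := rfl
        _ ≤ 1/(q (k+1) : ℝ) := h1
        _ ≤ 1 := h3
        _ ≤ t := by linarith
    · calc |(θ*(q k : ℝ) - (p k : ℝ), (q k : ℝ) + θ*(p k : ℝ)).2|
          = |(q k : ℝ) + θ*(p k : ℝ)| := rfl
        _ ≤ 4*(q k : ℝ) := h2
        _ ≤ t := by linarith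
  · -- product bound
    have hg1 : ((q k : ℝ)) ^ (1+γ) ≤ (q (k+1) : ℝ) :=
      cf_growth1 γ hγ a p q ha0 haS hp0 hq0 hp1 hq1 hpS hqS k
    have hg2 : (q (k+1) : ℝ) ≤ 3*((q k : ℝ)) ^ (1+γ) :=
      cf_growth2 γ hγ a p q ha0 haS hp0 hq0 hp1 hq1 hpS hqS k
    have hQkγpos : (0:ℝ) < (q k : ℝ) ^ γ := Real.rpow_pos_of_pos hQkpos γ
    have hsplit : ((q k : ℝ)) ^ (1+γ) = (q k : ℝ) * (q k : ℝ) ^ γ := by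
      rw [Real.rpow_add hQkpos, Real.rpow_one]
    have hprod : |θ*(q k : ℝ) - (p k : ℝ)| * |(q k : ℝ) + θ*(p k : ℝ)|
        ≤ 4*(q k : ℝ)/(q (k+1) : ℝ) := by
      calc |θ*(q k : ℝ) - (p k : ℝ)| * |(q k : ℝ) + θ*(p k : ℝ)|
          ≤ (1/(q (k+1) : ℝ)) * (4*(q k : ℝ)) :=
            mul_le_mul h1 h2 (abs_nonneg _) (by positivity)
        _ = 4*(q k : ℝ)/(q (k+1) : ℝ) := by ring
    have hstep1 : 4*(q k : ℝ)/(q (k+1) : ℝ) ≤ 4/(q k : ℝ)^γ := by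
      rw [div_le_div_iff₀ hQ1pos hQkγpos]
      calc 4*(q k : ℝ)*(q k : ℝ)^γ = 4*((q k : ℝ)*(q k : ℝ)^γ) := by ring
        _ = 4*((q k : ℝ))^(1+γ) := by rw [hsplit]
        _ ≤ 4*(q (k+1) : ℝ) := by linarith
    have ht2c : t ^ (2*c) ≤ 15^(2*c) * ((q k : ℝ))^((1+γ)*(2*c)) := by
      have hb : t ≤ 15*((q k : ℝ))^(1+γ) := by linarith [hkup, hg2]
      calc t ^ (2*c) ≤ (15*((q k : ℝ))^(1+γ)) ^ (2*c) :=
            Real.rpow_le_rpow htpos.le hb (by positivity)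
        _ = 15^(2*c) * (((q k : ℝ))^(1+γ))^(2*c) :=
            Real.mul_rpow (by norm_num) (by positivity)
        _ = 15^(2*c) * ((q k : ℝ))^((1+γ)*(2*c)) := by
            rw [← Real.rpow_mul hQkpos.le]
    have hQkC : C ≤ (q k : ℝ) := by
      have hc1 : C ≤ (K : ℝ) := by
        calc C ≤ (⌈C⌉₊ : ℝ) := Nat.le_ceil C
          _ = (K : ℝ) := by rw [hKdef]
      have hc2 : (K : ℝ) + 1 ≤ (q K : ℝ) := by
        exact_mod_cast cf_q_ge γ a q ha0 haS hq0 hq1 hqS K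
      have hc3 : (q K : ℝ) ≤ (q k : ℝ) := by
        exact_mod_cast (cf_q_mono γ a q ha0 haS hq0 hq1 hqS).monotone hKk
      linarith
    have hCδ : (4*15^(2*c) : ℝ) ≤ (q k : ℝ) ^ δ := by
      have hd1 : C ^ δ ≤ (q k : ℝ) ^ δ := Real.rpow_le_rpow hCpos.le hQkC hδ.le
      have hd2 : C ^ δ = 4*15^(2*c) := by
        rw [hCdef, ← Real.rpow_mul (by positivity), one_div,
          inv_mul_cancel₀ (ne_of_gt hδ), Real.rpow_one]
      linarith
    have hγsplit : ((q k : ℝ)) ^ γ = ((q k : ℝ))^((1+γ)*(2*c)) * ((q k : ℝ))^δ := by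
      rw [← Real.rpow_add hQkpos]
      congr 1
      rw [hδdef]; ring
    have htc : (0:ℝ) < t ^ (2*c) := Real.rpow_pos_of_pos htpos _
    have hkey : 4/((q k : ℝ))^γ ≤ t ^ (-(2*c)) := by
      rw [Real.rpow_neg htpos.le, inv_eq_one_div, div_le_div_iff₀ hQkγpos htc]
      calc 4*t^(2*c) ≤ 4*(15^(2*c) * ((q k : ℝ))^((1+γ)*(2*c))) := by linarith [ht2c]
        _ = (4*15^(2*c)) * ((q k : ℝ))^((1+γ)*(2*c)) := by ring
        _ ≤ ((q k : ℝ))^δ * ((q k : ℝ))^((1+γ)*(2*c)) :=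
            mul_le_mul_of_nonneg_right hCδ (by positivity)
        _ = 1*((q k : ℝ))^γ := by rw [hγsplit]; ring
    have hchain : |θ*(q k : ℝ) - (p k : ℝ)| * |(q k : ℝ) + θ*(p k : ℝ)| ≤ t ^ (-(2*c)) :=
      le_trans (le_trans hprod hstep1) hkey
    show (|(θ*(q k : ℝ) - (p k : ℝ), (q k : ℝ) + θ*(p k : ℝ)).1| *
        |(θ*(q k : ℝ) - (p k : ℝ), (q k : ℝ) + θ*(p k : ℝ)).2|) ^ ((1:ℝ)/2) ≤ t ^ (-c)
    calc (|(θ*(q k : ℝ) - (p k : ℝ), (q k : ℝ) + θ*(p k : ℝ)).1| *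
        |(θ*(q k : ℝ) - (p k : ℝ), (q k : ℝ) + θ*(p k : ℝ)).2|) ^ ((1:ℝ)/2)
        = (|θ*(q k : ℝ) - (p k : ℝ)| * |(q k : ℝ) + θ*(p k : ℝ)|) ^ ((1:ℝ)/2) := rfl
      _ ≤ (t ^ (-(2*c))) ^ ((1:ℝ)/2) :=
          Real.rpow_le_rpow (by positivity) hchain (by norm_num)
      _ = t ^ (-c) := by
          rw [← Real.rpow_mul htpos.le]
          congr 1
          ring

end CFmain

section CFnot

variable (γ : ℝ) (hγ : 0 < γ) (a p q : ℕ → ℕ) (θ : ℝ)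
  (ha0 : a 0 = 1)
  (haS : ∀ k, a (k + 1) = ⌊(q k : ℝ) ^ γ⌋₊ + 1)
  (hp0 : p 0 = a 0) (hq0 : q 0 = 1)
  (hp1 : p 1 = a 1 * a 0 + 1) (hq1 : q 1 = a 1)
  (hpS : ∀ k, p (k + 2) = a (k + 2) * p (k + 1) + p k)
  (hqS : ∀ k, q (k + 2) = a (k + 2) * q (k + 1) + q k)
  (hθ : Filter.Tendsto (fun k => (p k : ℝ) / (q k : ℝ)) Filter.atTop (nhds θ))

include γ hγ ha0 haS hp0 hq0 hp1 hq1 hpS hqS hθ in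
set_option maxHeartbeats 1600000 in
theorem cf_not : ∀ c : ℝ, γ / (2 + 2*γ) < c →
    ¬ (∀ᶠ t : ℝ in Filter.atTop, ∃ z ∈ latticeOf θ, z ≠ 0 ∧ latNorm z ≤ t ∧
        latProd z ≤ t ^ (-c)) := by
  intro c hGc hev
  classical
  have hθb := cf_theta_bounds γ hγ a p q θ ha0 haS hp0 hq0 hp1 hq1 hpS hqS hθ
  have hθpos : (0:ℝ) < θ := by linarith [hθb.1]
  have hcpos : 0 < c := lt_trans (by positivity) hGc
  have hε : 0 < 2*c*(1+γ) - γ := by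
    have h2 : (0:ℝ) < 2 + 2*γ := by linarith
    have h3 : γ < c * (2+2*γ) := (div_lt_iff₀ h2).mp hGc
    nlinarith
  set ε : ℝ := 2*c*(1+γ) - γ with hεdef
  rw [Filter.eventually_atTop] at hev
  obtain ⟨T, hT⟩ := hev
  set R : ℝ := max (max (T+1) ((4:ℝ)^(1/(2*c)) + 1)) ((6*2^(2*c))^(1/ε) + 1) with hRdef
  set k : ℕ := ⌈R⌉₊ with hkdef
  have hQkR : R ≤ (q k : ℝ) := by
    have h1 : R ≤ (⌈R⌉₊ : ℝ) := Nat.le_ceil R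
    have h2 : (k : ℝ) + 1 ≤ (q k : ℝ) := by
      exact_mod_cast cf_q_ge γ a q ha0 haS hq0 hq1 hqS k
    have h3 : ((⌈R⌉₊ : ℕ) : ℝ) = (k : ℝ) := by rw [hkdef]
    linarith
  have hQkpos : (0:ℝ) < (q k : ℝ) := cf_q_posR γ a q ha0 haS hq0 hq1 hqS k
  have hQk1 : (1:ℝ) ≤ (q k : ℝ) := by
    exact_mod_cast cf_q_pos γ a q ha0 haS hq0 hq1 hqS k
  have hq1k : (q k : ℝ) + 1 ≤ (q (k+1) : ℝ) := by
    have := cf_q_lt γ a q ha0 haS hq0 hq1 hqS k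
    have : q k + 1 ≤ q (k+1) := this
    exact_mod_cast this
  set t : ℝ := (q (k+1) : ℝ) - 1/2 with htdef
  have htQk : (q k : ℝ) ≤ t := by rw [htdef]; linarith
  have htpos : (0:ℝ) < t := by linarith
  have ht1 : (1:ℝ) ≤ t := by linarith
  have htR : R ≤ t := le_trans hQkR htQk
  have hTt : T ≤ t := by
    have : T + 1 ≤ R := le_trans (le_max_left _ _) (le_max_left _ _)
    linarith
  -- key rpow facts
  have htc : (0:ℝ) < t ^ (2*c) := Real.rpow_pos_of_pos htpos _
  have ht4 : (4:ℝ) < t ^ (2*c) := by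
    have h1 : (4:ℝ)^(1/(2*c)) + 1 ≤ R :=
      le_trans (le_max_right _ _) (le_max_left _ _)
    have h2 : (4:ℝ)^(1/(2*c)) < t := by linarith
    have h3 : ((4:ℝ)^(1/(2*c)))^(2*c) < t^(2*c) :=
      Real.rpow_lt_rpow (by positivity) h2 (by positivity)
    have h4 : ((4:ℝ)^(1/(2*c)))^(2*c) = 4 := by
      rw [← Real.rpow_mul (by norm_num), one_div, inv_mul_cancel₀ (by positivity),
        Real.rpow_one]
    linarith
  have hqkε : 6*2^(2*c) < ((q k : ℝ)) ^ ε := by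
    have h1 : (6*2^(2*c) : ℝ)^(1/ε) + 1 ≤ R := le_max_right _ _
    have h2 : (6*2^(2*c) : ℝ)^(1/ε) < (q k : ℝ) := by linarith
    have h3 : ((6*2^(2*c) : ℝ)^(1/ε))^ε < ((q k : ℝ))^ε :=
      Real.rpow_lt_rpow (by positivity) h2 hε
    have h4 : ((6*2^(2*c) : ℝ)^(1/ε))^ε = 6*2^(2*c) := by
      rw [← Real.rpow_mul (by positivity), one_div, inv_mul_cancel₀ (ne_of_gt hε),
        Real.rpow_one]
    linarith
  have hQkγpos : (0:ℝ) < (q k : ℝ) ^ γ := Real.rpow_pos_of_pos hQkpos γ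
  have ht6 : 6*((q k : ℝ))^γ < t ^ (2*c) := by
    have hg1 : ((q k : ℝ)) ^ (1+γ) ≤ (q (k+1) : ℝ) :=
      cf_growth1 γ hγ a p q ha0 haS hp0 hq0 hp1 hq1 hpS hqS k
    have hg1' : (1:ℝ) ≤ ((q k : ℝ)) ^ (1+γ) := by
      calc (1:ℝ) = 1 ^ (1+γ) := (Real.one_rpow _).symm
        _ ≤ ((q k : ℝ)) ^ (1+γ) := Real.rpow_le_rpow (by norm_num) hQk1 (by linarith)
    have htlow : ((q k : ℝ))^(1+γ)/2 ≤ t := by rw [htdef]; linarith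
    have h5 : (((q k : ℝ))^(1+γ)/2) ^ (2*c) ≤ t ^ (2*c) :=
      Real.rpow_le_rpow (by positivity) htlow (by positivity)
    have h6 : (((q k : ℝ))^(1+γ)/2) ^ (2*c)
        = ((q k : ℝ))^((1+γ)*(2*c)) / 2^(2*c) := by
      rw [Real.div_rpow (by positivity) (by norm_num), ← Real.rpow_mul hQkpos.le]
    have h7 : ((q k : ℝ))^((1+γ)*(2*c)) = ((q k : ℝ))^γ * ((q k : ℝ))^ε := by
      rw [← Real.rpow_add hQkpos]
      congr 1
      rw [hεdef]; ring
    have h8 : (0:ℝ) < 2^(2*c) := by positivity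
    have h9 : 6*((q k : ℝ))^γ < ((q k : ℝ))^γ * ((q k : ℝ))^ε / 2^(2*c) := by
      rw [lt_div_iff₀ h8]
      calc 6*((q k : ℝ))^γ * 2^(2*c) = (6*2^(2*c)) * ((q k : ℝ))^γ := by ring
        _ < ((q k : ℝ))^ε * ((q k : ℝ))^γ :=
          mul_lt_mul_of_pos_right hqkε hQkγpos
        _ = ((q k : ℝ))^γ * ((q k : ℝ))^ε := by ring
    calc 6*((q k : ℝ))^γ < ((q k : ℝ))^γ * ((q k : ℝ))^ε / 2^(2*c) := h9
      _ = ((q k : ℝ))^((1+γ)*(2*c)) / 2^(2*c) := by rw [h7]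
      _ = (((q k : ℝ))^(1+γ)/2) ^ (2*c) := h6.symm
      _ ≤ t ^ (2*c) := h5
  -- get the lattice point
  obtain ⟨z, hzΛ, hz0, hzN, hzP⟩ := hT t hTt
  obtain ⟨n, m, rfl⟩ := hzΛ
  have hnm : ¬ (n = 0 ∧ m = 0) := by
    rintro ⟨rfl, rfl⟩
    apply hz0
    simp [Prod.ext_iff]
  have hA_le : |θ*(n:ℝ) - (m:ℝ)| ≤ t := le_trans (le_max_left _ _) hzN
  have hB_le : |(n:ℝ) + θ*(m:ℝ)| ≤ t := le_trans (le_max_right _ _) hzN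
  -- product square bound
  have hABnn : (0:ℝ) ≤ |θ*(n:ℝ) - (m:ℝ)| * |(n:ℝ) + θ*(m:ℝ)| := by positivity
  have hAB_le : |θ*(n:ℝ) - (m:ℝ)| * |(n:ℝ) + θ*(m:ℝ)| ≤ t ^ (-(2*c)) := by
    have hsq : ((|θ*(n:ℝ) - (m:ℝ)| * |(n:ℝ) + θ*(m:ℝ)|) ^ ((1:ℝ)/2))^(2:ℕ)
        ≤ (t ^ (-c))^(2:ℕ) := by
      apply pow_le_pow_left₀ (Real.rpow_nonneg hABnn _) hzP
    have e1 : ((|θ*(n:ℝ) - (m:ℝ)| * |(n:ℝ) + θ*(m:ℝ)|) ^ ((1:ℝ)/2))^(2:ℕ)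
        = |θ*(n:ℝ) - (m:ℝ)| * |(n:ℝ) + θ*(m:ℝ)| := by
      rw [← Real.rpow_natCast ((|θ*(n:ℝ) - (m:ℝ)| * |(n:ℝ) + θ*(m:ℝ)|) ^ ((1:ℝ)/2)) 2,
        ← Real.rpow_mul hABnn]
      norm_num
    have e2 : (t ^ (-c))^(2:ℕ) = t ^ (-(2*c)) := by
      rw [← Real.rpow_natCast (t ^ (-c)) 2, ← Real.rpow_mul htpos.le]
      congr 1
      push_cast
      ring
    rw [e1, e2] at hsq
    exact hsq
  have htneg : t ^ (-(2*c)) = 1 / t ^ (2*c) := by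
    rw [Real.rpow_neg htpos.le, inv_eq_one_div]
  -- the key small-factor lemma
  have key : ∀ w v : ℤ, ¬ (w = 0 ∧ v = 0) → |θ*(w:ℝ) - (v:ℝ)| < 1/2 →
      |(w:ℝ) + θ*(v:ℝ)| ≤ t →
      1/(6*((q k : ℝ))^γ) ≤ |θ*(w:ℝ) - (v:ℝ)| * |(w:ℝ) + θ*(v:ℝ)| := by
    intro w v hwv hAs hBs
    have hw0 : w ≠ 0 := by
      intro hw
      subst hw
      have hv0 : v ≠ 0 := fun hv => hwv ⟨rfl, hv⟩
      have h1 : (1:ℝ) ≤ |(v:ℝ)| := by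
        have := Int.one_le_abs hv0
        calc (1:ℝ) ≤ ((|v| : ℤ) : ℝ) := by exact_mod_cast this
          _ = |(v:ℝ)| := by push_cast; rfl
      have h2 : |θ*((0:ℤ):ℝ) - (v:ℝ)| = |(v:ℝ)| := by
        push_cast
        rw [show θ*0 - (v:ℝ) = -(v:ℝ) by ring, abs_neg]
      rw [h2] at hAs
      linarith
    have hw1 : (1:ℝ) ≤ |(w:ℝ)| := by
      have := Int.one_le_abs hw0
      calc (1:ℝ) ≤ ((|w| : ℤ) : ℝ) := by exact_mod_cast this
        _ = |(w:ℝ)| := by push_cast; rfl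
    -- |w| ≤ t
    have hw_le : |(w:ℝ)| ≤ t := by
      have hk2 : (1+θ^2) * |(w:ℝ)| = |(1+θ^2)*(w:ℝ)| := by
        rw [abs_mul, abs_of_pos (by positivity : (0:ℝ) < 1+θ^2)]
      have hk3 : (1+θ^2)*(w:ℝ) = ((w:ℝ) + θ*v) + θ*(θ*(w:ℝ) - v) := by ring
      have hk4 : |(1+θ^2)*(w:ℝ)| ≤ |(w:ℝ) + θ*v| + θ*|θ*(w:ℝ) - v| := by
        rw [hk3]
        calc |((w:ℝ) + θ*v) + θ*(θ*(w:ℝ) - v)|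
            ≤ |(w:ℝ) + θ*v| + |θ*(θ*(w:ℝ) - v)| := abs_add_le _ _
          _ = |(w:ℝ) + θ*v| + θ*|θ*(w:ℝ) - v| := by
              rw [abs_mul, abs_of_pos hθpos]
      have hk5 : (1+θ^2) * |(w:ℝ)| ≤ (1+θ)*t := by
        rw [hk2]
        calc |(1+θ^2)*(w:ℝ)| ≤ |(w:ℝ) + θ*v| + θ*|θ*(w:ℝ) - v| := hk4
          _ ≤ t + θ*t := by
              have hAt : |θ*(w:ℝ) - v| ≤ t := by linarith
              have := mul_le_mul_of_nonneg_left hAt hθpos.le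
              linarith
          _ = (1+θ)*t := by ring
      have h7 : (1+θ)*t ≤ (1+θ^2)*t := by
        have h8 : (0:ℝ) ≤ (θ-1)*θ := mul_nonneg (by linarith [hθb.1]) hθpos.le
        nlinarith [h8, htpos]
      exact le_of_mul_le_mul_left (by linarith) (by positivity : (0:ℝ) < 1+θ^2)
    -- find the level j
    have hexj : ∃ i, w.natAbs < q i := by
      refine ⟨w.natAbs, ?_⟩
      have := cf_q_ge γ a q ha0 haS hq0 hq1 hqS w.natAbs
      omega
    have hwna : (0:ℕ) < w.natAbs := Int.natAbs_pos.mpr hw0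
    have hfind0 : 0 < Nat.find hexj := by
      rcases Nat.eq_zero_or_pos (Nat.find hexj) with h0 | h0
      · exfalso
        have hspec := Nat.find_spec hexj
        rw [h0, hq0] at hspec
        omega
      · exact h0
    obtain ⟨j, hj1⟩ : ∃ j, j + 1 = Nat.find hexj := ⟨Nat.find hexj - 1, by omega⟩
    have hjlow : q j ≤ w.natAbs := by
      have := Nat.find_min hexj (show j < Nat.find hexj by omega)
      omega
    have hjup : w.natAbs < q (j+1) := by rw [hj1]; exact Nat.find_spec hexj
    clear hj1 hfind0 hexj
    have hwabs : ((w.natAbs : ℕ) : ℝ) = |(w:ℝ)| := by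
      push_cast [Nat.cast_natAbs]
      rfl
    have hjlowR : (q j : ℝ) ≤ |(w:ℝ)| := by
      rw [← hwabs]; exact_mod_cast hjlow
    have hQjpos : (0:ℝ) < (q j : ℝ) := cf_q_posR γ a q ha0 haS hq0 hq1 hqS j
    -- j ≤ k
    have hjk : j ≤ k := by
      have h1 : (q j : ℝ) < (q (k+1) : ℝ) := by
        calc (q j : ℝ) ≤ |(w:ℝ)| := hjlowR
          _ ≤ t := hw_le
          _ < (q (k+1) : ℝ) := by rw [htdef]; linarith
      have h2 : q j < q (k+1) := by exact_mod_cast h1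
      have h3 : j < k+1 := (cf_q_mono γ a q ha0 haS hq0 hq1 hqS).lt_iff_lt.mp h2
      omega
    -- best approximation
    have hbest : (-1:ℝ)^j * (θ * q j - p j) ≤ |θ*(w:ℝ) - (v:ℝ)| := by
      apply cf_best γ hγ a p q θ ha0 haS hp0 hq0 hp1 hq1 hpS hqS hθ j w v hw0
      rw [Int.abs_eq_natAbs]
      exact_mod_cast hjup
    have hEj := cf_E_lower γ hγ a p q θ ha0 haS hp0 hq0 hp1 hq1 hpS hqS hθ j
    have hg2j : (q (j+1) : ℝ) ≤ 3*((q j : ℝ))^(1+γ) :=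
      cf_growth2 γ hγ a p q ha0 haS hp0 hq0 hp1 hq1 hpS hqS j
    have hQj1pos : (0:ℝ) < (q (j+1) : ℝ) := cf_q_posR γ a q ha0 haS hq0 hq1 hqS (j+1)
    have hQjγpos : (0:ℝ) < ((q j : ℝ))^(1+γ) := Real.rpow_pos_of_pos hQjpos _
    have hA_low : 1/(6*((q j : ℝ))^(1+γ)) ≤ |θ*(w:ℝ) - (v:ℝ)| := by
      have h1 : 1/(6*((q j : ℝ))^(1+γ)) ≤ 1/(2*(q (j+1) : ℝ)) := by
        apply one_div_le_one_div_of_le (by linarith)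
        linarith
      linarith
    -- lower bound on the second factor
    have hB_low : (q j : ℝ) ≤ |(w:ℝ) + θ*(v:ℝ)| := by
      have hk3 : ((w:ℝ) + θ*v) = (1+θ^2)*(w:ℝ) - θ*(θ*(w:ℝ) - v) := by ring
      have h1 : |(1+θ^2)*(w:ℝ)| - |θ*(θ*(w:ℝ) - v)| ≤ |(w:ℝ) + θ*(v:ℝ)| := by
        rw [hk3]
        exact abs_sub_abs_le_abs_sub _ _
      have h2 : |(1+θ^2)*(w:ℝ)| = (1+θ^2)*|(w:ℝ)| := by
        rw [abs_mul, abs_of_pos (by positivity : (0:ℝ) < 1+θ^2)]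
      have h3 : |θ*(θ*(w:ℝ) - v)| = θ*|θ*(w:ℝ) - v| := by
        rw [abs_mul, abs_of_pos hθpos]
      rw [h2, h3] at h1
      have h4 : θ*|θ*(w:ℝ) - v| ≤ (3/2)*(1/2) :=
        mul_le_mul hθb.2.le hAs.le (abs_nonneg _) (by norm_num)
      have h5 : (1+θ^2)*|(w:ℝ)| ≥ 2*|(w:ℝ)| := by
        have h6 : (0:ℝ) ≤ (θ-1)*(θ+1) :=
          mul_nonneg (by linarith [hθb.1]) (by linarith [hθb.1])
        have h7 := mul_nonneg h6 (abs_nonneg (w:ℝ))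
        linarith [h7]
      linarith [hjlowR]
    -- combine
    have hstep : 1/(6*((q j : ℝ))^(1+γ)) * (q j : ℝ)
        ≤ |θ*(w:ℝ) - (v:ℝ)| * |(w:ℝ) + θ*(v:ℝ)| :=
      mul_le_mul hA_low hB_low hQjpos.le (abs_nonneg _)
    have hsplitj : ((q j : ℝ))^(1+γ) = (q j : ℝ) * ((q j : ℝ))^γ := by
      rw [Real.rpow_add hQjpos, Real.rpow_one]
    have hQjγ : (0:ℝ) < ((q j : ℝ))^γ := Real.rpow_pos_of_pos hQjpos _
    have heq : 1/(6*((q j : ℝ))^(1+γ)) * (q j : ℝ) = 1/(6*((q j : ℝ))^γ) := by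
      rw [hsplitj]
      field_simp
    have hmono : ((q j : ℝ))^γ ≤ ((q k : ℝ))^γ := by
      apply Real.rpow_le_rpow hQjpos.le _ hγ.le
      exact_mod_cast (cf_q_mono γ a q ha0 haS hq0 hq1 hqS).monotone hjk
    have hfin : 1/(6*((q k : ℝ))^γ) ≤ 1/(6*((q j : ℝ))^γ) := by
      apply one_div_le_one_div_of_le (by positivity)
      linarith
    linarith [hstep, heq ▸ hstep]
  -- case analysis
  rcases lt_or_ge (|θ*(n:ℝ) - (m:ℝ)|) (1/2) with hA | hA
  · have hk1 := key n m hnm hA hB_le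
    have hcontr : t ^ (-(2*c)) < 1/(6*((q k : ℝ))^γ) := by
      rw [htneg]
      apply one_div_lt_one_div_of_lt (by positivity) ht6
    linarith
  · rcases lt_or_ge (|(n:ℝ) + θ*(m:ℝ)|) (1/2) with hB | hB
    · have hmn : ¬ (m = 0 ∧ -n = 0) := by
        rintro ⟨h1, h2⟩
        exact hnm ⟨by omega, h1⟩
      have hBs : |θ*(m:ℝ) - ((-n : ℤ):ℝ)| < 1/2 := by
        have : θ*(m:ℝ) - ((-n : ℤ):ℝ) = (n:ℝ) + θ*(m:ℝ) := by push_cast; ring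
        rw [this]
        exact hB
      have hAs : |(m:ℝ) + θ*((-n : ℤ):ℝ)| ≤ t := by
        have : (m:ℝ) + θ*((-n : ℤ):ℝ) = -(θ*(n:ℝ) - (m:ℝ)) := by push_cast; ring
        rw [this, abs_neg]
        exact hA_le
      have hk1 := key m (-n) hmn hBs hAs
      have heq2 : |θ*(m:ℝ) - ((-n : ℤ):ℝ)| * |(m:ℝ) + θ*((-n : ℤ):ℝ)|
          = |θ*(n:ℝ) - (m:ℝ)| * |(n:ℝ) + θ*(m:ℝ)| := by
        have e1 : θ*(m:ℝ) - ((-n : ℤ):ℝ) = (n:ℝ) + θ*(m:ℝ) := by push_cast; ring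
        have e2 : (m:ℝ) + θ*((-n : ℤ):ℝ) = -(θ*(n:ℝ) - (m:ℝ)) := by push_cast; ring
        rw [e1, e2, abs_neg]
        ring
      rw [heq2] at hk1
      have hcontr : t ^ (-(2*c)) < 1/(6*((q k : ℝ))^γ) := by
        rw [htneg]
        apply one_div_lt_one_div_of_lt (by positivity) ht6
      linarith
    · have hk1 : (1:ℝ)/4 ≤ |θ*(n:ℝ) - (m:ℝ)| * |(n:ℝ) + θ*(m:ℝ)| := by
        calc (1:ℝ)/4 = (1/2)*(1/2) := by norm_num
          _ ≤ |θ*(n:ℝ) - (m:ℝ)| * |(n:ℝ) + θ*(m:ℝ)| :=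
            mul_le_mul hA hB (by norm_num) (abs_nonneg _)
      have hcontr : t ^ (-(2*c)) < 1/4 := by
        rw [htneg]
        exact one_div_lt_one_div_of_lt (by norm_num) ht4
      linarith

end CFnot

open Filter in
/-- Fix `γ > 0` and let `θ = [a₀; a₁, a₂, …]` be the continued fraction with
`a₀ = 1` and `a_{k+1} = ⌊q_k^γ⌋ + 1`, where `p_k/q_k` are its convergents (given
by the standard recurrences) and `θ` is the limit of the convergents. Then
`ω̂̂(Λ_θ) = γ/(2 + 2γ)`. -/
theorem weakUniformExpLat_of_gamma_growth (γ : ℝ) (hγ : 0 < γ)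
    (a p q : ℕ → ℕ) (θ : ℝ)
    (ha0 : a 0 = 1)
    (haS : ∀ k, a (k + 1) = ⌊(q k : ℝ) ^ γ⌋₊ + 1)
    (hp0 : p 0 = a 0) (hq0 : q 0 = 1)
    (hp1 : p 1 = a 1 * a 0 + 1) (hq1 : q 1 = a 1)
    (hpS : ∀ k, p (k + 2) = a (k + 2) * p (k + 1) + p k)
    (hqS : ∀ k, q (k + 2) = a (k + 2) * q (k + 1) + q k)
    (hθ : Tendsto (fun k => (p k : ℝ) / (q k : ℝ)) atTop (nhds θ)) :
    weakUniformExpLat (latticeOf θ) = ((γ / (2 + 2 * γ) : ℝ) : EReal) := by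
  have hG : 0 < γ / (2 + 2 * γ) := by positivity
  unfold weakUniformExpLat
  apply le_antisymm
  · apply sSup_le
    rintro g ⟨c, rfl, hev⟩
    rw [EReal.coe_le_coe_iff]
    by_contra h
    push_neg at h
    exact cf_not γ hγ a p q θ ha0 haS hp0 hq0 hp1 hq1 hpS hqS hθ c h hev
  · by_contra h
    push_neg at h
    obtain ⟨c, hc1, hc2⟩ := EReal.exists_between_coe_real h
    have hc2' : c < γ / (2 + 2 * γ) := EReal.coe_lt_coe_iff.mp hc2
    have hc'0 : 0 < max c (γ / (2 + 2 * γ) / 2) :=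
      lt_of_lt_of_le (by positivity) (le_max_right _ _)
    have hc'G : max c (γ / (2 + 2 * γ) / 2) < γ / (2 + 2 * γ) := by
      apply max_lt hc2'
      linarith
    have hmem := cf_member γ hγ a p q θ ha0 haS hp0 hq0 hp1 hq1 hpS hqS hθ
      (max c (γ / (2 + 2 * γ) / 2)) hc'0 hc'G
    have hle : ((max c (γ / (2 + 2 * γ) / 2) : ℝ) : EReal) ≤
        sSup {g : EReal | ∃ γ' : ℝ, g = (γ' : EReal) ∧
          ∀ᶠ t : ℝ in atTop, ∃ z ∈ latticeOf θ, z ≠ 0 ∧ latNorm z ≤ t ∧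
            latProd z ≤ t ^ (-γ')} :=
      le_sSup ⟨max c (γ / (2 + 2 * γ) / 2), rfl, hmem⟩
    have hcc : (c : EReal) ≤ ((max c (γ / (2 + 2 * γ) / 2) : ℝ) : EReal) :=
      EReal.coe_le_coe_iff.mpr (le_max_left _ _)
    exact lt_irrefl _ (lt_of_lt_of_le hc1 (le_trans hcc hle))
end

section
/- Let θ > 1 be an irrational number whose partial quotients a_k in its continued fraction expansion are bounded. Then ω(Λ_θ) = 0 and ω̂̂(Λ_θ) = 0. -/
open Filter

/-- The regular Diophantine exponent of a real number `θ`: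
the supremum (in `EReal`) of real `γ` such that `|θx − y| ≤ |x|^(−γ)` has
infinitely many solutions in nonzero integers `x`, `y`. -/
noncomputable def regularExp (θ : ℝ) : EReal :=
  sSup {g : EReal | ∃ γ : ℝ, g = (γ : EReal) ∧
    {xy : ℤ × ℤ | xy.1 ≠ 0 ∧ xy.2 ≠ 0 ∧
      |θ * (xy.1 : ℝ) - (xy.2 : ℝ)| ≤ |(xy.1 : ℝ)| ^ (-γ)}.Infinite}

/-- The regular Diophantine exponent of a lattice `Λ ⊆ ℝ²`:
the supremum (in `EReal`) of real `γ` such that `Π(z) ≤ |z|^(−γ)` has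
infinitely many solutions in nonzero `z ∈ Λ`. -/
noncomputable def regularExpLat (Λ : Set (ℝ × ℝ)) : EReal :=
  sSup {g : EReal | ∃ γ : ℝ, g = (γ : EReal) ∧
    {z : ℝ × ℝ | z ∈ Λ ∧ z ≠ 0 ∧ latProd z ≤ (latNorm z) ^ (-γ)}.Infinite}


set_option autoImplicit false
open Filter GenContFract

namespace CFAux

variable {θ : ℝ}

/-- Irrational numbers have non-terminating continued fraction. -/
lemma notTerm (hθ : Irrational θ) (n : ℕ) : ¬(GenContFract.of θ).TerminatedAt n := by
  intro h
  have hterm : (GenContFract.of θ).Terminates := ⟨n, h⟩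
  obtain ⟨q, hq⟩ := (terminates_iff_rat θ).1 hterm
  exact hθ ⟨q, hq.symm⟩

lemma stream_some (hθ : Irrational θ) (n : ℕ) :
    ∃ ifp, IntFractPair.stream θ n = some ifp := by
  cases n with
  | zero => exact ⟨_, IntFractPair.stream_zero θ⟩
  | succ m =>
    have := notTerm hθ m
    rw [of_terminatedAt_n_iff_succ_nth_intFractPair_stream_eq_none] at this
    exact Option.ne_none_iff_exists'.1 this

lemma fr_ne_zero (hθ : Irrational θ) {n : ℕ} {ifp : IntFractPair ℝ}
    (h : IntFractPair.stream θ n = some ifp) : ifp.fr ≠ 0 := by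
  intro h0
  obtain ⟨ifp', h'⟩ := stream_some hθ (n + 1)
  rw [IntFractPair.stream_eq_none_of_fr_eq_zero h h0] at h'
  cases h'

lemma exists_partDen (hθ : Irrational θ) (n : ℕ) :
    ∃ b : ℝ, (GenContFract.of θ).partDens.get? n = some b ∧ 1 ≤ b := by
  have := notTerm hθ n
  rw [terminatedAt_iff_partDen_none] at this
  obtain ⟨b, hb⟩ := Option.ne_none_iff_exists'.1 this
  exact ⟨b, hb, of_one_le_get?_partDen hb⟩

lemma exists_s (hθ : Irrational θ) (n : ℕ) :
    ∃ b : ℝ, (GenContFract.of θ).s.get? n = some ⟨1, b⟩ ∧ 1 ≤ b := by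
  obtain ⟨b, hb, hb1⟩ := exists_partDen hθ n
  obtain ⟨gp, hgp, hgpb⟩ := exists_s_b_of_partDen hb
  have ha : gp.a = 1 := of_partNum_eq_one (partNum_eq_s_a hgp)
  refine ⟨b, ?_, hb1⟩
  rwa [show (⟨1, b⟩ : Pair ℝ) = gp by cases gp; simp_all]

lemma one_le_dens (hθ : Irrational θ) (n : ℕ) : (1 : ℝ) ≤ (GenContFract.of θ).dens n := by
  have h : (Nat.fib (n + 1) : ℝ) ≤ (GenContFract.of θ).dens n := by
    apply succ_nth_fib_le_of_nth_den
    cases n with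
    | zero => exact Or.inl rfl
    | succ m => exact Or.inr (notTerm hθ m)
  refine le_trans ?_ h
  exact_mod_cast Nat.one_le_iff_ne_zero.2 (Nat.fib_pos.2 n.succ_pos).ne'

lemma dens_pos (hθ : Irrational θ) (n : ℕ) : (0 : ℝ) < (GenContFract.of θ).dens n :=
  lt_of_lt_of_le one_pos (one_le_dens hθ n)

lemma dens_rec (hθ : Irrational θ) (n : ℕ) :
    ∃ b : ℝ, 1 ≤ b ∧ (GenContFract.of θ).partDens.get? (n + 1) = some b ∧
      (GenContFract.of θ).dens (n + 2) = b * (GenContFract.of θ).dens (n + 1) + (GenContFract.of θ).dens n := by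
  obtain ⟨b, hs, hb1⟩ := exists_s hθ (n + 1)
  refine ⟨b, hb1, by rw [partDen_eq_s_b hs], ?_⟩
  have := dens_recurrence (g := GenContFract.of θ) hs rfl rfl
  simpa using this

lemma dens_one (hθ : Irrational θ) :
    ∃ b : ℝ, 1 ≤ b ∧ (GenContFract.of θ).partDens.get? 0 = some b ∧ (GenContFract.of θ).dens 1 = b := by
  obtain ⟨b, hs, hb1⟩ := exists_s hθ 0
  refine ⟨b, hb1, by rw [partDen_eq_s_b hs], ?_⟩
  have h2 := contsAux_recurrence (g := GenContFract.of θ) hs zeroth_contAux_eq_one_zero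
    first_contAux_eq_h_one
  have : (GenContFract.of θ).dens 1 = ((GenContFract.of θ).contsAux 2).b := rfl
  rw [this, h2]
  simp

lemma lin_le_dens (hθ : Irrational θ) : ∀ n : ℕ, (n : ℝ) ≤ (GenContFract.of θ).dens n := by
  intro n
  induction n using Nat.strong_induction_on with
  | _ n ih =>
    match n with
    | 0 => simp [zeroth_den_eq_one]
    | 1 => exact_mod_cast one_le_dens hθ 1
    | (m + 2) =>
      obtain ⟨b, hb1, _, hrec⟩ := dens_rec hθ m
      have h1 : ((m : ℝ) + 1) ≤ (GenContFract.of θ).dens (m + 1) := by exact_mod_cast ih (m+1) (by omega)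
      have h2 : (1 : ℝ) ≤ (GenContFract.of θ).dens m := one_le_dens hθ m
      have hd1 : (0:ℝ) ≤ (GenContFract.of θ).dens (m+1) := (dens_pos hθ (m+1)).le
      push_cast
      rw [hrec]
      nlinarith


lemma exists_dens_gt (hθ : Irrational θ) (x : ℝ) : ∃ n, x < (GenContFract.of θ).dens n := by
  refine ⟨⌈x⌉₊ + 1, lt_of_le_of_lt (Nat.le_ceil x) ?_⟩
  calc (⌈x⌉₊ : ℝ) < (⌈x⌉₊ + 1 : ℕ) := by push_cast; linarith
    _ ≤ _ := lin_le_dens hθ _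

lemma choose_n (hθ : Irrational θ) (x : ℝ) (hx : 1 ≤ x) :
    ∃ n, (GenContFract.of θ).dens n ≤ x ∧ x < (GenContFract.of θ).dens (n + 1) := by
  classical
  have hex : ∃ n, x < (GenContFract.of θ).dens n := exists_dens_gt hθ x
  let m := Nat.find hex
  have hm : x < (GenContFract.of θ).dens m := Nat.find_spec hex
  have hm0 : m ≠ 0 := by
    intro h0
    have := hm
    rw [h0, zeroth_den_eq_one] at this
    linarith
  obtain ⟨n, hn⟩ := Nat.exists_eq_succ_of_ne_zero hm0
  refine ⟨n, not_lt.1 (Nat.find_min hex (m := n) (by omega)), ?_⟩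
  have : (n:ℕ)+1 = m := hn.symm
  rw [this]; exact hm

lemma contsAux_b_mono (hθ : Irrational θ) (n : ℕ) :
    ((GenContFract.of θ).contsAux n).b ≤ ((GenContFract.of θ).contsAux (n + 1)).b := by
  cases n with
  | zero => rw [zeroth_contAux_eq_one_zero, first_contAux_eq_h_one]; norm_num
  | succ m => exact of_den_mono (v := θ) (n := m)

section Bounded

variable {M : ℝ}

lemma dens_succ_le (hθ : Irrational θ)
    (hM : ∀ n : ℕ, ∀ b : ℝ, (GenContFract.of θ).partDens.get? n = some b → b ≤ M) :
    ∀ n, (GenContFract.of θ).dens (n + 1) ≤ (M + 1) * (GenContFract.of θ).dens n := by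
  intro n
  cases n with
  | zero =>
    obtain ⟨b, hb1, hpd, hd1⟩ := dens_one hθ
    rw [hd1, zeroth_den_eq_one, mul_one]
    have := hM 0 b hpd
    linarith
  | succ m =>
    obtain ⟨b, hb1, hpd, hrec⟩ := dens_rec hθ m
    have hbM := hM (m + 1) b hpd
    have hmono := of_den_mono (v := θ) (n := m)
    have hpos := dens_pos hθ m
    have hpos1 := dens_pos hθ (m + 1)
    rw [hrec]
    nlinarith

lemma dens_two_step (hθ : Irrational θ) (n : ℕ) :
    (GenContFract.of θ).dens (n + 1) + (GenContFract.of θ).dens n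
      ≤ (GenContFract.of θ).dens (n + 2) := by
  obtain ⟨b, hb1, _, hrec⟩ := dens_rec hθ n
  have hpos1 := dens_pos hθ (n + 1)
  rw [hrec]
  nlinarith

end Bounded

lemma exists_int_contsAux (hθ : Irrational θ) (n : ℕ) :
    ∃ P Q : ℤ, (GenContFract.of θ).contsAux n = ⟨(P : ℝ), (Q : ℝ)⟩ := by
  induction n using Nat.strong_induction_on with
  | _ n ih =>
    match n with
    | 0 => exact ⟨1, 0, by rw [zeroth_contAux_eq_one_zero]; norm_num⟩
    | 1 => exact ⟨⌊θ⌋, 1, by rw [first_contAux_eq_h_one, of_h_eq_floor]; norm_num⟩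
    | (m + 2) =>
      obtain ⟨b, hs, hb1⟩ := exists_s hθ m
      obtain ⟨zb, hzb⟩ := exists_int_eq_of_partDen (partDen_eq_s_b hs)
      obtain ⟨P0, Q0, h0⟩ := ih m (by omega)
      obtain ⟨P1, Q1, h1⟩ := ih (m + 1) (by omega)
      refine ⟨zb * P1 + P0, zb * Q1 + Q0, ?_⟩
      rw [contsAux_recurrence hs h0 h1]
      simp only [one_mul]
      have hzb' : b = (zb:ℝ) := hzb
      simp only [GenContFract.Pair.mk.injEq]
      constructor <;> (push_cast; rw [hzb'])

lemma exists_int_num_den (hθ : Irrational θ) (n : ℕ) :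
    ∃ P Q : ℤ, (GenContFract.of θ).nums n = (P : ℝ) ∧ (GenContFract.of θ).dens n = (Q : ℝ) := by
  obtain ⟨P, Q, h⟩ := exists_int_contsAux hθ (n + 1)
  refine ⟨P, Q, ?_, ?_⟩
  · rw [num_eq_conts_a, nth_cont_eq_succ_nth_contAux, h]
  · rw [den_eq_conts_b, nth_cont_eq_succ_nth_contAux, h]

section LowerDist

variable {M : ℝ}

lemma dist_lower (hθ : Irrational θ)
    (hM : ∀ n : ℕ, ∀ b : ℝ, (GenContFract.of θ).partDens.get? n = some b → b ≤ M)
    (n : ℕ) :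
    1 / ((M + 2) * (GenContFract.of θ).dens n ^ 2) ≤ |θ - (GenContFract.of θ).convs n| := by
  obtain ⟨ifp, hst⟩ := stream_some hθ n
  have hfr : ifp.fr ≠ 0 := fr_ne_zero hθ hst
  have hfrpos : 0 < ifp.fr :=
    lt_of_le_of_ne (IntFractPair.nth_stream_fr_nonneg hst) (Ne.symm hfr)
  have heq := sub_convs_eq hst
  simp only [hfr, if_false] at heq
  set B := ((GenContFract.of θ).contsAux (n + 1)).b with hB
  set pB := ((GenContFract.of θ).contsAux n).b with hpB
  have hBd : (GenContFract.of θ).dens n = B := rfl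
  have hpB0 : 0 ≤ pB := zero_le_of_contsAux_b
  have hpBB : pB ≤ B := contsAux_b_mono hθ n
  have hB1 : (1 : ℝ) ≤ B := by rw [← hBd]; exact one_le_dens hθ n
  have hB0 : (0 : ℝ) < B := lt_of_lt_of_le one_pos hB1
  -- bound the inverse of the fractional part
  have hsucc : IntFractPair.stream θ (n + 1) = some (IntFractPair.of ifp.fr⁻¹) :=
    IntFractPair.stream_succ_of_some hst hfr
  have hsget : (GenContFract.of θ).s.get? n = some ⟨1, ((IntFractPair.of ifp.fr⁻¹).b : ℝ)⟩ :=
    get?_of_eq_some_of_succ_get?_intFractPair_stream hsucc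
  have hbM : (((IntFractPair.of ifp.fr⁻¹).b : ℤ) : ℝ) ≤ M :=
    hM n _ (partDen_eq_s_b hsget)
  have hfloor : (IntFractPair.of ifp.fr⁻¹).b = ⌊ifp.fr⁻¹⌋ := rfl
  have hinv : ifp.fr⁻¹ ≤ M + 1 := by
    have := Int.lt_floor_add_one (ifp.fr⁻¹)
    rw [← hfloor] at this
    linarith
  have hinvpos : 0 < ifp.fr⁻¹ := inv_pos.2 hfrpos
  have hden_le : B * (ifp.fr⁻¹ * B + pB) ≤ (M + 2) * B ^ 2 := by nlinarith
  have hdenpos : 0 < B * (ifp.fr⁻¹ * B + pB) := by positivity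
  have habs : |θ - (GenContFract.of θ).convs n| = 1 / (B * (ifp.fr⁻¹ * B + pB)) := by
    rw [heq, abs_div, abs_neg_one_pow, abs_of_pos hdenpos]
  rw [habs, hBd]
  apply one_div_le_one_div_of_le hdenpos hden_le

end LowerDist


section Badly

variable {M : ℝ}

lemma badly_pos (hθ : Irrational θ)
    (hM : ∀ n : ℕ, ∀ b : ℝ, (GenContFract.of θ).partDens.get? n = some b → b ≤ M)
    (hM1 : 1 ≤ M) :
    ∀ q p : ℤ, 0 < q → ((M + 1) ^ 3 * (M + 2))⁻¹ / (q : ℝ) ≤ |θ * q - p| := by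
  intro q p hq
  have hM0 : (0:ℝ) < M + 1 := by linarith
  have hM2 : (0:ℝ) < M + 2 := by linarith
  set c : ℝ := ((M + 1) ^ 3 * (M + 2))⁻¹ with hc
  have hcpos : 0 < c := by positivity
  have hx1 : (1:ℝ) ≤ (q:ℝ) := by exact_mod_cast hq
  have hx0 : (0:ℝ) < (q:ℝ) := lt_of_lt_of_le one_pos hx1
  obtain ⟨n, hn1, hn2⟩ := choose_n hθ (q:ℝ) hx1
  obtain ⟨P1, Q1, hP1, hQ1⟩ := exists_int_num_den hθ (n + 1)
  have hups : |θ - (GenContFract.of θ).convs (n+1)|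
      ≤ 1 / ((GenContFract.of θ).dens (n+1) * (GenContFract.of θ).dens (n+2)) :=
    abs_sub_convs_le (notTerm hθ (n+1))
  have hlow : 1 / ((M + 2) * (GenContFract.of θ).dens (n+1) ^ 2)
      ≤ |θ - (GenContFract.of θ).convs (n+1)| := dist_lower hθ hM (n+1)
  have hconv : (GenContFract.of θ).convs (n+1)
      = (GenContFract.of θ).nums (n+1) / (GenContFract.of θ).dens (n+1) :=
    conv_eq_num_div_den
  have h1d0 : 1 ≤ (GenContFract.of θ).dens n := one_le_dens hθ n
  have h1d1 : 1 ≤ (GenContFract.of θ).dens (n+1) := one_le_dens hθ (n+1)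
  have h1d2 : 1 ≤ (GenContFract.of θ).dens (n+2) := one_le_dens hθ (n+2)
  have hd1le : (GenContFract.of θ).dens (n+1) ≤ (M + 1) * (GenContFract.of θ).dens n :=
    dens_succ_le hθ hM n
  have hd2le : (GenContFract.of θ).dens (n+2) ≤ (M + 1) * (GenContFract.of θ).dens (n+1) :=
    dens_succ_le hθ hM (n+1)
  have htwostep : (GenContFract.of θ).dens (n+1) + (GenContFract.of θ).dens n
      ≤ (GenContFract.of θ).dens (n+2) := dens_two_step hθ n
  set x : ℝ := (q : ℝ) with hxdef
  set d0 : ℝ := (GenContFract.of θ).dens n with hd0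
  set d1 : ℝ := (GenContFract.of θ).dens (n + 1) with hd1
  set d2 : ℝ := (GenContFract.of θ).dens (n + 2) with hd2
  set N1 : ℝ := (GenContFract.of θ).nums (n + 1) with hN1
  set cv : ℝ := (GenContFract.of θ).convs (n+1) with hcv
  clear_value x d0 d1 d2 N1 cv
  have h0d0 : 0 < d0 := lt_of_lt_of_le one_pos h1d0
  have h0d1 : 0 < d1 := lt_of_lt_of_le one_pos h1d1
  have h0d2 : 0 < d2 := lt_of_lt_of_le one_pos h1d2
  by_cases hcase : p * Q1 = P1 * q
  · -- `p/q` coincides with the convergent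
    have hpq : (p : ℝ) * d1 = N1 * x := by
      rw [hP1, hQ1, hxdef]
      exact_mod_cast hcase
    have hp : (p : ℝ) = x * cv := by
      rw [hconv]
      field_simp
      linarith [hpq]
    have key : |θ * x - p| = x * |θ - cv| := by
      rw [hp, show θ * x - x * cv = x * (θ - cv) by ring, abs_mul, abs_of_pos hx0]
    rw [key]
    have h2 : x / ((M + 2) * d1 ^ 2) ≤ x * |θ - cv| := by
      rw [div_eq_mul_one_div]
      exact mul_le_mul_of_nonneg_left hlow hx0.le
    refine le_trans ?_ h2
    rw [div_le_div_iff₀ hx0 (mul_pos hM2 (pow_pos h0d1 2))]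
    have hd1x : d1 ≤ (M + 1) * x :=
      le_trans hd1le (mul_le_mul_of_nonneg_left hn1 hM0.le)
    have hsq : d1 ^ 2 ≤ (M+1)^2 * x^2 := by
      have := pow_le_pow_left₀ h0d1.le hd1x 2
      calc d1^2 ≤ ((M+1)*x)^2 := this
        _ = (M+1)^2 * x^2 := by ring
    have hcM : c * (M + 2) * (M + 1) ^ 2 ≤ 1 := by
      have he : c * (M + 2) * (M + 1) ^ 2 = (M + 1)⁻¹ := by
        rw [hc]; field_simp
      rw [he]
      rw [inv_le_one_iff₀]
      right; linarith
    calc c * ((M + 2) * d1 ^ 2) = (c * (M + 2)) * d1 ^ 2 := by ring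
      _ ≤ (c * (M + 2)) * ((M+1)^2 * x^2) :=
          mul_le_mul_of_nonneg_left hsq (by positivity)
      _ = (c * (M + 2) * (M + 1) ^ 2) * x ^ 2 := by ring
      _ ≤ 1 * x ^ 2 := mul_le_mul_of_nonneg_right hcM (sq_nonneg x)
      _ = x * x := by ring
  · -- `p/q` differs from the convergent
    have ht : p * Q1 - P1 * q ≠ 0 := sub_ne_zero.2 hcase
    have ht1 : (1:ℝ) ≤ |(p : ℝ) * d1 - N1 * x| := by
      have h1 := Int.one_le_abs ht
      have hcast : ((|p * Q1 - P1 * q| : ℤ) : ℝ) = |(p : ℝ) * d1 - N1 * x| := by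
        rw [Int.cast_abs]
        push_cast
        rw [← hP1, ← hQ1, ← hxdef]
      rw [← hcast]
      exact_mod_cast h1
    have habs1 : 1 / d1 ≤ |cv * x - p| := by
      have hrepr : cv * x - p = (N1 * x - p * d1) / d1 := by
        rw [hconv]
        field_simp
      rw [hrepr, abs_div, abs_of_pos h0d1]
      gcongr
      rw [abs_sub_comm] at ht1
      exact ht1
    have habs2 : |cv * x - θ * x| ≤ x / (d1 * d2) := by
      rw [show cv * x - θ * x = -((θ - cv) * x) by ring, abs_neg, abs_mul, abs_of_pos hx0]
      calc |θ - cv| * x ≤ (1/(d1*d2)) * x := mul_le_mul_of_nonneg_right hups hx0.le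
        _ = x / (d1 * d2) := by ring
    have htri : 1 / d1 - x / (d1 * d2) ≤ |θ * x - p| := by
      have h := abs_sub_abs_le_abs_sub (cv * x - p) (cv * x - θ * x)
      rw [show cv * x - p - (cv * x - θ * x) = θ * x - p by ring] at h
      linarith
    refine le_trans ?_ htri
    have hkey : d0 / (d1 * d2) ≤ 1 / d1 - x / (d1 * d2) := by
      have he : 1 / d1 - x / (d1 * d2) = (d2 - x) / (d1 * d2) := by
        field_simp
      rw [he]
      gcongr
      linarith
    refine le_trans ?_ hkey
    rw [div_le_div_iff₀ hx0 (mul_pos h0d1 h0d2)]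
    have hd2le' : d2 ≤ (M+1)^2 * d0 := by
      calc d2 ≤ (M+1)*d1 := hd2le
        _ ≤ (M+1)*((M+1)*d0) := mul_le_mul_of_nonneg_left hd1le hM0.le
        _ = (M+1)^2*d0 := by ring
    have hcM3 : c * (M + 1) ^ 3 ≤ 1 := by
      have he : c * (M + 1) ^ 3 = (M + 2)⁻¹ := by
        rw [hc]; field_simp
      rw [he, inv_le_one_iff₀]
      right; linarith
    calc c * (d1 * d2) ≤ c * ((M+1) * d0 * ((M+1)^2 * d0)) := by
          refine mul_le_mul_of_nonneg_left ?_ hcpos.le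
          exact mul_le_mul hd1le hd2le' h0d2.le (by positivity)
      _ = (c * (M + 1) ^ 3) * d0 ^ 2 := by ring
      _ ≤ 1 * d0 ^ 2 := mul_le_mul_of_nonneg_right hcM3 (sq_nonneg d0)
      _ = d0 * d0 := by ring
      _ ≤ d0 * x := mul_le_mul_of_nonneg_left hn1 h0d0.le

end Badly

lemma badly (hθ : Irrational θ) {M : ℝ}
    (hM : ∀ n : ℕ, ∀ b : ℝ, (GenContFract.of θ).partDens.get? n = some b → b ≤ M)
    (hM1 : 1 ≤ M) :
    ∀ q p : ℤ, q ≠ 0 → ((M + 1) ^ 3 * (M + 2))⁻¹ / |(q : ℝ)| ≤ |θ * q - p| := by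
  intro q p hq
  rcases lt_or_gt_of_ne hq with hneg | hpos
  · have h := badly_pos hθ hM hM1 (-q) (-p) (by omega)
    have h2 : |θ * ((-q : ℤ):ℝ) - ((-p : ℤ):ℝ)| = |θ * q - p| := by
      push_cast
      rw [show θ * -(q:ℝ) - -(p:ℝ) = -(θ * q - p) by ring, abs_neg]
    rw [h2] at h
    have h3 : (((-q : ℤ)):ℝ) = |(q:ℝ)| := by
      rw [abs_of_neg (by exact_mod_cast hneg : (q:ℝ) < 0)]
      push_cast
      ring
    rwa [h3] at h
  · have h := badly_pos hθ hM hM1 q p hpos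
    rwa [abs_of_pos (by exact_mod_cast hpos : (0:ℝ) < (q:ℝ))]


lemma one_le_contsAux_a (hθ : Irrational θ) (hθ1 : 1 < θ) (n : ℕ) :
    1 ≤ ((GenContFract.of θ).contsAux n).a := by
  induction n using Nat.strong_induction_on with
  | _ n ih =>
    match n with
    | 0 => rw [zeroth_contAux_eq_one_zero]
    | 1 =>
      rw [first_contAux_eq_h_one]
      show (1:ℝ) ≤ (GenContFract.of θ).h
      rw [of_h_eq_floor]
      exact_mod_cast Int.le_floor.2 (by exact_mod_cast hθ1.le)
    | (m + 2) =>
      obtain ⟨b, hs, hb1⟩ := exists_s hθ m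
      rw [contsAux_recurrence hs rfl rfl]
      have h1 := ih m (by omega)
      have h2 := ih (m + 1) (by omega)
      show (1:ℝ) ≤ b * ((GenContFract.of θ).contsAux (m+1)).a
        + 1 * ((GenContFract.of θ).contsAux m).a
      nlinarith

lemma one_le_nums (hθ : Irrational θ) (hθ1 : 1 < θ) (n : ℕ) :
    1 ≤ (GenContFract.of θ).nums n :=
  one_le_contsAux_a hθ hθ1 (n + 1)

lemma nums_succ_ge (hθ : Irrational θ) (hθ1 : 1 < θ) (n : ℕ) :
    (GenContFract.of θ).nums n + 1 ≤ (GenContFract.of θ).nums (n + 1) := by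
  obtain ⟨b, hs, hb1⟩ := exists_s hθ n
  have hrec := contsAux_recurrence hs rfl rfl
  have h1 : (GenContFract.of θ).nums (n + 1) = ((GenContFract.of θ).contsAux (n + 2)).a := rfl
  have h2 : (GenContFract.of θ).nums n = ((GenContFract.of θ).contsAux (n + 1)).a := rfl
  rw [h1, h2, hrec]
  show ((GenContFract.of θ).contsAux (n+1)).a + 1
    ≤ b * ((GenContFract.of θ).contsAux (n+1)).a + 1 * ((GenContFract.of θ).contsAux n).a
  have ha1 := one_le_contsAux_a hθ hθ1 n
  have ha2 := one_le_contsAux_a hθ hθ1 (n + 1)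
  nlinarith

end CFAux


namespace LatAux

lemma latNorm_pair (a b : ℝ) : latNorm (a, b) = max |a| |b| := rfl

lemma latNorm_pos {z : ℝ × ℝ} (hz : z ≠ 0) : 0 < latNorm z := by
  rcases eq_or_ne z.1 0 with h1 | h1
  · have h2 : z.2 ≠ 0 := by
      intro h2
      exact hz (Prod.ext_iff.2 ⟨h1, h2⟩)
    exact lt_of_lt_of_le (abs_pos.2 h2) (le_max_right _ _)
  · exact lt_of_lt_of_le (abs_pos.2 h1) (le_max_left _ _)

lemma coord_le {θ : ℝ} (hθ1 : 1 < θ) (q p : ℤ) :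
    |(q:ℝ)| ≤ latNorm (θ * (q:ℝ) - p, (q:ℝ) + θ * p)
    ∧ |(p:ℝ)| ≤ latNorm (θ * (q:ℝ) - p, (q:ℝ) + θ * p) := by
  have hθ0 : (0:ℝ) < θ := lt_trans one_pos hθ1
  have hN1 : |θ * (q:ℝ) - p| ≤ latNorm (θ * (q:ℝ) - p, (q:ℝ) + θ * p) := le_max_left _ _
  have hN2 : |(q:ℝ) + θ * p| ≤ latNorm (θ * (q:ℝ) - p, (q:ℝ) + θ * p) := le_max_right _ _
  set N := latNorm (θ * (q:ℝ) - p, (q:ℝ) + θ * p) with hN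
  have hN0 : 0 ≤ N := le_trans (abs_nonneg _) hN1
  have hfac : (0:ℝ) ≤ N * (θ * (θ - 1)) :=
    mul_nonneg hN0 (mul_nonneg hθ0.le (by linarith))
  constructor
  · have h : (1 + θ^2) * |(q:ℝ)| ≤ (θ + 1) * N := by
      calc (1 + θ^2) * |(q:ℝ)| = |(1 + θ^2) * (q:ℝ)| := by
            rw [abs_mul, abs_of_pos (show (0:ℝ) < 1 + θ^2 by positivity)]
        _ = |θ * (θ * (q:ℝ) - p) + ((q:ℝ) + θ * p)| := by ring_nf
        _ ≤ |θ * (θ * (q:ℝ) - p)| + |(q:ℝ) + θ * p| := abs_add_le _ _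
        _ = θ * |θ * (q:ℝ) - p| + |(q:ℝ) + θ * p| := by rw [abs_mul, abs_of_pos hθ0]
        _ ≤ θ * N + N := add_le_add (mul_le_mul_of_nonneg_left hN1 hθ0.le) hN2
        _ = (θ + 1) * N := by ring
    nlinarith [abs_nonneg (q:ℝ)]
  · have h : (1 + θ^2) * |(p:ℝ)| ≤ (θ + 1) * N := by
      calc (1 + θ^2) * |(p:ℝ)| = |(1 + θ^2) * (p:ℝ)| := by
            rw [abs_mul, abs_of_pos (show (0:ℝ) < 1 + θ^2 by positivity)]
        _ = |θ * ((q:ℝ) + θ * p) - (θ * (q:ℝ) - p)| := by ring_nf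
        _ ≤ |θ * ((q:ℝ) + θ * p)| + |θ * (q:ℝ) - p| := abs_sub _ _
        _ = θ * |(q:ℝ) + θ * p| + |θ * (q:ℝ) - p| := by rw [abs_mul, abs_of_pos hθ0]
        _ ≤ θ * N + N := add_le_add (mul_le_mul_of_nonneg_left hN2 hθ0.le) hN1
        _ = (θ + 1) * N := by ring
    nlinarith [abs_nonneg (p:ℝ)]

lemma prod_lb {θ M : ℝ} (hθ : Irrational θ) (hθ1 : 1 < θ)
    (hM : ∀ n : ℕ, ∀ b : ℝ, (GenContFract.of θ).partDens.get? n = some b → b ≤ M)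
    (hM1 : 1 ≤ M) :
    ∀ z ∈ latticeOf θ, z ≠ 0 → ((M + 1) ^ 3 * (M + 2))⁻¹ ≤ |z.1| * |z.2| := by
  have hθ0 : (0:ℝ) < θ := lt_trans one_pos hθ1
  set c : ℝ := ((M + 1) ^ 3 * (M + 2))⁻¹ with hc
  have hc0 : 0 < c := by positivity
  have hc1 : c ≤ 1 := by
    rw [hc, inv_le_one_iff₀]
    right
    have h3 : (1:ℝ) ≤ (M+1)^3 := one_le_pow₀ (by linarith)
    nlinarith
  have hbad := CFAux.badly hθ hM hM1
  rintro z ⟨q, p, rfl⟩ hz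
  simp only
  by_cases hq : q = 0
  · have hp : p ≠ 0 := by
      intro hp
      exact hz (by simp [hq, hp, Prod.ext_iff])
    have h1 : (1:ℝ) ≤ |(p:ℝ)| := by exact_mod_cast Int.one_le_abs hp
    have e1 : |θ * (q:ℝ) - p| = |(p:ℝ)| := by rw [hq]; push_cast; simp
    have e2 : |(q:ℝ) + θ * p| = θ * |(p:ℝ)| := by
      rw [hq]; push_cast; rw [zero_add, abs_mul, abs_of_pos hθ0]
    rw [e1, e2]
    have hpp : (1:ℝ)*1 ≤ |(p:ℝ)| * |(p:ℝ)| := mul_le_mul h1 h1 zero_le_one (abs_nonneg _)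
    nlinarith [hpp, hθ1, hc1]
  · by_cases hp : p = 0
    · have h1 : (1:ℝ) ≤ |(q:ℝ)| := by exact_mod_cast Int.one_le_abs hq
      have e1 : |θ * (q:ℝ) - p| = θ * |(q:ℝ)| := by
        rw [hp]; push_cast; rw [sub_zero, abs_mul, abs_of_pos hθ0]
      have e2 : |(q:ℝ) + θ * p| = |(q:ℝ)| := by rw [hp]; push_cast; simp
      rw [e1, e2]
      have hpp : (1:ℝ)*1 ≤ |(q:ℝ)| * |(q:ℝ)| := mul_le_mul h1 h1 zero_le_one (abs_nonneg _)
      nlinarith [hpp, hθ1, hc1]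
    · -- both nonzero
      have hq1 : (1:ℝ) ≤ |(q:ℝ)| := by exact_mod_cast Int.one_le_abs hq
      have hp1 : (1:ℝ) ≤ |(p:ℝ)| := by exact_mod_cast Int.one_le_abs hp
      have hq0 : (0:ℝ) < |(q:ℝ)| := lt_of_lt_of_le one_pos hq1
      have hp0 : (0:ℝ) < |(p:ℝ)| := lt_of_lt_of_le one_pos hp1
      obtain ⟨hcq, hcp⟩ := coord_le hθ1 q p
      have hu := hbad q p hq
      have hv : c / |(p:ℝ)| ≤ |(q:ℝ) + θ * p| := by
        have h := hbad p (-q) hp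
        have he : |θ * (p:ℝ) - ((-q : ℤ):ℝ)| = |(q:ℝ) + θ * p| := by
          push_cast
          rw [show θ * (p:ℝ) - -(q:ℝ) = (q:ℝ) + θ * p by ring]
        rwa [he] at h
      set N := latNorm (θ * (q:ℝ) - p, (q:ℝ) + θ * p) with hNdef
      have hqN : |(q:ℝ)| ≤ N := hcq
      have hpN : |(p:ℝ)| ≤ N := hcp
      have hN0 : 0 < N := lt_of_lt_of_le hq0 hqN
      rcases le_total |θ * (q:ℝ) - p| |(q:ℝ) + θ * p| with hcmp | hcmp
      · have hNv : N = |(q:ℝ) + θ * p| := max_eq_right hcmp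
        have step1 : c / N ≤ |θ * (q:ℝ) - p| := by
          exact le_trans (div_le_div_of_nonneg_left hc0.le hq0 hqN) hu
        calc c = (c / N) * N := by field_simp
          _ ≤ |θ * (q:ℝ) - p| * N := mul_le_mul_of_nonneg_right step1 hN0.le
          _ = |θ * (q:ℝ) - p| * |(q:ℝ) + θ * p| := by rw [hNv]
      · have hNu : N = |θ * (q:ℝ) - p| := max_eq_left hcmp
        have step1 : c / N ≤ |(q:ℝ) + θ * p| := by
          exact le_trans (div_le_div_of_nonneg_left hc0.le hp0 hpN) hv
        calc c = N * (c / N) := by field_simp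
          _ ≤ N * |(q:ℝ) + θ * p| := mul_le_mul_of_nonneg_left step1 hN0.le
          _ = |θ * (q:ℝ) - p| * |(q:ℝ) + θ * p| := by rw [hNu]


lemma lattice_finite {θ : ℝ} (hθ1 : 1 < θ) (R : ℝ) :
    {z : ℝ × ℝ | z ∈ latticeOf θ ∧ z ≠ 0 ∧ latNorm z ≤ R}.Finite := by
  set K : ℤ := ⌈R⌉ with hK
  have hsub : {z : ℝ × ℝ | z ∈ latticeOf θ ∧ z ≠ 0 ∧ latNorm z ≤ R}
      ⊆ (fun qp : ℤ × ℤ => ((θ * (qp.1:ℝ) - qp.2, (qp.1:ℝ) + θ * qp.2) : ℝ × ℝ)) ''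
        (Set.Icc (-K) K ×ˢ Set.Icc (-K) K) := by
    rintro z ⟨⟨q, p, rfl⟩, hz0, hzR⟩
    refine ⟨(q, p), ?_, rfl⟩
    obtain ⟨hcq, hcp⟩ := coord_le hθ1 q p
    have hqR : |(q:ℝ)| ≤ (K:ℝ) := le_trans (le_trans hcq hzR) (Int.le_ceil R)
    have hpR : |(p:ℝ)| ≤ (K:ℝ) := le_trans (le_trans hcp hzR) (Int.le_ceil R)
    have hq : |q| ≤ K := by rw [← Int.cast_abs] at hqR; exact_mod_cast hqR
    have hp : |p| ≤ K := by rw [← Int.cast_abs] at hpR; exact_mod_cast hpR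
    exact ⟨⟨(abs_le.1 hq).1, (abs_le.1 hq).2⟩, (abs_le.1 hp).1, (abs_le.1 hp).2⟩
  exact Set.Finite.subset
    (Set.Finite.image _ ((Set.finite_Icc _ _).prod (Set.finite_Icc _ _))) hsub

lemma approx_points {θ : ℝ} (hθ : Irrational θ) (hθ1 : 1 < θ) :
    ∃ Z : ℕ → ℝ × ℝ, (∀ n, Z n ∈ latticeOf θ) ∧ (∀ n, Z n ≠ 0) ∧
      StrictMono (fun n => (Z n).2) ∧
      (∀ n : ℕ, (n:ℝ) ≤ latNorm (Z n)) ∧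
      (∀ n : ℕ, latProd (Z n) ≤ (1 + θ + θ^2) ^ ((1:ℝ)/2)) := by
  have hθ0 : (0:ℝ) < θ := lt_trans one_pos hθ1
  refine ⟨fun n => (θ * (GenContFract.of θ).dens n - (GenContFract.of θ).nums n,
      (GenContFract.of θ).dens n + θ * (GenContFract.of θ).nums n), ?_, ?_, ?_, ?_, ?_⟩
  · intro n
    obtain ⟨P, Q, hP, hQ⟩ := CFAux.exists_int_num_den hθ n
    refine ⟨Q, P, ?_⟩
    show (θ * (GenContFract.of θ).dens n - (GenContFract.of θ).nums n,
      (GenContFract.of θ).dens n + θ * (GenContFract.of θ).nums n)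
      = (θ * (Q:ℝ) - (P:ℝ), (Q:ℝ) + θ * (P:ℝ))
    rw [hP, hQ]
  · intro n h
    have h2 : (GenContFract.of θ).dens n + θ * (GenContFract.of θ).nums n = 0 :=
      congrArg Prod.snd h
    have hd := CFAux.one_le_dens hθ n
    have ha := CFAux.one_le_nums hθ hθ1 n
    have hth := mul_le_mul_of_nonneg_left ha hθ0.le
    linarith
  · apply strictMono_nat_of_lt_succ
    intro n
    show (GenContFract.of θ).dens n + θ * (GenContFract.of θ).nums n
      < (GenContFract.of θ).dens (n+1) + θ * (GenContFract.of θ).nums (n+1)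
    have h1 := GenContFract.of_den_mono (v := θ) (n := n)
    have h2 := CFAux.nums_succ_ge hθ hθ1 n
    have h3 := mul_le_mul_of_nonneg_left h2 hθ0.le
    linarith
  · intro n
    have hd := CFAux.one_le_dens hθ n
    have ha := CFAux.one_le_nums hθ hθ1 n
    have hv : (0:ℝ) < (GenContFract.of θ).dens n + θ * (GenContFract.of θ).nums n := by
      nlinarith
    calc (n:ℝ) ≤ (GenContFract.of θ).dens n := CFAux.lin_le_dens hθ n
      _ ≤ (GenContFract.of θ).dens n + θ * (GenContFract.of θ).nums n := by nlinarith
      _ = |(GenContFract.of θ).dens n + θ * (GenContFract.of θ).nums n| :=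
          (abs_of_pos hv).symm
      _ ≤ latNorm _ := le_max_right _ _
  · intro n
    have hd := CFAux.one_le_dens hθ n
    have hd0 : (0:ℝ) < (GenContFract.of θ).dens n := lt_of_lt_of_le one_pos hd
    have hd1 := CFAux.one_le_dens hθ (n+1)
    have hd10 : (0:ℝ) < (GenContFract.of θ).dens (n+1) := lt_of_lt_of_le one_pos hd1
    have hmono := GenContFract.of_den_mono (v := θ) (n := n)
    have ha := CFAux.one_le_nums hθ hθ1 n
    -- |θ d - a| ≤ 1 / d
    have hups : |θ - (GenContFract.of θ).convs n|
        ≤ 1 / ((GenContFract.of θ).dens n * (GenContFract.of θ).dens (n+1)) :=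
      GenContFract.abs_sub_convs_le (CFAux.notTerm hθ n)
    have hu : |θ * (GenContFract.of θ).dens n - (GenContFract.of θ).nums n|
        ≤ 1 / (GenContFract.of θ).dens n := by
      have he : θ * (GenContFract.of θ).dens n - (GenContFract.of θ).nums n
          = (θ - (GenContFract.of θ).convs n) * (GenContFract.of θ).dens n := by
        rw [GenContFract.conv_eq_num_div_den]
        field_simp
      rw [he, abs_mul, abs_of_pos hd0]
      calc |θ - (GenContFract.of θ).convs n| * (GenContFract.of θ).dens n
          ≤ (1 / ((GenContFract.of θ).dens n * (GenContFract.of θ).dens (n+1)))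
            * (GenContFract.of θ).dens n := mul_le_mul_of_nonneg_right hups hd0.le
        _ = 1 / (GenContFract.of θ).dens (n+1) := by field_simp
        _ ≤ 1 / (GenContFract.of θ).dens n := by
            apply one_div_le_one_div_of_le hd0 hmono
    have hu1 : |θ * (GenContFract.of θ).dens n - (GenContFract.of θ).nums n| ≤ 1 :=
      le_trans hu (by rw [div_le_one hd0]; exact hd)
    have hab : (GenContFract.of θ).nums n ≤ (θ + 1) * (GenContFract.of θ).dens n := by
      have := abs_le.1 hu1
      nlinarith [this.1, this.2]
    have hv0 : (0:ℝ) ≤ (GenContFract.of θ).dens n + θ * (GenContFract.of θ).nums n := by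
      nlinarith
    have hvC : |(GenContFract.of θ).dens n + θ * (GenContFract.of θ).nums n|
        ≤ (1 + θ + θ^2) * (GenContFract.of θ).dens n := by
      rw [abs_of_nonneg hv0]
      nlinarith
    have hprod : |θ * (GenContFract.of θ).dens n - (GenContFract.of θ).nums n|
        * |(GenContFract.of θ).dens n + θ * (GenContFract.of θ).nums n|
        ≤ (1 + θ + θ^2) := by
      calc |θ * (GenContFract.of θ).dens n - (GenContFract.of θ).nums n|
          * |(GenContFract.of θ).dens n + θ * (GenContFract.of θ).nums n|
          ≤ (1 / (GenContFract.of θ).dens n)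
            * ((1 + θ + θ^2) * (GenContFract.of θ).dens n) :=
            mul_le_mul hu hvC (abs_nonneg _) (by positivity)
        _ = 1 + θ + θ^2 := by field_simp
    exact Real.rpow_le_rpow (by positivity) hprod (by norm_num)

end LatAux

/-- If `θ > 1` is irrational with bounded partial quotients in its continued
fraction expansion, then `ω(Λ_θ) = 0` and `ω̂̂(Λ_θ) = 0`. -/
theorem exponents_eq_zero_of_bounded_partial_quotients (θ : ℝ)
    (hθ1 : 1 < θ) (hθ : Irrational θ)
    (hbdd : ∃ B : ℝ, ∀ n : ℕ, ∀ b : ℝ,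
      (GenContFract.of θ).partDens.get? n = some b → b ≤ B) :
    regularExpLat (latticeOf θ) = 0 ∧ weakUniformExpLat (latticeOf θ) = 0 := by
  classical
  obtain ⟨B, hB⟩ := hbdd
  have hθ0 : (0:ℝ) < θ := lt_trans one_pos hθ1
  set M : ℝ := max B 1 with hMdef
  have hM1 : (1:ℝ) ≤ M := le_max_right _ _
  have hM : ∀ n : ℕ, ∀ b : ℝ, (GenContFract.of θ).partDens.get? n = some b → b ≤ M :=
    fun n b h => le_trans (hB n b h) (le_max_left _ _)
  set c : ℝ := ((M + 1) ^ 3 * (M + 2))⁻¹ with hc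
  have hc0 : 0 < c := by positivity
  set c1 : ℝ := c ^ ((1:ℝ)/2) with hc1def
  have hc10 : 0 < c1 := Real.rpow_pos_of_pos hc0 _
  have hprod : ∀ z ∈ latticeOf θ, z ≠ 0 → c1 ≤ latProd z := by
    intro z hzΛ hz
    have h := LatAux.prod_lb hθ hθ1 hM hM1 z hzΛ hz
    have he : latProd z = (|z.1| * |z.2|) ^ ((1:ℝ)/2) := rfl
    rw [he, hc1def]
    exact Real.rpow_le_rpow hc0.le h (by norm_num)
  obtain ⟨Z, hZΛ, hZne, hZmono, hZnorm, hZprod⟩ := LatAux.approx_points hθ hθ1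
  set C1 : ℝ := (1 + θ + θ^2) ^ ((1:ℝ)/2) with hC1
  -- infinitude of good approximations, for every negative exponent
  have hlow : ∀ r : ℝ, r < 0 →
      {z : ℝ × ℝ | z ∈ latticeOf θ ∧ z ≠ 0 ∧ latProd z ≤ (latNorm z) ^ (-r)}.Infinite := by
    intro r hr
    have hr' : 0 < -r := by linarith
    have hev : ∀ᶠ m : ℕ in atTop, C1 ≤ (m:ℝ) ^ (-r) :=
      ((tendsto_rpow_atTop hr').comp tendsto_natCast_atTop_atTop).eventually_ge_atTop C1
    obtain ⟨n₀, hn₀⟩ := eventually_atTop.1 hev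
    apply Set.infinite_of_injective_forall_mem (f := fun k : ℕ => Z (n₀ + k))
    · intro a b hab
      have h2 := hZmono.injective (congrArg Prod.snd hab)
      omega
    · intro k
      refine ⟨hZΛ _, hZne _, ?_⟩
      have h1 : C1 ≤ ((n₀ + k : ℕ):ℝ) ^ (-r) := hn₀ _ (Nat.le_add_right _ _)
      have h2 : ((n₀ + k : ℕ):ℝ) ≤ latNorm (Z (n₀ + k)) := hZnorm _
      have h3 : ((n₀ + k : ℕ):ℝ) ^ (-r) ≤ (latNorm (Z (n₀ + k))) ^ (-r) :=
        Real.rpow_le_rpow (Nat.cast_nonneg _) h2 hr'.le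
      exact le_trans (hZprod _) (le_trans h1 h3)
  -- generic fact about suprema in `EReal`
  have key : ∀ A : Set EReal, (∀ r : ℝ, r < 0 → (r : EReal) ∈ A) → (0:EReal) ≤ sSup A := by
    intro A hA
    by_contra hcon
    rw [not_le] at hcon
    obtain ⟨y, hy1, hy2⟩ := EReal.exists_between_coe_real hcon
    have hyneg : y < 0 := by
      rw [show ((0:EReal)) = ((0:ℝ):EReal) from rfl] at hy2
      exact_mod_cast hy2
    exact absurd (lt_of_le_of_lt (le_sSup (hA y hyneg)) hy1) (lt_irrefl _)
  constructor
  · -- regular exponent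
    apply le_antisymm
    · apply sSup_le
      rintro g ⟨γ, rfl, hγ⟩
      rw [show ((0:EReal)) = ((0:ℝ):EReal) from rfl, EReal.coe_le_coe_iff]
      by_contra hcon
      rw [not_le] at hcon
      set R : ℝ := max 1 (c1⁻¹ ^ γ⁻¹) with hR
      have hsub : {z : ℝ × ℝ | z ∈ latticeOf θ ∧ z ≠ 0 ∧ latProd z ≤ (latNorm z) ^ (-γ)}
          ⊆ {z : ℝ × ℝ | z ∈ latticeOf θ ∧ z ≠ 0 ∧ latNorm z ≤ R} := by
        rintro z ⟨h1, h2, h3⟩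
        refine ⟨h1, h2, ?_⟩
        rcases le_or_gt (latNorm z) 1 with h | h
        · exact le_trans h (le_max_left _ _)
        · have hNpos : (0:ℝ) < latNorm z := lt_trans one_pos h
          have hcN : c1 ≤ (latNorm z) ^ (-γ) := le_trans (hprod z h1 h2) h3
          have hNγ : (latNorm z) ^ γ ≤ c1⁻¹ := by
            rw [inv_eq_one_div, le_div_iff₀ hc10]
            calc (latNorm z) ^ γ * c1 ≤ (latNorm z) ^ γ * (latNorm z) ^ (-γ) :=
                  mul_le_mul_of_nonneg_left hcN (Real.rpow_nonneg hNpos.le γ)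
              _ = 1 := by rw [← Real.rpow_add hNpos]; simp
          have h4 := Real.rpow_le_rpow (Real.rpow_nonneg hNpos.le γ) hNγ
            (inv_nonneg.2 hcon.le)
          rw [← Real.rpow_mul hNpos.le, mul_inv_cancel₀ (ne_of_gt hcon),
            Real.rpow_one] at h4
          exact le_trans h4 (le_max_right _ _)
      exact hγ ((LatAux.lattice_finite hθ1 R).subset hsub)
    · exact key _ (fun r hr => ⟨r, rfl, hlow r hr⟩)
  · -- weak uniform exponent
    apply le_antisymm
    · apply sSup_le
      rintro g ⟨γ, rfl, hγ⟩
      rw [show ((0:EReal)) = ((0:ℝ):EReal) from rfl, EReal.coe_le_coe_iff]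
      by_contra hcon
      rw [not_le] at hcon
      have hev2 : ∀ᶠ t : ℝ in atTop, t ^ (-γ) < c1 :=
        (tendsto_rpow_neg_atTop hcon).eventually_lt_const hc10
      obtain ⟨t, ⟨z, hzΛ, hzne, _, hzp⟩, hlt⟩ := (hγ.and hev2).exists
      exact absurd (le_trans (hprod z hzΛ hzne) hzp) (not_le.2 hlt)
    · refine key _ (fun r hr => ⟨r, rfl, ?_⟩)
      have hr' : 0 < -r := by linarith
      have h1 : ∀ᶠ t : ℝ in atTop, θ ≤ t := eventually_ge_atTop θ
      have h2 : ∀ᶠ t : ℝ in atTop, θ ^ ((1:ℝ)/2) ≤ t ^ (-r) :=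
        (tendsto_rpow_atTop hr').eventually_ge_atTop _
      filter_upwards [h1, h2] with t ht1 ht2
      refine ⟨(θ, 1), ⟨1, 0, by push_cast; simp⟩, ?_, ?_, ?_⟩
      · intro h
        have := congrArg Prod.snd h
        simp at this
      · have he : latNorm (θ, 1) = θ := by
          rw [LatAux.latNorm_pair, abs_of_pos hθ0, abs_one]
          exact max_eq_left hθ1.le
        rw [he]
        exact ht1
      · have he : latProd (θ, 1) = θ ^ ((1:ℝ)/2) := by
          show (|θ| * |(1:ℝ)|) ^ ((1:ℝ)/2) = θ ^ ((1:ℝ)/2)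
          rw [abs_of_pos hθ0, abs_one, mul_one]
        rw [he]
        exact ht2
end

section
/- Let θ = [a₀; a₁, a₂, …] be the continued fraction with a₀ = 1 and a_{k+1} = ⌊q_k^k⌋ + 1 for every k ≥ 0, where q_k is the denominator of the k-th convergent of θ. Then ω̂̂(Λ_θ) = 1/2. -/
set_option maxHeartbeats 4000000


open Filter

open Filter in
/-- Let `θ = [a₀; a₁, a₂, …]` be the continued fraction with `a₀ = 1` and
`a_{k+1} = ⌊q_k^k⌋ + 1`, where `p_k/q_k` are its convergents (given by the
standard recurrences) and `θ` is the limit of the convergents. Then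
`ω̂̂(Λ_θ) = 1/2`. -/
theorem weakUniformExpLat_of_fast_growth (a p q : ℕ → ℕ) (θ : ℝ)
    (ha0 : a 0 = 1)
    (haS : ∀ k, a (k + 1) = q k ^ k + 1)
    (hp0 : p 0 = a 0) (hq0 : q 0 = 1)
    (hp1 : p 1 = a 1 * a 0 + 1) (hq1 : q 1 = a 1)
    (hpS : ∀ k, p (k + 2) = a (k + 2) * p (k + 1) + p k)
    (hqS : ∀ k, q (k + 2) = a (k + 2) * q (k + 1) + q k)
    (hθ : Tendsto (fun k => (p k : ℝ) / (q k : ℝ)) atTop (nhds θ)) :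
    weakUniformExpLat (latticeOf θ) = ((1 / 2 : ℝ) : EReal) := by
  have ha1 : a 1 = 2 := by rw [haS 0, hq0]; norm_num
  have hq1v : q 1 = 2 := by rw [hq1, ha1]
  have hp0v : p 0 = 1 := by rw [hp0, ha0]
  have hp1v : p 1 = 3 := by rw [hp1, ha1, ha0]
  have hqpos2 : ∀ k, 1 ≤ q k ∧ 1 ≤ q (k+1) := by
    intro k
    induction k with
    | zero => simp [hq0, hq1v]
    | succ n ih => exact ⟨ih.2, by rw [hqS]; omega⟩
  have hqpos : ∀ k, 1 ≤ q k := fun k => (hqpos2 k).1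
  have hppos2 : ∀ k, 1 ≤ p k ∧ 1 ≤ p (k+1) := by
    intro k
    induction k with
    | zero => simp [hp0v, hp1v]
    | succ n ih => exact ⟨ih.2, by rw [hpS]; omega⟩
  have hppos : ∀ k, 1 ≤ p k := fun k => (hppos2 k).1
  have haS2 : ∀ k, 2 ≤ a (k+1) := by
    intro k; rw [haS]
    have := hqpos k
    have : 1 ≤ q k ^ k := Nat.one_le_pow _ _ this
    omega
  have hq2 : ∀ k, 2 * q k ≤ q (k+1) := by
    intro k
    cases k with
    | zero => rw [hq0, hq1v]
    | succ n =>
      rw [hqS]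
      have := haS2 (n+1)
      have := hqpos (n+1)
      nlinarith [hqpos n]
  have hq2' : ∀ k, 2 * q (k+1) + 1 ≤ q (k+2) := by
    intro k
    rw [hqS]
    have := haS2 (k+1)
    have := hqpos (k+1)
    have := hqpos k
    nlinarith
  have hqpow : ∀ k, 2^k ≤ q k := by
    intro k
    induction k with
    | zero => simp [hq0]
    | succ n ih =>
      calc 2^(n+1) = 2 * 2^n := by ring
      _ ≤ 2 * q n := by omega
      _ ≤ q (n+1) := hq2 n
  have hqge : ∀ k, q k ^ (k+1) ≤ q (k+1) := by
    intro k
    cases k with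
    | zero => rw [hq0, hq1v]; norm_num
    | succ n =>
      rw [hqS, haS]
      have h1 := hqpos (n+1)
      calc q (n+1) ^ (n+2) = q (n+1) ^ (n+1) * q (n+1) := by ring
      _ ≤ (q (n+1) ^ (n+1) + 1) * q (n+1) + q n := by nlinarith
  have hqle : ∀ k, q (k+1) ≤ 3 * q k ^ (k+1) := by
    intro k
    cases k with
    | zero => rw [hq0, hq1v]; norm_num
    | succ n =>
      rw [hqS, haS]
      have h1 := hqpos (n+1)
      have h2 : q n ≤ q (n+1) := by have := hq2 n; omega
      have hsh : n+1+1 = n+2 := rfl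
      rw [hsh]
      have h5 : 0 < q (n+1)^(n+1) := Nat.pow_pos (hqpos (n+1))
      have h6 : q (n+1) ≤ q (n+1)^(n+1) * q (n+1) := Nat.le_mul_of_pos_left _ h5
      have h4 : q (n+1) ^ (n+2) = q (n+1)^(n+1) * q (n+1) := by ring
      rw [h4]
      nlinarith [h2, h6]
  have hdet : ∀ k, (p (k+1) : ℤ) * q k - (p k : ℤ) * q (k+1) = (-1)^k := by
    intro k
    induction k with
    | zero => rw [hp1v, hq0, hp0v, hq1v]; norm_num
    | succ n ih =>
      rw [hpS, hqS]
      push_cast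
      rw [pow_succ]
      push_cast at ih
      nlinarith [ih]
  have hqR : ∀ k, (1:ℝ) ≤ (q k : ℝ) := fun k => by exact_mod_cast hqpos k
  have hqRpos : ∀ k, (0:ℝ) < (q k : ℝ) := fun k => lt_of_lt_of_le one_pos (hqR k)
  set c : ℕ → ℝ := fun k => (p k : ℝ) / (q k : ℝ) with hc
  have hcdiff : ∀ k, c (k+1) - c k = (-1)^k / ((q k : ℝ) * q (k+1)) := by
    intro k
    have hd : ((p (k+1) : ℝ) * q k - (p k : ℝ) * q (k+1)) = (-1)^k := by
      exact_mod_cast congrArg (Int.cast : ℤ → ℝ) (hdet k)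
    have h1 := (hqRpos k).ne'
    have h2 := (hqRpos (k+1)).ne'
    simp only [hc]
    rw [div_sub_div _ _ h2 h1, ← hd]
    ring
  have hstep : ∀ m, 0 ≤ (-1:ℝ)^m * (c (m+2) - c m) := by
    intro m
    have e1 := hcdiff m
    have e2 := hcdiff (m+1)
    have : c (m+2) - c m = (-1)^m * (1/((q m:ℝ) * q (m+1)) - 1/((q (m+1):ℝ) * q (m+2))) := by
      rw [show c (m+2) - c m = (c (m+2) - c (m+1)) + (c (m+1) - c m) by ring, e1, e2, pow_succ]
      ring
    rw [this, ← mul_assoc, ← mul_pow]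
    simp only [neg_mul_neg, one_mul, one_pow]
    have hmono : (q m : ℝ) ≤ q (m+2) := by
      have h1 := hq2 m
      have h2 : 2 * q (m+1) ≤ q (m+2) := hq2 (m+1)
      have : q m ≤ q (m+2) := by omega
      exact_mod_cast this
    have : 1/((q (m+1):ℝ) * q (m+2)) ≤ 1/((q m:ℝ) * q (m+1)) := by
      apply one_div_le_one_div_of_le
      · exact mul_pos (hqRpos m) (hqRpos (m+1))
      · calc (q m:ℝ) * q (m+1) ≤ q (m+2) * q (m+1) := by
              apply mul_le_mul_of_nonneg_right hmono (le_of_lt (hqRpos _))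
        _ = q (m+1) * q (m+2) := by ring
    linarith
  have halt : ∀ j, 0 ≤ (-1:ℝ)^j * (θ - c j) := by
    intro j
    have hsub : Tendsto (fun i => (-1:ℝ)^j * c (j + 2*i)) atTop (nhds ((-1:ℝ)^j * θ)) := by
      apply Tendsto.const_mul
      refine hθ.comp ?_
      apply tendsto_atTop_atTop_of_monotone
      · intro x y hxy
        show j + 2*x ≤ j + 2*y
        omega
      · intro b
        refine ⟨b, ?_⟩
        show b ≤ j + 2*b
        omega
    have key : ∀ i, (-1:ℝ)^j * c j ≤ (-1:ℝ)^j * c (j + 2*i) := by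
      intro i
      induction i with
      | zero => simp
      | succ n ih =>
        have hs := hstep (j + 2*n)
        have hpow : (-1:ℝ)^(j+2*n) = (-1)^j := by
          rw [pow_add, pow_mul]; norm_num
        rw [hpow] at hs
        have : j + 2*(n+1) = (j + 2*n) + 2 := by omega
        rw [this]
        nlinarith [hs, ih]
    have := ge_of_tendsto' hsub key
    nlinarith [this]
  have hθ1 : 1 ≤ θ := by
    have h := halt 0
    simp only [pow_zero, one_mul] at h
    have : c 0 = 1 := by simp [hc, hp0v, hq0]
    linarith [this ▸ h]
  have hθ32 : θ ≤ 3/2 := by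
    have h := halt 1
    simp only [pow_one] at h
    have : c 1 = 3/2 := by simp only [hc, hp1v, hq1v]; norm_num
    nlinarith [h]
  have happrox : ∀ j, |θ * q j - p j| ≤ 1 / q (j+1) := by
    intro j
    have h1 := halt j
    have h2 := halt (j+1)
    have hd := hcdiff j
    have hqj := hqRpos j
    have hqj1 := hqRpos (j+1)
    have hval : θ * q j - p j = (θ - c j) * q j := by
      simp only [hc]; rw [sub_mul, div_mul_cancel₀ _ hqj.ne']
    rw [hval]
    rcases Nat.even_or_odd j with he | ho
    · rw [he.neg_one_pow, one_mul] at h1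
      have h2' : θ ≤ c (j+1) := by
        rw [(Even.add_one he).neg_one_pow] at h2; linarith
      have hd' : c (j+1) - c j = 1/((q j:ℝ) * q (j+1)) := by rw [hd, he.neg_one_pow]
      rw [abs_of_nonneg (mul_nonneg h1 (le_of_lt hqj))]
      calc (θ - c j) * q j ≤ (1/((q j:ℝ) * q (j+1))) * q j := by
            apply mul_le_mul_of_nonneg_right _ (le_of_lt hqj); linarith
      _ = 1/(q (j+1):ℝ) := by field_simp
    · rw [ho.neg_one_pow] at h1
      have h1' : θ ≤ c j := by linarith
      have h2' : c (j+1) ≤ θ := by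
        rw [(Odd.add_one ho).neg_one_pow, one_mul] at h2; linarith
      have hd' : c (j+1) - c j = -(1/((q j:ℝ) * q (j+1))) := by
        rw [hd, ho.neg_one_pow]; ring
      rw [abs_of_nonpos (mul_nonpos_of_nonpos_of_nonneg (by linarith) (le_of_lt hqj))]
      calc -((θ - c j) * q j) = (c j - θ) * q j := by ring
      _ ≤ (1/((q j:ℝ) * q (j+1))) * q j := by
            apply mul_le_mul_of_nonneg_right _ (le_of_lt hqj); linarith
      _ = 1/(q (j+1):ℝ) := by field_simp
  have hc32 : ∀ k, (p k : ℝ) ≤ 3/2 * q k := by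
    have hodd : ∀ i, c (2*i+1) ≤ 3/2 := by
      intro i
      induction i with
      | zero => simp only [hc, hp1v, hq1v]; norm_num
      | succ n ih =>
        have hs := hstep (2*n+1)
        have : (-1:ℝ)^(2*n+1) = -1 := Odd.neg_one_pow ⟨n, by omega⟩
        rw [this] at hs
        have : 2*(n+1)+1 = (2*n+1)+2 := by omega
        rw [this]
        nlinarith [hs, ih]
    intro k
    have hck : c k ≤ 3/2 := by
      rcases Nat.even_or_odd k with he | ho
      · have h := halt k
        rw [he.neg_one_pow] at h
        linarith [h, hθ32]
      · obtain ⟨i, hi⟩ := ho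
        rw [show k = 2*i+1 by omega]
        exact hodd i
    have := hqRpos k
    simp only [hc] at hck
    rw [div_le_iff₀ this] at hck
    linarith
  have hba : ∀ k (n m : ℤ), n ≠ 0 → |n| < (q (k+1) : ℤ) →
      1/(2 * (q (k+1):ℝ)) ≤ |θ * n - m| := by
    intro k n m hn hnlt
    by_contra hcon
    push_neg at hcon
    have h1 := happrox (k+1)
    have habs : |(n:ℝ)| ≤ (q (k+1):ℝ) - 1 := by
      have : |n| ≤ (q (k+1):ℤ) - 1 := by omega
      calc |(n:ℝ)| = ((|n| : ℤ) : ℝ) := by push_cast; rfl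
      _ ≤ ((q (k+1):ℤ) - 1 : ℤ) := by exact_mod_cast this
      _ = (q (k+1):ℝ) - 1 := by push_cast; ring
    have hq1p := hqRpos (k+1)
    have hq2p := hqRpos (k+2)
    have hq2b : 2 * (q (k+1):ℝ) + 1 ≤ q (k+2) := by exact_mod_cast hq2' k
    have key : |(n:ℝ) * p (k+1) - m * q (k+1)| < 1 := by
      have hid : (n:ℝ) * p (k+1) - m * q (k+1)
          = (-(n)) * (θ * q (k+1) - p (k+1)) + (q (k+1)) * (θ * n - m) := by ring
      rw [hid]
      calc |(-(n:ℝ)) * (θ * q (k+1) - p (k+1)) + (q (k+1)) * (θ * n - m)|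
          ≤ |(-(n:ℝ))| * |θ * q (k+1) - p (k+1)| + |(q (k+1):ℝ)| * |θ * n - m| := by
            refine le_trans (abs_add_le _ _) ?_
            rw [abs_mul, abs_mul]
      _ < ((q (k+1):ℝ) - 1) * (1 / q (k+2)) + (q (k+1)) * (1/(2 * (q (k+1):ℝ))) := by
            rw [abs_neg, abs_of_pos hq1p]
            have hnn : (0:ℝ) < |(n:ℝ)| := by
              simp only [abs_pos]
              exact_mod_cast hn
            apply add_lt_add_of_le_of_lt
            · apply mul_le_mul habs h1 (abs_nonneg _) (by linarith)
            · exact mul_lt_mul_of_pos_left hcon hq1p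
      _ < 1 := by
            rw [mul_one_div, mul_one_div]
            have e1 : ((q (k+1):ℝ) - 1) / q (k+2) < 1/2 := by
              rw [div_lt_div_iff₀ hq2p (by norm_num)]
              linarith
            have e2 : (q (k+1):ℝ) / (2 * q (k+1)) = 1/2 := by
              field_simp
            rw [e2]; linarith
    have hz : (n * p (k+1) - m * q (k+1) : ℤ) = 0 := by
      have h9 : |(n * p (k+1) - m * q (k+1) : ℤ)| < 1 := by
        have : |((n * p (k+1) - m * q (k+1) : ℤ) : ℝ)| < 1 := by push_cast; convert key using 2
        exact_mod_cast this
      rw [abs_lt] at h9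
      omega
    -- divisibility
    have hdk := hdet k
    have hdvd : (q (k+1) : ℤ) ∣ n := by
      have h2 : (n:ℤ) * p (k+1) = m * q (k+1) := by linarith [hz]
      rcases Nat.even_or_odd k with he | ho
      · have hdk' := hdk
        rw [he.neg_one_pow] at hdk'
        exact ⟨m * q k - n * p k, by linear_combination (q k:ℤ) * h2 - (n:ℤ) * hdk'⟩
      · have hdk' := hdk
        rw [ho.neg_one_pow] at hdk'
        exact ⟨n * p k - m * q k, by linear_combination (n:ℤ) * hdk' - (q k:ℤ) * h2⟩
    have := Int.le_of_dvd (abs_pos.mpr hn) ((dvd_abs _ _).mpr hdvd)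
    omega

  have hmem : ∀ γ : ℝ, 0 < γ → γ < 1/2 →
      ∀ᶠ t : ℝ in atTop, ∃ z ∈ latticeOf θ, z ≠ 0 ∧ latNorm z ≤ t ∧ latProd z ≤ t ^ (-γ) := by
    intro γ hγ0 hγh
    have h2γ : 2*γ < 1 := by linarith
    obtain ⟨K₀, hK₀⟩ := exists_nat_ge (7/(1-2*γ))
    set K := K₀ + 1 with hKdef
    rw [eventually_atTop]
    refine ⟨4 * (q K : ℝ), fun t ht => ?_⟩
    have htpos : (4:ℝ) ≤ t := le_trans (by nlinarith [hqR K]) ht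
    have ht0 : (0:ℝ) < t := by linarith
    classical
    set P : ℕ → Prop := fun k => 4 * (q k : ℝ) ≤ t with hPdef
    have hbound : ∀ k, P k → k ≤ ⌈t⌉₊ := by
      intro k hk
      have h2 : k ≤ q k := le_trans (Nat.le_of_lt (Nat.lt_two_pow_self (n := k))) (hqpow k)
      have h2' : (k:ℝ) ≤ (q k:ℝ) := by exact_mod_cast h2
      have h1 : (k:ℝ) ≤ 4 * (q k:ℝ) := by nlinarith [hqRpos k]
      have h3 : (k:ℝ) ≤ (⌈t⌉₊:ℝ) := le_trans (le_trans h1 hk) (Nat.le_ceil t)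
      exact_mod_cast h3
    have hPK : P K := ht
    set k := Nat.findGreatest P ⌈t⌉₊ with hkdef
    have hk : P k := Nat.findGreatest_spec (hbound K hPK) hPK
    have hkK : K ≤ k := Nat.le_findGreatest (hbound K hPK) hPK
    have hknot : ¬ P (k+1) := by
      by_cases hle : k + 1 ≤ ⌈t⌉₊
      · exact Nat.findGreatest_is_greatest (Nat.lt_succ_self k) hle
      · intro hp; exact hle (hbound _ hp)
    have ht4 : t < 4 * (q (k+1):ℝ) := by
      simp only [hPdef] at hknot; exact lt_of_not_ge hknot
    have h4qk : 4 * (q k:ℝ) ≤ t := by simp only [hPdef] at hk; exact hk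
    refine ⟨(θ * (q k:ℝ) - (p k:ℝ), (q k:ℝ) + θ * (p k:ℝ)),
      ⟨(q k:ℤ), (p k:ℤ), by push_cast; rfl⟩, ?_, ?_, ?_⟩
    · -- nonzero
      have hpR : (1:ℝ) ≤ (p k:ℝ) := by exact_mod_cast hppos k
      intro hzero
      have h5 := congrArg Prod.snd hzero
      simp only [Prod.snd_zero] at h5
      nlinarith [hqR k, hθ1, hpR]
    · -- norm bound
      have happ := happrox k
      have h11 : |θ * (q k:ℝ) - (p k:ℝ)| ≤ 1 :=
        le_trans happ (by rw [div_le_one (hqRpos _)]; exact hqR _)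
      have hpR : (1:ℝ) ≤ (p k:ℝ) := by exact_mod_cast hppos k
      have hz2' : (q k:ℝ) + θ * (p k:ℝ) ≤ 4 * (q k:ℝ) := by
        have hpk32 := hc32 k
        nlinarith [hθ32, hθ1, hqRpos k]
      simp only [latNorm]
      apply max_le
      · exact le_trans h11 (by linarith)
      · rw [abs_of_nonneg (by nlinarith [hqR k, hθ1, hpR])]
        linarith
    · -- product bound
      have happ := happrox k
      have hpR : (1:ℝ) ≤ (p k:ℝ) := by exact_mod_cast hppos k
      have hz2' : (q k:ℝ) + θ * (p k:ℝ) ≤ 4 * (q k:ℝ) := by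
        have hpk32 := hc32 k
        nlinarith [hθ32, hθ1, hqRpos k]
      have hz2nn : (0:ℝ) ≤ (q k:ℝ) + θ * (p k:ℝ) := by nlinarith [hqR k, hθ1, hpR]
      simp only [latProd]
      have hxle : |θ*(q k:ℝ) - (p k:ℝ)| * |(q k:ℝ) + θ*(p k:ℝ)|
          ≤ (1/(q (k+1):ℝ)) * (4*(q k:ℝ)) := by
        apply mul_le_mul happ ?_ (abs_nonneg _) (by positivity)
        rw [abs_of_nonneg hz2nn]; exact hz2'
      set Q : ℝ := (q k:ℝ) with hQdef
      have hQpos : (0:ℝ) < Q := hqRpos k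
      have hQ2 : (2:ℝ) ≤ Q := by
        have h7 : (2:ℕ)^1 ≤ 2^k := Nat.pow_le_pow_right (by norm_num) (by omega)
        have h8 : 2 ≤ q k := le_trans (by norm_num at h7 ⊢; exact h7) (hqpow k)
        rw [hQdef]
        exact_mod_cast h8
      have hc1 : ((k+1:ℕ):ℝ) = (k:ℝ)+1 := by push_cast; ring
      have hnpow : Q ^ ((k:ℝ)+1) = Q^(k+1) := by rw [← hc1, Real.rpow_natCast]
      have he6 : 6 ≤ ((k:ℝ)+1)*(1-2*γ) - 1 := by
        have hK0k : (K₀:ℝ) ≤ (k:ℝ) := by exact_mod_cast le_trans (by omega) hkK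
        have h1 : 7 ≤ (K₀:ℝ)*(1-2*γ) := by
          rw [div_le_iff₀ (by linarith)] at hK₀; linarith
        nlinarith [h1, hK0k]
      have hQ1le : 4*(q (k+1):ℝ) ≤ 12 * Q ^ ((k:ℝ)+1) := by
        have h9 : (q (k+1):ℝ) ≤ 3 * (q k:ℝ)^(k+1) := by exact_mod_cast hqle k
        rw [hnpow]; rw [hQdef]; linarith
      have hQ1ge : Q ^ ((k:ℝ)+1) ≤ (q (k+1):ℝ) := by
        have h9 : (q k:ℝ)^(k+1) ≤ (q (k+1):ℝ) := by exact_mod_cast hqge k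
        rw [hnpow]; rw [hQdef]; exact h9
      have h48 : (48:ℝ) ≤ Q ^ (((k:ℝ)+1)*(1-2*γ) - 1) := by
        have h2e : (2:ℝ)^(6:ℝ) ≤ (2:ℝ)^(((k:ℝ)+1)*(1-2*γ) - 1) :=
          Real.rpow_le_rpow_of_exponent_le one_le_two he6
        have h2Q : (2:ℝ)^(((k:ℝ)+1)*(1-2*γ) - 1) ≤ Q^(((k:ℝ)+1)*(1-2*γ) - 1) :=
          Real.rpow_le_rpow (by norm_num) hQ2 (by linarith)
        have h26 : (2:ℝ)^(6:ℝ) = 64 := by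
          rw [show (6:ℝ) = ((6:ℕ):ℝ) by norm_num, Real.rpow_natCast]; norm_num
        linarith
      have hrpow1 : (4*(q (k+1):ℝ))^(2*γ) ≤ 12 * Q ^ (((k:ℝ)+1)*(2*γ)) := by
        calc (4*(q (k+1):ℝ))^(2*γ) ≤ (12 * Q ^ ((k:ℝ)+1))^(2*γ) :=
              Real.rpow_le_rpow (by positivity) hQ1le (by linarith)
        _ = 12^(2*γ) * (Q ^ ((k:ℝ)+1))^(2*γ) :=
              Real.mul_rpow (by norm_num) (le_of_lt (Real.rpow_pos_of_pos hQpos _))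
        _ ≤ 12 * Q ^ (((k:ℝ)+1)*(2*γ)) := by
              rw [← Real.rpow_mul (le_of_lt hQpos)]
              have h12 : (12:ℝ)^(2*γ) ≤ 12 := by
                calc (12:ℝ)^(2*γ) ≤ 12^(1:ℝ) :=
                      Real.rpow_le_rpow_of_exponent_le (by norm_num) (by linarith)
                _ = 12 := Real.rpow_one _
              have hp : (0:ℝ) < Q ^ (((k:ℝ)+1)*(2*γ)) := Real.rpow_pos_of_pos hQpos _
              nlinarith
      have hmain : (1/(q (k+1):ℝ)) * (4*Q) ≤ t ^ (-(2*γ)) := by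
        rw [one_div_mul_eq_div, Real.rpow_neg (le_of_lt ht0), inv_eq_one_div,
            div_le_div_iff₀ (hqRpos (k+1)) (Real.rpow_pos_of_pos ht0 _)]
        calc 4*Q * t^(2*γ) ≤ 4*Q*((4*(q (k+1):ℝ))^(2*γ)) := by
              apply mul_le_mul_of_nonneg_left
                (Real.rpow_le_rpow (le_of_lt ht0) (le_of_lt ht4) (by linarith)) (by positivity)
        _ ≤ 4*Q*(12 * Q^(((k:ℝ)+1)*(2*γ))) := by
              apply mul_le_mul_of_nonneg_left hrpow1 (by positivity)
        _ = 48 * Q^((((k:ℝ)+1)*(2*γ)) + 1) := by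
              rw [Real.rpow_add hQpos, Real.rpow_one]; ring
        _ ≤ Q^(((k:ℝ)+1)*(1-2*γ) - 1) * Q^((((k:ℝ)+1)*(2*γ)) + 1) :=
              mul_le_mul_of_nonneg_right h48 (le_of_lt (Real.rpow_pos_of_pos hQpos _))
        _ = Q^((k:ℝ)+1) := by
              rw [← Real.rpow_add hQpos]; congr 1; ring
        _ ≤ (q (k+1):ℝ) := hQ1ge
        _ = 1 * (q (k+1):ℝ) := (one_mul _).symm
      calc (|θ*(q k:ℝ) - (p k:ℝ)| * |(q k:ℝ) + θ*(p k:ℝ)|)^((1:ℝ)/2)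
          ≤ (t ^ (-(2*γ)))^((1:ℝ)/2) :=
            Real.rpow_le_rpow (by positivity) (le_trans hxle hmain) (by norm_num)
      _ = t ^ (-γ) := by
            rw [← Real.rpow_mul (le_of_lt ht0)]
            congr 1; ring
  have hub : ∀ γ : ℝ,
      (∀ᶠ t : ℝ in atTop, ∃ z ∈ latticeOf θ, z ≠ 0 ∧ latNorm z ≤ t ∧ latProd z ≤ t ^ (-γ)) →
      γ ≤ 1/2 := by
    intro γ hev
    by_contra hcon
    push_neg at hcon
    rw [eventually_atTop] at hev
    obtain ⟨T, hT⟩ := hev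
    obtain ⟨k₀, hk₀⟩ := exists_nat_ge (max T (3/(2*γ-1)))
    set t : ℝ := (q (k₀+1) : ℝ) with htdef
    have h2pow : ((2:ℝ))^(k₀+1) ≤ t := by
      have h5 := hqpow (k₀+1)
      rw [htdef]; exact_mod_cast h5
    have h2k : (k₀:ℝ) ≤ (2:ℝ)^(k₀+1) := by
      have h5 : k₀ < 2^(k₀+1) :=
        lt_of_lt_of_le (Nat.lt_two_pow_self (n := k₀)) (Nat.pow_le_pow_right (by norm_num) (by omega))
      exact_mod_cast le_of_lt h5
    have hk₀t : (k₀:ℝ) ≤ t := le_trans h2k h2pow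
    have htT : T ≤ t := le_trans (le_trans (le_max_left _ _) hk₀) hk₀t
    have ht2 : (2:ℝ) ≤ t := by
      have h6 : (2:ℝ) ≤ (2:ℝ)^(k₀+1) := by
        calc (2:ℝ) = 2^1 := (pow_one 2).symm
        _ ≤ 2^(k₀+1) := pow_le_pow_right₀ (by norm_num) (by omega)
      linarith
    have ht0 : (0:ℝ) < t := by linarith
    have hexp : (8:ℝ) ≤ t ^ (2*γ-1) := by
      have h1 : (3:ℝ) ≤ (k₀:ℝ)*(2*γ-1) := by
        have h5 := le_trans (le_max_right T _) hk₀
        rw [div_le_iff₀ (by linarith)] at h5; linarith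
      have h1' : (3:ℝ) ≤ ((k₀+1:ℕ):ℝ)*(2*γ-1) := by
        push_cast; nlinarith [h1]
      calc (8:ℝ) = (2:ℝ)^(3:ℝ) := by
            rw [show (3:ℝ) = ((3:ℕ):ℝ) by norm_num, Real.rpow_natCast]; norm_num
      _ ≤ (2:ℝ)^(((k₀+1:ℕ):ℝ)*(2*γ-1)) :=
            Real.rpow_le_rpow_of_exponent_le one_le_two h1'
      _ = ((2:ℝ)^((k₀+1:ℕ):ℝ))^(2*γ-1) := Real.rpow_mul (by norm_num) _ _
      _ ≤ t^(2*γ-1) := by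
            apply Real.rpow_le_rpow (le_of_lt (Real.rpow_pos_of_pos (by norm_num) _)) ?_
              (by linarith)
            rw [Real.rpow_natCast]; exact h2pow
    obtain ⟨z, hzmem, hzne, hznorm, hzprod⟩ := hT t htT
    obtain ⟨qz, pz, hzeq⟩ := hzmem
    subst hzeq
    set u : ℝ := θ*(qz:ℝ) - (pz:ℝ) with hu
    set v : ℝ := (qz:ℝ) + θ*(pz:ℝ) with hv
    simp only [latNorm] at hznorm
    have hut : |u| ≤ t := le_trans (le_max_left _ _) hznorm
    have hvt : |v| ≤ t := le_trans (le_max_right _ _) hznorm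
    simp only [latProd] at hzprod
    have h0 : (0:ℝ) ≤ |u| * |v| := by positivity
    have hθ0 : (0:ℝ) < θ := by linarith
    have hθsq : (1:ℝ) ≤ θ^2 := by nlinarith
    have hθ2pos : (0:ℝ) < 1+θ^2 := by nlinarith
    have hx : |u| * |v| ≤ t^(-(2*γ)) := by
      have hprodnn : (0:ℝ) ≤ (|u| * |v|)^((1:ℝ)/2) := Real.rpow_nonneg h0 _
      have h2 : (|u| * |v|)^((1:ℝ)/2) * (|u| * |v|)^((1:ℝ)/2) ≤ t^(-γ) * t^(-γ) :=
        mul_le_mul hzprod hzprod hprodnn (le_of_lt (Real.rpow_pos_of_pos ht0 _))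
      have e1 : (|u| * |v|)^((1:ℝ)/2) * (|u| * |v|)^((1:ℝ)/2) = |u| * |v| := by
        rw [← Real.rpow_add' h0 (by norm_num : (1:ℝ)/2 + 1/2 ≠ 0)]
        norm_num
      have e2 : t^(-γ) * t^(-γ) = t^(-(2*γ)) := by
        rw [← Real.rpow_add ht0]; congr 1; ring
      rw [e1, e2] at h2
      exact h2
    have hqp : ¬(qz = 0 ∧ pz = 0) := by
      rintro ⟨hq', hp'⟩
      apply hzne
      simp [hu, hv, hq', hp', Prod.ext_iff]
    have hidq : θ*u + v = (1+θ^2) * (qz:ℝ) := by rw [hu, hv]; ring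
    have hidp : θ*v - u = (1+θ^2) * (pz:ℝ) := by rw [hu, hv]; ring
    have hxlb : 1/(4*t) ≤ |u| * |v| := by
      by_cases h1 : |u| < 1
      · -- case A : qz ≠ 0, use best approximation on qz
        have hqz0 : qz ≠ 0 := by
          intro h
          apply hqp
          refine ⟨h, ?_⟩
          rw [hu, h] at h1
          simp only [Int.cast_zero, mul_zero, zero_sub, abs_neg] at h1
          have h9 : |pz| < 1 := by exact_mod_cast h1
          rw [abs_lt] at h9; omega
        have hqzR1 : (1:ℝ) ≤ |(qz:ℝ)| := by
          have h9 : (1:ℤ) ≤ |qz| := Int.one_le_abs (by exact_mod_cast hqz0)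
          have h9' : ((1:ℤ):ℝ) ≤ ((|qz|:ℤ):ℝ) := by exact_mod_cast h9
          push_cast at h9'
          linarith
        have habs_q : (1+θ^2) * |(qz:ℝ)| ≤ θ*|u| + |v| := by
          have h5 : |θ*u + v| ≤ θ*|u| + |v| := by
            calc |θ*u + v| ≤ |θ*u| + |v| := abs_add_le _ _
            _ = θ*|u| + |v| := by rw [abs_mul, abs_of_pos hθ0]
          have h6 : |θ*u + v| = (1+θ^2) * |(qz:ℝ)| := by
            rw [hidq, abs_mul, abs_of_pos hθ2pos]
          linarith
        have h7 : θ*|u| ≤ 3/2 := by nlinarith [abs_nonneg u]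
        have hqzt : |(qz:ℝ)| < t := by nlinarith [hvt, hqzR1, ht2, abs_nonneg ((qz:ℝ))]
        have hqzint : |qz| < (q (k₀+1):ℤ) := by
          have h8 : |(qz:ℝ)| < (q (k₀+1):ℝ) := hqzt
          exact_mod_cast h8
        have hba1 : 1/(2*t) ≤ |u| := by
          have h8 := hba k₀ qz pz hqz0 hqzint
          rw [hu]
          exact h8
        have hvlb : 1/2 ≤ |v| := by
          have h6 : v = (1+θ^2)*(qz:ℝ) - θ*u := by linarith [hidq]
          have h5 : (1+θ^2)*|(qz:ℝ)| - θ*|u| ≤ |v| := by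
            rw [h6]
            calc (1+θ^2)*|(qz:ℝ)| - θ*|u| = |(1+θ^2)*(qz:ℝ)| - |θ*u| := by
                  rw [abs_mul, abs_mul, abs_of_pos hθ2pos, abs_of_pos hθ0]
            _ ≤ |(1+θ^2)*(qz:ℝ) - θ*u| := abs_sub_abs_le_abs_sub _ _
          nlinarith [hqzR1]
        calc 1/(4*t) = (1/(2*t)) * (1/2) := by ring
        _ ≤ |u| * |v| := mul_le_mul hba1 hvlb (by norm_num) (abs_nonneg _)
      · by_cases h2 : |v| < 1
        · -- case B : pz ≠ 0, use best approximation on pz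
          push_neg at h1
          have hpz0 : pz ≠ 0 := by
            intro h
            apply hqp
            refine ⟨?_, h⟩
            rw [hv, h] at h2
            simp only [Int.cast_zero, mul_zero, add_zero] at h2
            have h9 : |qz| < 1 := by exact_mod_cast h2
            rw [abs_lt] at h9; omega
          have hpzR1 : (1:ℝ) ≤ |(pz:ℝ)| := by
            have h9 : (1:ℤ) ≤ |pz| := Int.one_le_abs (by exact_mod_cast hpz0)
            have h9' : ((1:ℤ):ℝ) ≤ ((|pz|:ℤ):ℝ) := by exact_mod_cast h9
            push_cast at h9'
            linarith
          have habs_p : (1+θ^2) * |(pz:ℝ)| ≤ θ*|v| + |u| := by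
            have h5 : |θ*v - u| ≤ θ*|v| + |u| := by
              calc |θ*v - u| ≤ |θ*v| + |u| := abs_sub _ _
              _ = θ*|v| + |u| := by rw [abs_mul, abs_of_pos hθ0]
            have h6 : |θ*v - u| = (1+θ^2) * |(pz:ℝ)| := by
              rw [hidp, abs_mul, abs_of_pos hθ2pos]
            linarith
          have h7 : θ*|v| ≤ 3/2 := by nlinarith [abs_nonneg v]
          have hpzt : |(pz:ℝ)| < t := by nlinarith [hut, hpzR1, ht2, abs_nonneg ((pz:ℝ))]
          have hpzint : |pz| < (q (k₀+1):ℤ) := by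
            have h8 : |(pz:ℝ)| < (q (k₀+1):ℝ) := hpzt
            exact_mod_cast h8
          have hba1 : 1/(2*t) ≤ |v| := by
            have h8 := hba k₀ pz (-qz) hpz0 hpzint
            have h9 : |θ*(pz:ℝ) - ((-qz:ℤ):ℝ)| = |v| := by
              rw [hv]
              push_cast
              congr 1
              ring
            rw [h9] at h8
            exact h8
          calc 1/(4*t) = (1/2) * (1/(2*t)) := by ring
          _ ≤ |u| * |v| := mul_le_mul (by linarith) hba1 (by positivity) (by linarith)
        · push_neg at h1 h2
          have h5 : (1:ℝ) ≤ |u| * |v| := by nlinarith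
          have h6 : 1/(4*t) ≤ 1 := by
            rw [div_le_one (by linarith)]; linarith
          linarith
    have hfin : 1/(4*t) ≤ t^(-(2*γ)) := le_trans hxlb hx
    have hle4 : t^(2*γ-1) ≤ 4 := by
      rw [Real.rpow_neg (le_of_lt ht0), inv_eq_one_div,
        div_le_div_iff₀ (by linarith) (Real.rpow_pos_of_pos ht0 _)] at hfin
      rw [Real.rpow_sub ht0, Real.rpow_one, div_le_iff₀ ht0]
      nlinarith [hfin]
    linarith [hexp]
  -- final assembly
  unfold weakUniformExpLat
  apply le_antisymm
  · apply sSup_le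
    rintro g ⟨γ, rfl, hγ⟩
    exact EReal.coe_le_coe_iff.mpr (hub γ hγ)
  · by_contra hlt
    push_neg at hlt
    obtain ⟨γ, hγ1, hγ2⟩ := EReal.exists_between_coe_real hlt
    have hγ2' : γ < 1/2 := by exact_mod_cast hγ2
    have h1 : (0:ℝ) < max γ (1/4) := lt_of_lt_of_le (by norm_num) (le_max_right _ _)
    have h2 : max γ (1/4) < 1/2 := max_lt hγ2' (by norm_num)
    have hm := hmem _ h1 h2
    have hle : ((max γ (1/4) : ℝ) : EReal) ≤ sSup {g : EReal | ∃ γ' : ℝ, g = (γ' : EReal) ∧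
        ∀ᶠ t : ℝ in atTop, ∃ z ∈ latticeOf θ, z ≠ 0 ∧ latNorm z ≤ t ∧ latProd z ≤ t ^ (-γ')} :=
      le_sSup ⟨max γ (1/4), rfl, hm⟩
    have h3 : (γ : EReal) ≤ ((max γ (1/4) : ℝ) : EReal) := by
      exact_mod_cast le_max_left γ (1/4)
    exact absurd (lt_of_le_of_lt (le_trans h3 hle) hγ1) (lt_irrefl _)
end

section
/- Fix γ > 0, and let θ = [a₀; a₁, a₂, …] be the continued fraction with a₀ = 1 and a_{k+1} = ⌊q_k^γ⌋ + 1 for every k ≥ 0, where q_k is the denominator of the k-th convergent p_k/q_k of θ. Then for every k ≥ 0 one has 1/(q_k^γ + 3) < q_k·|q_kθ − p_k| < q_k^{−γ} and q_k^{1+γ} < q_{k+1} < 3·q_k^{1+γ}; moreover, q_k·|q_kθ − p_k| > 3·q_{k+1}·|q_{k+1}θ − p_{k+1}| for all sufficiently large k. -/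
open Filter

lemma alt_tail_bounds (x E : ℕ → ℝ) (θ : ℝ)
    (hE : ∀ k, 0 < E k) (hEd : ∀ k, E (k+1) < E k)
    (hdiff : ∀ k, x (k+1) - x k = (-1)^k * E k)
    (hx : Tendsto x atTop (nhds θ)) :
    ∀ k, E k - E (k+1) < (-1:ℝ)^k * (θ - x k) ∧ (-1:ℝ)^k * (θ - x k) < E k := by
  have hc2 : ∀ k : ℕ, ((-1:ℝ)^k) * ((-1:ℝ)^k) = 1 := by
    intro k
    rw [← pow_add]
    exact (neg_one_pow_eq_one_iff_even (by norm_num : (-1:ℝ) ≠ 1)).mpr ⟨k, rfl⟩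
  have hS : ∀ n k, 0 ≤ (-1:ℝ)^k * (x (k+n) - x k) ∧ (-1:ℝ)^k * (x (k+n) - x k) ≤ E k := by
    intro n
    induction n with
    | zero => intro k; simp [le_of_lt (hE k)]
    | succ n ih =>
      intro k
      have ihk := ih (k+1)
      have h2 := hdiff k
      have hkey : (-1:ℝ)^k * (x (k+(n+1)) - x k)
          = E k - (-1:ℝ)^(k+1) * (x ((k+1)+n) - x (k+1)) := by
        have hrw : k + (n+1) = (k+1) + n := by ring
        rw [hrw, pow_succ]
        linear_combination ((-1:ℝ)^k) * h2 + (E k) * hc2 k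
      constructor
      · rw [hkey]; have := hEd k; linarith [ihk.2]
      · rw [hkey]; linarith [ihk.1]
  have hT : ∀ k, 0 ≤ (-1:ℝ)^k * (θ - x k) ∧ (-1:ℝ)^k * (θ - x k) ≤ E k := by
    intro k
    have hshift : Tendsto (fun n => x (k+n)) atTop (nhds θ) := by
      have := hx.comp (tendsto_add_atTop_nat k)
      simpa [Function.comp_def, add_comm] using this
    have hlim : Tendsto (fun n => (-1:ℝ)^k * (x (k+n) - x k)) atTop
        (nhds ((-1:ℝ)^k * (θ - x k))) :=
      ((hshift.sub tendsto_const_nhds).const_mul _)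
    exact ⟨ge_of_tendsto' hlim (fun n => (hS n k).1),
      le_of_tendsto' hlim (fun n => (hS n k).2)⟩
  have hrec : ∀ k, (-1:ℝ)^k * (θ - x k) = E k - (-1:ℝ)^(k+1) * (θ - x (k+1)) := by
    intro k
    have h2 := hdiff k
    rw [pow_succ]
    linear_combination ((-1:ℝ)^k) * h2 + (E k) * hc2 k
  have hTpos : ∀ k, 0 < (-1:ℝ)^k * (θ - x k) := by
    intro k
    rw [hrec k]
    have := (hT (k+1)).2
    have := hEd k
    linarith
  intro k
  constructor
  · rw [hrec k, hrec (k+1)]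
    have := hTpos (k+2)
    linarith
  · rw [hrec k]
    have := hTpos (k+1)
    linarith


set_option maxHeartbeats 1000000 in
/-- Fix `γ > 0` and let `θ = [a₀; a₁, a₂, …]` be the continued fraction with
`a₀ = 1` and `a_{k+1} = ⌊q_k^γ⌋ + 1`, where `p_k/q_k` are its convergents (given
by the standard recurrences) and `θ` is the limit of the convergents. Then for every
`k ≥ 0`: `1/(q_k^γ + 3) < q_k·|q_kθ − p_k| < q_k^(−γ)` and
`q_k^(1+γ) < q_{k+1} < 3·q_k^(1+γ)`; moreover
`q_k·|q_kθ − p_k| > 3·q_{k+1}·|q_{k+1}θ − p_{k+1}|` for all sufficiently large `k`. -/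
theorem convergents_estimates_of_gamma_growth (γ : ℝ) (hγ : 0 < γ)
    (a p q : ℕ → ℕ) (θ : ℝ)
    (ha0 : a 0 = 1)
    (haS : ∀ k, a (k + 1) = ⌊(q k : ℝ) ^ γ⌋₊ + 1)
    (hp0 : p 0 = a 0) (hq0 : q 0 = 1)
    (hp1 : p 1 = a 1 * a 0 + 1) (hq1 : q 1 = a 1)
    (hpS : ∀ k, p (k + 2) = a (k + 2) * p (k + 1) + p k)
    (hqS : ∀ k, q (k + 2) = a (k + 2) * q (k + 1) + q k)
    (hθ : Tendsto (fun k => (p k : ℝ) / (q k : ℝ)) atTop (nhds θ)) :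
    (∀ k : ℕ,
      1 / ((q k : ℝ) ^ γ + 3) < (q k : ℝ) * |(q k : ℝ) * θ - (p k : ℝ)| ∧
      (q k : ℝ) * |(q k : ℝ) * θ - (p k : ℝ)| < (q k : ℝ) ^ (-γ) ∧
      (q k : ℝ) ^ (1 + γ) < (q (k + 1) : ℝ) ∧
      (q (k + 1) : ℝ) < 3 * (q k : ℝ) ^ (1 + γ)) ∧
    ∀ᶠ k : ℕ in atTop,
      (q k : ℝ) * |(q k : ℝ) * θ - (p k : ℝ)| >
        3 * ((q (k + 1) : ℝ) * |(q (k + 1) : ℝ) * θ - (p (k + 1) : ℝ)|) := by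
  -- q 1 = 2
  have hq1v : q 1 = 2 := by
    rw [hq1, haS 0, hq0]
    norm_num
  -- basic: positivity and strict monotonicity
  have hbase : ∀ k, 1 ≤ q k ∧ q k < q (k+1) := by
    intro k
    induction k with
    | zero => exact ⟨by rw [hq0], by rw [hq0, hq1v]; norm_num⟩
    | succ n ih =>
      obtain ⟨h1, h2⟩ := ih
      refine ⟨by omega, ?_⟩
      show q (n+1) < q (n+2)
      have h3 := hqS n
      have ha : 1 ≤ a (n+2) := by rw [haS]; omega
      nlinarith
  have hqpos : ∀ k, 0 < q k := fun k => (hbase k).1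
  have hqR1 : ∀ k, (1:ℝ) ≤ (q k:ℝ) := fun k => by exact_mod_cast (hbase k).1
  have hqRpos : ∀ k, (0:ℝ) < (q k:ℝ) := fun k => lt_of_lt_of_le one_pos (hqR1 k)
  have hqmonoR : ∀ k, (q k:ℝ) < (q (k+1):ℝ) := fun k => by exact_mod_cast (hbase k).2
  have hqge : ∀ k, k + 1 ≤ q k := by
    intro k
    induction k with
    | zero => omega
    | succ n ih => have := (hbase n).2; omega
  -- bounds on a (k+1) in ℝ
  have haR_lb : ∀ k, (q k:ℝ)^γ < (a (k+1):ℝ) := by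
    intro k
    rw [haS k]
    push_cast
    exact Nat.lt_floor_add_one _
  have haR_ub : ∀ k, (a (k+1):ℝ) ≤ (q k:ℝ)^γ + 1 := by
    intro k
    rw [haS k]
    push_cast
    have := Nat.floor_le (Real.rpow_nonneg (le_of_lt (hqRpos k)) γ)
    linarith
  -- q (k+1) between a(k+1)*q k and a(k+1)*q k + q k
  have hq_lb : ∀ k, a (k+1) * q k ≤ q (k+1) := by
    intro k
    cases k with
    | zero => show a 1 * q 0 ≤ q 1; rw [hq0, hq1, mul_one]
    | succ n => show a (n+2) * q (n+1) ≤ q (n+2); rw [hqS n]; omega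
  have hq_ub : ∀ k, q (k+1) ≤ a (k+1) * q k + q k := by
    intro k
    cases k with
    | zero => show q 1 ≤ a 1 * q 0 + q 0; rw [hq0, hq1, mul_one]; omega
    | succ n => show q (n+2) ≤ a (n+2) * q (n+1) + q (n+1); rw [hqS n]; have := (hbase n).2; omega
  -- rpow growth bounds
  have hgrow_lb : ∀ k, (q k:ℝ)^(1+γ) < (q (k+1):ℝ) := by
    intro k
    have h1 : (q k:ℝ)^(1+γ) = (q k:ℝ) * (q k:ℝ)^γ := by
      rw [Real.rpow_add (hqRpos k), Real.rpow_one]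
    have h2 : (q k:ℝ) * (q k:ℝ)^γ < (q k:ℝ) * (a (k+1):ℝ) :=
      mul_lt_mul_of_pos_left (haR_lb k) (hqRpos k)
    have h3 : (a (k+1) : ℝ) * (q k:ℝ) ≤ (q (k+1):ℝ) := by exact_mod_cast hq_lb k
    rw [h1]
    nlinarith
  have hgrow_ub : ∀ k, (q (k+1):ℝ) ≤ (q k:ℝ)^(1+γ) + 2 * (q k:ℝ) := by
    intro k
    have h1 : (q k:ℝ)^(1+γ) = (q k:ℝ) * (q k:ℝ)^γ := by
      rw [Real.rpow_add (hqRpos k), Real.rpow_one]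
    have h3 : (q (k+1):ℝ) ≤ (a (k+1) : ℝ) * (q k:ℝ) + q k := by exact_mod_cast hq_ub k
    have h4 := haR_ub k
    have := hqRpos k
    rw [h1]
    nlinarith
  -- determinant identity
  have hdet : ∀ k, (p (k+1) : ℤ) * (q k : ℤ) - (p k : ℤ) * (q (k+1) : ℤ) = (-1)^k := by
    intro k
    induction k with
    | zero =>
      rw [hp1, hq1, hp0, hq0]
      push_cast
      ring
    | succ n ih =>
      rw [hpS n, hqS n]
      push_cast
      push_cast at ih
      linear_combination (-1 : ℤ) * ih
  -- the convergents and the alternating structure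
  set x : ℕ → ℝ := fun k => (p k : ℝ) / (q k : ℝ) with hxdef
  set E : ℕ → ℝ := fun k => 1 / ((q k : ℝ) * (q (k+1) : ℝ)) with hEdef
  have hEpos : ∀ k, 0 < E k := by
    intro k
    have := hqRpos k; have := hqRpos (k+1)
    positivity
  have hEdec : ∀ k, E (k+1) < E k := by
    intro k
    have h1 := hqRpos k; have h2 := hqRpos (k+1); have h3 := hqRpos (k+2)
    have h4 := hqmonoR k; have h5 := hqmonoR (k+1)
    simp only [hEdef]
    rw [div_lt_div_iff₀ (by positivity) (by positivity)]
    nlinarith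
  have hdiff : ∀ k, x (k+1) - x k = (-1)^k * E k := by
    intro k
    have hdR : (p (k+1):ℝ) * (q k:ℝ) - (p k:ℝ) * (q (k+1):ℝ) = (-1)^k := by
      exact_mod_cast hdet k
    have h1 := (hqRpos k).ne'
    have h2 := (hqRpos (k+1)).ne'
    simp only [hxdef, hEdef]
    field_simp
    linear_combination hdR
  have hT := alt_tail_bounds x E θ hEpos hEdec hdiff hθ
  -- rewrite |q k * θ - p k| as q k * ((-1)^k * (θ - x k))
  have habs : ∀ k, |(q k:ℝ) * θ - (p k:ℝ)| = (q k:ℝ) * ((-1:ℝ)^k * (θ - x k)) := by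
    intro k
    have hTpos : 0 < (-1:ℝ)^k * (θ - x k) := by
      have h := (hT k).1; have := hEdec k; linarith
    have h1 : (q k:ℝ) * θ - (p k:ℝ) = (q k:ℝ) * (θ - x k) := by
      have h2 := (hqRpos k).ne'
      simp only [hxdef]
      field_simp
    rw [h1, abs_mul]
    rw [abs_of_pos (hqRpos k)]
    congr 1
    have : |θ - x k| = |(-1:ℝ)^k * (θ - x k)| := by
      rw [abs_mul, abs_pow, abs_neg, abs_one, one_pow, one_mul]
    rw [this, abs_of_pos hTpos]
  -- main per-k estimates
  have hmain : ∀ k : ℕ,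
      1 / ((q k : ℝ) ^ γ + 3) < (q k : ℝ) * |(q k : ℝ) * θ - (p k : ℝ)| ∧
      (q k : ℝ) * |(q k : ℝ) * θ - (p k : ℝ)| < (q k : ℝ) ^ (-γ) ∧
      (q k : ℝ) ^ (1 + γ) < (q (k + 1) : ℝ) ∧
      (q (k + 1) : ℝ) < 3 * (q k : ℝ) ^ (1 + γ) := by
    intro k
    have hb := hqRpos k
    have hb1 := hqR1 k
    have hc := hqRpos (k+1)
    have hd := hqRpos (k+2)
    have hgpos : (0:ℝ) < (q k:ℝ)^γ := Real.rpow_pos_of_pos hb γ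
    have hbg : (q k:ℝ)^(1+γ) = (q k:ℝ) * (q k:ℝ)^γ := by
      rw [Real.rpow_add hb, Real.rpow_one]
    have hAc : ((q (k+2)):ℝ) = (a (k+2):ℝ) * (q (k+1):ℝ) + (q k:ℝ) := by
      exact_mod_cast hqS k
    have hA1 : (1:ℝ) ≤ (a (k+2):ℝ) := by
      have : 1 ≤ a (k+2) := by rw [haS]; omega
      exact_mod_cast this
    have hACb : (0:ℝ) < (a (k+2):ℝ) * (q (k+1):ℝ) + (q k:ℝ) := by positivity
    have hTk := hT k
    rw [habs k]
    refine ⟨?_, ?_, hgrow_lb k, ?_⟩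
    · -- lower bound
      have he : (q k:ℝ) * ((q k:ℝ) * (E k - E (k+1)))
          = (q k:ℝ) * (a (k+2):ℝ) / ((q (k+2)):ℝ) := by
        simp only [hEdef]
        simp only [show k+1+1 = k+2 from rfl]
        rw [hAc]
        field_simp
        ring
      have h2 : 1 / ((q k:ℝ)^γ + 3) ≤ (q k:ℝ) * (a (k+2):ℝ) / ((q (k+2)):ℝ) := by
        rw [div_le_div_iff₀ (by positivity) hd]
        have hcub := hgrow_ub k
        rw [hbg] at hcub
        rw [hAc]
        nlinarith [mul_le_mul_of_nonneg_left hcub (by linarith : (0:ℝ) ≤ (a (k+2):ℝ)),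
          mul_le_mul_of_nonneg_right hA1 hb.le]
      calc 1 / ((q k:ℝ)^γ + 3) ≤ (q k:ℝ) * (a (k+2):ℝ) / ((q (k+2)):ℝ) := h2
        _ = (q k:ℝ) * ((q k:ℝ) * (E k - E (k+1))) := he.symm
        _ < (q k:ℝ) * ((q k:ℝ) * ((-1:ℝ)^k * (θ - x k))) :=
            mul_lt_mul_of_pos_left (mul_lt_mul_of_pos_left hTk.1 hb) hb
    · -- upper bound
      have hub : (q k:ℝ) * ((q k:ℝ) * ((-1:ℝ)^k * (θ - x k)))
          < (q k:ℝ) * ((q k:ℝ) * E k) :=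
        mul_lt_mul_of_pos_left (mul_lt_mul_of_pos_left hTk.2 hb) hb
      have he2 : (q k:ℝ) * ((q k:ℝ) * E k) = (q k:ℝ) / (q (k+1):ℝ) := by
        simp only [hEdef]
        field_simp
      have h3 : (q k:ℝ) / (q (k+1):ℝ) < (q k:ℝ) ^ (-γ) := by
        rw [Real.rpow_neg hb.le, ← one_div, div_lt_div_iff₀ hc hgpos]
        have h4 := hgrow_lb k
        rw [hbg] at h4
        nlinarith
      calc (q k:ℝ) * ((q k:ℝ) * ((-1:ℝ)^k * (θ - x k)))
          < (q k:ℝ) * ((q k:ℝ) * E k) := hub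
        _ = (q k:ℝ) / (q (k+1):ℝ) := he2
        _ < (q k:ℝ) ^ (-γ) := h3
    · -- q (k+1) < 3 q k ^ (1+γ)
      rcases Nat.eq_zero_or_pos k with hk0 | hkpos
      · subst hk0
        rw [hq0, hq1v]
        norm_num
      · have hb2 : (2:ℝ) ≤ (q k:ℝ) := by
          have h5 : 2 ≤ q k := by have := hqge k; omega
          exact_mod_cast h5
        have hg1 : (1:ℝ) < (q k:ℝ)^γ :=
          (Real.one_lt_rpow_iff_of_pos hb).mpr (Or.inl ⟨by linarith, hγ⟩)
        have h5 := hgrow_ub k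
        rw [hbg] at h5 ⊢
        nlinarith
  refine ⟨hmain, ?_⟩
  -- eventual comparison
  have h9 : ∀ᶠ k : ℕ in atTop, (9:ℝ) ≤ (k:ℝ)^γ :=
    ((tendsto_rpow_atTop hγ).comp tendsto_natCast_atTop_atTop).eventually_ge_atTop 9
  have h4 : ∀ᶠ k : ℕ in atTop, (4:ℝ) ≤ (k:ℝ)^(γ*γ) :=
    ((tendsto_rpow_atTop (mul_pos hγ hγ)).comp tendsto_natCast_atTop_atTop).eventually_ge_atTop 4
  filter_upwards [h9, h4] with k h9k h4k
  have hb := hqRpos k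
  have hc := hqRpos (k+1)
  have hkq : (k:ℝ) ≤ (q k:ℝ) := by
    have h5 : k ≤ q k := by have := hqge k; omega
    exact_mod_cast h5
  have hknn : (0:ℝ) ≤ (k:ℝ) := Nat.cast_nonneg k
  have hg9 : (9:ℝ) ≤ (q k:ℝ)^γ := le_trans h9k (Real.rpow_le_rpow hknn hkq hγ.le)
  have hm4 : (4:ℝ) ≤ (q k:ℝ)^(γ*γ) := le_trans h4k (Real.rpow_le_rpow hknn hkq (mul_pos hγ hγ).le)
  have hgpos : (0:ℝ) < (q k:ℝ)^γ := Real.rpow_pos_of_pos hb γ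
  have hmpos : (0:ℝ) < (q k:ℝ)^(γ*γ) := Real.rpow_pos_of_pos hb _
  have hL := (hmain k).1
  have hR := (hmain (k+1)).2.1
  have hc1γ : (q k:ℝ)^(1+γ) < (q (k+1):ℝ) := (hmain k).2.2.1
  have hcpow : (q k:ℝ)^γ * (q k:ℝ)^(γ*γ) < (q (k+1):ℝ)^γ := by
    have h0 : (0:ℝ) ≤ (q k:ℝ)^(1+γ) := (Real.rpow_pos_of_pos hb _).le
    have h1 : ((q k:ℝ)^(1+γ))^γ < (q (k+1):ℝ)^γ := Real.rpow_lt_rpow h0 hc1γ hγ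
    have h2 : ((q k:ℝ)^(1+γ))^γ = (q k:ℝ)^γ * (q k:ℝ)^(γ*γ) := by
      rw [← Real.rpow_mul hb.le]
      rw [show (1+γ)*γ = γ + γ*γ by ring, Real.rpow_add hb]
    linarith
  have hcγpos : (0:ℝ) < (q (k+1):ℝ)^γ := Real.rpow_pos_of_pos hc γ
  calc 3 * ((q (k+1):ℝ) * |(q (k+1):ℝ) * θ - (p (k+1):ℝ)|)
      < 3 * (q (k+1):ℝ)^(-γ) := by linarith
    _ = 3 / (q (k+1):ℝ)^γ := by rw [Real.rpow_neg hc.le]; ring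
    _ < 3 / ((q k:ℝ)^γ * (q k:ℝ)^(γ*γ)) :=
        div_lt_div_of_pos_left (by norm_num) (by positivity) hcpow
    _ ≤ 1 / ((q k:ℝ)^γ + 3) := by
        rw [div_le_div_iff₀ (by positivity) (by positivity)]
        nlinarith
    _ < (q k:ℝ) * |(q k:ℝ) * θ - (p k:ℝ)| := hL
end

section
/- Fix γ ≥ 0, and let θ = [a₀; a₁, a₂, …] be the continued fraction with a₀ = 1 and a_{k+1} = ⌊q_k^γ⌋ + 1 for every k ≥ 0, where q_k is the denominator of the k-th convergent of θ. Then ω(θ) = 1 + γ. -/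
open Filter
set_option maxHeartbeats 3200000 in
/-- Fix `γ ≥ 0` and let `θ = [a₀; a₁, a₂, …]` be the continued fraction with
`a₀ = 1` and `a_{k+1} = ⌊q_k^γ⌋ + 1`, where `p_k/q_k` are its convergents (given by
the standard recurrences) and `θ` is the limit of the convergents. Then `ω(θ) = 1 + γ`. -/
theorem regularExp_of_gamma_growth (γ : ℝ) (hγ : 0 ≤ γ)
    (a p q : ℕ → ℕ) (θ : ℝ)
    (ha0 : a 0 = 1)
    (haS : ∀ k, a (k + 1) = ⌊(q k : ℝ) ^ γ⌋₊ + 1)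
    (hp0 : p 0 = a 0) (hq0 : q 0 = 1)
    (hp1 : p 1 = a 1 * a 0 + 1) (hq1 : q 1 = a 1)
    (hpS : ∀ k, p (k + 2) = a (k + 2) * p (k + 1) + p k)
    (hqS : ∀ k, q (k + 2) = a (k + 2) * q (k + 1) + q k)
    (hθ : Tendsto (fun k => (p k : ℝ) / (q k : ℝ)) atTop (nhds θ)) :
    regularExp θ = ((1 + γ : ℝ) : EReal) := by
  have haP : ∀ k, 1 ≤ a k := by
    intro k
    cases k with
    | zero => omega
    | succ n => rw [haS n]; omega
  have hqP : ∀ k, 1 ≤ q k := by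
    have h : ∀ k, 1 ≤ q k ∧ 1 ≤ q (k + 1) := by
      intro k
      induction k with
      | zero =>
        refine ⟨by omega, ?_⟩
        rw [hq1]; exact haP 1
      | succ n ih =>
        refine ⟨ih.2, ?_⟩
        rw [hqS n]
        have := ih.1
        omega
    exact fun k => (h k).1
  have hpP : ∀ k, 1 ≤ p k := by
    have h : ∀ k, 1 ≤ p k ∧ 1 ≤ p (k + 1) := by
      intro k
      induction k with
      | zero => exact ⟨by omega, by rw [hp1]; omega⟩
      | succ n ih =>
        refine ⟨ih.2, ?_⟩
        rw [hpS n]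
        have := ih.1
        omega
    exact fun k => (h k).1
  have hq1val : q 1 = 2 := by
    rw [hq1, haS 0, hq0]
    norm_num
  have hqmono : ∀ k, q k < q (k + 1) := by
    intro k
    cases k with
    | zero => rw [hq0, hq1val]; omega
    | succ n =>
      rw [hqS n]
      have h1 : q (n + 1) ≤ a (n + 2) * q (n + 1) := Nat.le_mul_of_pos_left _ (haP (n + 2))
      have := hqP n
      omega
  have hqge : ∀ k, k + 1 ≤ q k := by
    intro k
    induction k with
    | zero => omega
    | succ n ih => have := hqmono n; omega
  have hdet : ∀ k, ((p (k + 1) : ℤ) * q k - p k * q (k + 1)) = (-1) ^ k := by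
    intro k
    induction k with
    | zero =>
      rw [hp1, hq1, hp0, hq0]
      push_cast
      ring
    | succ n ih =>
      push_cast [hpS n, hqS n, pow_succ]
      push_cast at ih
      linear_combination -ih
  have hqR : ∀ k, (0:ℝ) < q k := fun k => by exact_mod_cast hqP k
  have hdetR : ∀ k, ((p (k + 1) : ℝ) * q k - p k * q (k + 1)) = (-1) ^ k := by
    intro k; exact_mod_cast hdet k
  have hsq : ∀ k, ((-1:ℝ)) ^ k * (-1) ^ k = 1 := by
    intro k; rw [← pow_add, ← two_mul, pow_mul]; norm_num
  have hdiff : ∀ k, (p (k + 1) : ℝ) / q (k + 1) - p k / q k = (-1) ^ k / (q k * q (k + 1)) := by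
    intro k
    have h1 := (hqR k).ne'
    have h2 := (hqR (k + 1)).ne'
    rw [div_sub_div _ _ h2 h1,
      show (p (k+1):ℝ) * q k - q (k + 1) * p k = (-1) ^ k from by linear_combination hdetR k,
      mul_comm ((q (k+1)):ℝ) (q k)]
  have hdiff2 : ∀ k, (p (k + 2) : ℝ) / q (k + 2) - p k / q k
      = (-1) ^ k * a (k + 2) / (q k * q (k + 2)) := by
    intro k
    have h1 := (hqR k).ne'
    have h2 := (hqR (k + 2)).ne'
    have e1 : (p (k+2) : ℝ) = a (k + 2) * p (k + 1) + p k := by exact_mod_cast congrArg (Nat.cast : ℕ → ℝ) (hpS k)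
    have e2 : (q (k+2) : ℝ) = a (k + 2) * q (k + 1) + q k := by exact_mod_cast congrArg (Nat.cast : ℕ → ℝ) (hqS k)
    rw [div_sub_div _ _ h2 h1,
      show (p (k+2):ℝ) * q k - q (k + 2) * p k = (-1) ^ k * a (k + 2) from by
        rw [e1, e2]; linear_combination (a (k+2) : ℝ) * hdetR k,
      mul_comm ((q (k+2)):ℝ) (q k)]
  have key : ∀ n k, 0 ≤ (-1:ℝ) ^ k * ((p (k + n) : ℝ) / q (k + n) - p k / q k) := by
    intro n
    induction n using Nat.strong_induction_on with
    | _ n ih =>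
      match n with
      | 0 => intro k; simp
      | 1 =>
        intro k
        rw [hdiff k, ← mul_div_assoc, hsq k]
        positivity
      | (n + 2) =>
        intro k
        have h := ih n (by omega) (k + 2)
        have hidx : k + 2 + n = k + (n + 2) := by omega
        rw [hidx] at h
        have e1 : (-1:ℝ) ^ (k + 2) = (-1) ^ k := by rw [pow_add]; norm_num
        rw [e1] at h
        have h2 : (0:ℝ) ≤ (-1) ^ k * ((p (k + 2) : ℝ) / q (k + 2) - p k / q k) := by
          rw [hdiff2 k, ← mul_div_assoc, ← mul_assoc, hsq k]
          positivity
        have expand : (-1:ℝ) ^ k * ((p (k + (n+2)) : ℝ) / q (k + (n+2)) - p k / q k)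
            = (-1) ^ k * ((p (k + (n+2)) : ℝ) / q (k + (n+2)) - p (k+2) / q (k+2))
              + (-1) ^ k * ((p (k + 2) : ℝ) / q (k + 2) - p k / q k) := by ring
        linarith [expand, h, h2]
  have hbetween : ∀ k, 0 ≤ (-1:ℝ) ^ k * (θ - p k / q k) := by
    intro k
    have htend : Tendsto (fun m => (-1:ℝ) ^ k * ((p m : ℝ) / q m - p k / q k)) atTop
        (nhds ((-1:ℝ) ^ k * (θ - p k / q k))) :=
      (hθ.sub_const _).const_mul _
    refine ge_of_tendsto htend ?_
    filter_upwards [eventually_ge_atTop k] with m hm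
    have := key (m - k) k
    rwa [Nat.add_sub_cancel' hm] at this
  have hup : ∀ k, (-1:ℝ) ^ k * (θ * q k - p k) ≤ 1 / q (k + 1) := by
    intro k
    have hb := hbetween (k + 1)
    have e1 : (-1:ℝ) ^ (k + 1) = -(-1) ^ k := by rw [pow_succ]; ring
    rw [e1] at hb
    have hterm : (-1:ℝ) ^ k * ((p (k+1) : ℝ) / q (k+1) - p k / q k) = 1 / (q k * q (k + 1)) := by
      rw [hdiff k, ← mul_div_assoc, hsq k]
    have expand2 : (-1:ℝ) ^ k * (θ - (p k : ℝ) / q k)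
        = -(-(-1:ℝ) ^ k * (θ - (p (k+1) : ℝ) / q (k+1)))
          + (-1) ^ k * ((p (k+1) : ℝ) / q (k+1) - p k / q k) := by ring
    have hc : (-1:ℝ) ^ k * (θ - p k / q k) ≤ 1 / (q k * q (k + 1)) := by
      linarith [expand2, hb, hterm]
    have expand : (-1:ℝ) ^ k * (θ * q k - p k) = q k * ((-1) ^ k * (θ - p k / q k)) := by
      field_simp [(hqR k).ne']
    rw [expand]
    calc (q k : ℝ) * ((-1) ^ k * (θ - p k / q k)) ≤ q k * (1 / (q k * q (k + 1))) :=
          mul_le_mul_of_nonneg_left hc (hqR k).le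
      _ = 1 / q (k + 1) := by
          rw [← mul_div_assoc, mul_one, div_mul_cancel_left₀ (hqR k).ne', one_div]
  have hlow : ∀ k, (a (k + 2) : ℝ) / q (k + 2) ≤ (-1:ℝ) ^ k * (θ * q k - p k) := by
    intro k
    have hb := hbetween (k + 2)
    have e1 : (-1:ℝ) ^ (k + 2) = (-1) ^ k := by rw [pow_add]; norm_num
    rw [e1] at hb
    have hterm : (-1:ℝ) ^ k * ((p (k+2) : ℝ) / q (k+2) - p k / q k)
        = (a (k+2) : ℝ) / (q k * q (k + 2)) := by
      rw [hdiff2 k, ← mul_div_assoc, ← mul_assoc, hsq k, one_mul]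
    have expand2 : (-1:ℝ) ^ k * (θ - (p k : ℝ) / q k)
        = (-1:ℝ) ^ k * (θ - (p (k+2) : ℝ) / q (k+2))
          + (-1) ^ k * ((p (k+2) : ℝ) / q (k+2) - p k / q k) := by ring
    have hc : (a (k + 2) : ℝ) / (q k * q (k + 2)) ≤ (-1) ^ k * (θ - p k / q k) := by
      linarith [expand2, hb, hterm]
    have expand : (-1:ℝ) ^ k * (θ * q k - p k) = q k * ((-1) ^ k * (θ - p k / q k)) := by
      field_simp [(hqR k).ne']
    rw [expand]
    calc (a (k + 2) : ℝ) / q (k + 2) = q k * ((a (k + 2) : ℝ) / (q k * q (k + 2))) := by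
          rw [← mul_div_assoc, mul_div_mul_left _ _ (hqR k).ne']
      _ ≤ q k * ((-1) ^ k * (θ - p k / q k)) := mul_le_mul_of_nonneg_left hc (hqR k).le
  have hEpos : ∀ k, 0 < (-1:ℝ) ^ k * (θ * q k - p k) := by
    intro k
    refine lt_of_lt_of_le ?_ (hlow k)
    have h1 : (0:ℝ) < a (k + 2) := by exact_mod_cast haP (k + 2)
    have h2 := hqR (k + 2)
    positivity
  have hqone : ∀ k, (1:ℝ) ≤ q k := fun k => by exact_mod_cast hqP k
  have hrpow_split : ∀ k, ((q k : ℝ)) ^ (1 + γ) = q k * (q k : ℝ) ^ γ := by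
    intro k
    rw [Real.rpow_add (hqR k), Real.rpow_one]
  have hself_le : ∀ k, (q k : ℝ) ≤ (q k : ℝ) ^ (1 + γ) := by
    intro k
    calc (q k : ℝ) = (q k : ℝ) ^ (1:ℝ) := (Real.rpow_one _).symm
      _ ≤ (q k : ℝ) ^ (1 + γ) := Real.rpow_le_rpow_of_exponent_le (hqone k) (by linarith)
  have hq_upper : ∀ k, (q (k + 1) : ℝ) ≤ 3 * (q k : ℝ) ^ (1 + γ) := by
    intro k
    cases k with
    | zero =>
      rw [hq1val, hq0]
      push_cast
      rw [Real.one_rpow]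
      norm_num
    | succ n =>
      have e2 : (q (n + 2) : ℝ) = a (n + 2) * q (n + 1) + q n := by
        exact_mod_cast congrArg (Nat.cast : ℕ → ℝ) (hqS n)
      have hfl : (a (n + 2) : ℝ) ≤ (q (n + 1) : ℝ) ^ γ + 1 := by
        rw [haS (n + 1)]
        push_cast
        have := Nat.floor_le (by positivity : (0:ℝ) ≤ (q (n+1) : ℝ) ^ γ)
        linarith
      have hmon : (q n : ℝ) ≤ q (n + 1) := by exact_mod_cast (hqmono n).le
      have h1 := hrpow_split (n + 1)
      have h2 := hself_le (n + 1)
      have h3 := hqR (n + 1)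
      nlinarith [Real.rpow_nonneg (le_of_lt (hqR (n+1))) γ]
  have hq_lower : ∀ k, (q k : ℝ) ^ (1 + γ) ≤ q (k + 1) := by
    intro k
    have haq : a (k + 1) * q k ≤ q (k + 1) := by
      cases k with
      | zero => show a 1 * q 0 ≤ q 1; rw [hq1, hq0]; omega
      | succ n => show a (n + 2) * q (n + 1) ≤ q (n + 2); rw [hqS n]; omega
    have haq' : (a (k + 1) : ℝ) * q k ≤ q (k + 1) := by exact_mod_cast haq
    have hfl : (q k : ℝ) ^ γ ≤ a (k + 1) := by
      rw [haS k]
      push_cast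
      exact (Nat.lt_floor_add_one _).le
    have h1 := hrpow_split k
    nlinarith [hqR k]
  have hbest : ∀ x y : ℤ, 1 ≤ x → 1 / (6 * (x:ℝ) ^ (1 + γ)) ≤ |θ * x - y| := by
    have hsqZ : ∀ k, ((-1:ℤ)) ^ k * (-1) ^ k = 1 := by
      intro k; rw [← pow_add, ← two_mul, pow_mul]; norm_num
    have hsqR : ∀ k, ((-1:ℝ)) ^ k * (-1) ^ k = 1 := by
      intro k; rw [← pow_add, ← two_mul, pow_mul]; norm_num
    intro x y hx
    -- find k with q k ≤ x < q (k+1)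
    have hex : ∃ n, x < (q n : ℤ) := by
      refine ⟨x.toNat, ?_⟩
      have h1 := hqge x.toNat
      have h2 : (x.toNat : ℤ) = x := Int.toNat_of_nonneg (by omega)
      have h3 : (x.toNat : ℤ) + 1 ≤ (q x.toNat : ℤ) := by exact_mod_cast h1
      omega
    have hn0 : Nat.find hex ≠ 0 := by
      intro h0
      have h5 := Nat.find_spec hex
      rw [h0, hq0] at h5
      omega
    obtain ⟨k, hk1, hk2⟩ : ∃ k, (q k : ℤ) ≤ x ∧ x < (q (k + 1) : ℤ) := by
      obtain ⟨k, hk⟩ : ∃ k, Nat.find hex = k + 1 := ⟨Nat.find hex - 1, by omega⟩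
      refine ⟨k, ?_, by rw [← hk]; exact Nat.find_spec hex⟩
      have := Nat.find_min hex (m := k) (by omega)
      omega
    clear hex hn0
    -- decomposition
    obtain ⟨l, hl⟩ : ∃ l : ℤ, l = (-1) ^ k * ((p (k + 1) : ℤ) * x - (q (k + 1) : ℤ) * y) := ⟨_, rfl⟩
    obtain ⟨m, hm⟩ : ∃ m : ℤ, m = (-1) ^ k * ((q k : ℤ) * y - (p k : ℤ) * x) := ⟨_, rfl⟩
    have hx' : l * q k + m * q (k + 1) = x := by
      rw [hl, hm]
      linear_combination ((-1:ℤ)) ^ k * x * hdet k + x * hsqZ k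
    have hy' : l * p k + m * p (k + 1) = y := by
      rw [hl, hm]
      linear_combination ((-1:ℤ)) ^ k * y * hdet k + y * hsqZ k
    clear hl hm
    have hxR : (l : ℝ) * q k + (m : ℝ) * q (k + 1) = x := by exact_mod_cast congrArg (Int.cast : ℤ → ℝ) hx'
    have hyR : (l : ℝ) * p k + (m : ℝ) * p (k + 1) = y := by exact_mod_cast congrArg (Int.cast : ℤ → ℝ) hy'
    have hre : θ * x - y = (l : ℝ) * (θ * q k - p k) + (m : ℝ) * (θ * q (k + 1) - p (k + 1)) := by
      linear_combination hyR - θ * hxR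
    obtain ⟨U, hU⟩ : ∃ U : ℝ, U = (-1) ^ k * (θ * q k - p k) := ⟨_, rfl⟩
    obtain ⟨V, hV⟩ : ∃ V : ℝ, V = (-1) ^ (k + 1) * (θ * q (k + 1) - p (k + 1)) := ⟨_, rfl⟩
    have hUpos : 0 < U := hU ▸ hEpos k
    have hVpos : 0 < V := hV ▸ hEpos (k + 1)
    have hpk1 : ((-1:ℝ)) ^ k * (-1) ^ (k + 1) = -1 := by
      rw [pow_succ, ← mul_assoc, hsqR k, one_mul]
    have he : θ * q k - (p k : ℝ) = (-1) ^ k * U := by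
      rw [hU, ← mul_assoc, hsqR k, one_mul]
    have hf : θ * q (k + 1) - (p (k + 1) : ℝ) = -((-1) ^ k * V) := by
      rw [hV, ← mul_assoc, hpk1]
      ring
    have hre2 : |θ * x - y| = |(l:ℝ) * U - (m:ℝ) * V| := by
      rw [hre, he, hf]
      have : (l:ℝ) * ((-1) ^ k * U) + (m:ℝ) * -((-1) ^ k * V) = (-1) ^ k * ((l:ℝ) * U - (m:ℝ) * V) := by ring
      rw [this, abs_mul, abs_pow, abs_neg, abs_one, one_pow, one_mul]
    -- case analysis: U ≤ |θx - y|
    have hcase : U ≤ |θ * x - y| := by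
      rw [hre2]
      have hqkZ : (1 : ℤ) ≤ q k := by exact_mod_cast hqP k
      have hqk1Z : (1 : ℤ) ≤ q (k + 1) := by exact_mod_cast hqP (k + 1)
      rcases lt_trichotomy m 0 with hm0 | hm0 | hm0
      · rcases lt_trichotomy l 0 with hl0 | hl0 | hl0
        · -- l < 0, m < 0 : x < 0, contradiction
          exfalso
          have t1 : l * q k ≤ -q k := by
            have := mul_le_mul_of_nonneg_right (show l ≤ -1 by omega) (show (0:ℤ) ≤ q k by omega)
            linarith
          have t2 : m * q (k+1) ≤ -q (k+1) := by
            have := mul_le_mul_of_nonneg_right (show m ≤ -1 by omega) (show (0:ℤ) ≤ q (k+1) by omega)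
            linarith
          linarith [hx']
        · -- l = 0, m < 0 : x ≤ -q(k+1) < 0
          exfalso
          rw [hl0, zero_mul, zero_add] at hx'
          have t2 : m * q (k+1) ≤ -q (k+1) := by
            have := mul_le_mul_of_nonneg_right (show m ≤ -1 by omega) (show (0:ℤ) ≤ q (k+1) by omega)
            linarith
          linarith [hx']
        · -- l ≥ 1, m ≤ -1 : l*U - m*V ≥ U + V
          have hl1 : (1:ℝ) ≤ l := by exact_mod_cast (show (1:ℤ) ≤ l by omega)
          have hm1 : (m:ℝ) ≤ -1 := by exact_mod_cast (show m ≤ -1 by omega)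
          refine le_abs.mpr (Or.inl ?_)
          have t1 : 0 ≤ ((l:ℝ) - 1) * U := mul_nonneg (by linarith) hUpos.le
          have t2 : 0 ≤ (-(m:ℝ)) * V := mul_nonneg (by linarith) hVpos.le
          nlinarith
      · -- m = 0 : x = l * q k, l ≥ 1
        rw [hm0, zero_mul, add_zero] at hx'
        have hl1 : 1 ≤ l := by
          rcases le_or_gt 1 l with h | h
          · exact h
          · exfalso
            have : l * q k ≤ 0 := mul_nonpos_of_nonpos_of_nonneg (by omega) (by omega)
            linarith [hx']
        have hl1R : (1:ℝ) ≤ l := by exact_mod_cast hl1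
        rw [hm0]
        push_cast
        rw [zero_mul, sub_zero, abs_mul, abs_of_pos hUpos]
        exact le_mul_of_one_le_left hUpos.le (le_trans hl1R (le_abs_self _))
      · rcases lt_trichotomy l 0 with hl0 | hl0 | hl0
        · -- l ≤ -1, m ≥ 1 : l*U - m*V ≤ -U - V
          have hl1 : (l:ℝ) ≤ -1 := by exact_mod_cast (show l ≤ -1 by omega)
          have hm1 : (1:ℝ) ≤ m := by exact_mod_cast (show (1:ℤ) ≤ m by omega)
          refine le_abs.mpr (Or.inr ?_)
          have t1 : 0 ≤ (-(l:ℝ) - 1) * U := mul_nonneg (by linarith) hUpos.le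
          have t2 : 0 ≤ ((m:ℝ) - 1) * V := mul_nonneg (by linarith) hVpos.le
          nlinarith
        · -- l = 0, m ≥ 1 : x ≥ q(k+1), contradiction
          exfalso
          rw [hl0, zero_mul, zero_add] at hx'
          have t2 : q (k+1) ≤ m * q (k+1) := le_mul_of_one_le_left (by omega) (by omega)
          linarith [hx']
        · -- l ≥ 1, m ≥ 1 : x ≥ q k + q(k+1), contradiction
          exfalso
          have t1 : q k ≤ l * q k := le_mul_of_one_le_left (by omega) (by omega)
          have t2 : q (k+1) ≤ m * q (k+1) := le_mul_of_one_le_left (by omega) (by omega)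
          linarith [hx']
    -- chain of lower bounds
    have hstep1 : 1 / (2 * (q (k + 1) : ℝ)) ≤ U := by
      rw [hU]
      refine le_trans ?_ (hlow k)
      rw [div_le_div_iff₀ (mul_pos two_pos (hqR (k + 1))) (hqR (k + 2))]
      have e2 : (q (k + 2) : ℝ) = a (k + 2) * q (k + 1) + q k := by
        exact_mod_cast congrArg (Nat.cast : ℕ → ℝ) (hqS k)
      have ha1 : (1:ℝ) ≤ a (k + 2) := by exact_mod_cast haP (k + 2)
      have hqm : (q k : ℝ) ≤ q (k + 1) := by exact_mod_cast (hqmono k).le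
      nlinarith [hqR (k + 1), hqone (k+1)]
    have hstep2 : 1 / (6 * (q k : ℝ) ^ (1 + γ)) ≤ 1 / (2 * (q (k + 1) : ℝ)) := by
      apply one_div_le_one_div_of_le (mul_pos two_pos (hqR (k + 1)))
      linarith [hq_upper k]
    have hstep3 : 1 / (6 * (x : ℝ) ^ (1 + γ)) ≤ 1 / (6 * (q k : ℝ) ^ (1 + γ)) := by
      apply one_div_le_one_div_of_le (mul_pos (by norm_num) (Real.rpow_pos_of_pos (hqR k) _))
      have hqx : (q k : ℝ) ≤ (x : ℝ) := by exact_mod_cast hk1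
      have := Real.rpow_le_rpow (le_of_lt (hqR k)) hqx (by linarith : (0:ℝ) ≤ 1 + γ)
      linarith
    linarith [hcase, hstep1, hstep2, hstep3]
  -- symmetric version of hbest
  have hsym : ∀ x y : ℤ, x ≠ 0 → 1 / (6 * |(x:ℝ)| ^ (1 + γ)) ≤ |θ * x - y| := by
    intro x y hx0
    rcases lt_or_gt_of_ne hx0 with hneg | hpos
    · have h := hbest (-x) (-y) (by omega)
      have e1 : ((-x : ℤ) : ℝ) = -(x:ℝ) := by push_cast; ring
      have e2 : ((-y : ℤ) : ℝ) = -(y:ℝ) := by push_cast; ring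
      rw [e1, e2] at h
      have e3 : |θ * -(x:ℝ) - -(y:ℝ)| = |θ * x - y| := by
        rw [show θ * -(x:ℝ) - -(y:ℝ) = -(θ * x - y) from by ring, abs_neg]
      have e4 : -(x:ℝ) = |(x:ℝ)| := by
        rw [abs_of_neg (by exact_mod_cast hneg)]
      rw [e3, e4] at h
      exact h
    · have h := hbest x y (by omega)
      rwa [show |(x:ℝ)| = (x:ℝ) from abs_of_pos (by exact_mod_cast hpos)]
  -- finiteness for exponents above 1 + γ
  have hfin : ∀ δ : ℝ, 1 + γ < δ →
      {xy : ℤ × ℤ | xy.1 ≠ 0 ∧ xy.2 ≠ 0 ∧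
        |θ * (xy.1 : ℝ) - (xy.2 : ℝ)| ≤ |(xy.1 : ℝ)| ^ (-δ)}.Finite := by
    intro δ hδ
    have hε : 0 < δ - (1 + γ) := by linarith
    set B : ℝ := (6:ℝ) ^ (δ - (1 + γ))⁻¹ with hB
    have hB1 : (1:ℝ) ≤ B := by
      rw [hB]
      apply Real.one_le_rpow (by norm_num) (by positivity)
    set C : ℝ := |θ| * B + 1 with hC
    apply Set.Finite.subset (Set.finite_Icc ((-⌈B⌉, -⌈C⌉) : ℤ × ℤ) ((⌈B⌉, ⌈C⌉) : ℤ × ℤ))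
    rintro ⟨x, y⟩ ⟨hx0, hy0, hineq⟩
    have hx0' : x ≠ 0 := hx0
    have hx1 : (1:ℝ) ≤ |(x:ℝ)| := by
      exact_mod_cast Int.one_le_abs hx0'
    have hxpos : (0:ℝ) < |(x:ℝ)| := by linarith
    have hL := hsym x y hx0
    -- |x| ^ (δ - (1+γ)) ≤ 6
    have hcomb : |(x:ℝ)| ^ (δ - (1 + γ)) ≤ 6 := by
      have h1 : |(x:ℝ)| ^ (-δ) = 1 / |(x:ℝ)| ^ δ := by
        rw [Real.rpow_neg (abs_nonneg _), one_div]
      have h2 : 1 / (6 * |(x:ℝ)| ^ (1 + γ)) ≤ 1 / |(x:ℝ)| ^ δ := by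
        rw [← h1]; exact le_trans hL hineq
      have h3 : |(x:ℝ)| ^ δ ≤ 6 * |(x:ℝ)| ^ (1 + γ) := by
        have hp1 : (0:ℝ) < |(x:ℝ)| ^ δ := Real.rpow_pos_of_pos hxpos _
        have hp2 : (0:ℝ) < 6 * |(x:ℝ)| ^ (1 + γ) :=
          mul_pos (by norm_num) (Real.rpow_pos_of_pos hxpos _)
        rw [div_le_div_iff₀ hp2 hp1, one_mul, one_mul] at h2
        linarith
      have h4 : |(x:ℝ)| ^ δ = |(x:ℝ)| ^ (δ - (1 + γ)) * |(x:ℝ)| ^ (1 + γ) := by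
        rw [← Real.rpow_add hxpos]; ring_nf
      rw [h4] at h3
      have hp3 : (0:ℝ) < |(x:ℝ)| ^ (1 + γ) := Real.rpow_pos_of_pos hxpos _
      exact le_of_mul_le_mul_right (by linarith) hp3
    have hxB : |(x:ℝ)| ≤ B := by
      rw [hB]
      rw [← Real.le_rpow_inv_iff_of_pos (abs_nonneg _) (by norm_num) hε] at hcomb
      exact hcomb
    -- bound on y
    have hyC : |(y:ℝ)| ≤ C := by
      have h1 : |θ * x - y| ≤ 1 := by
        refine le_trans hineq ?_
        exact Real.rpow_le_one_of_one_le_of_nonpos hx1 (by linarith)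
      have h2 : |(y:ℝ)| ≤ |θ * x| + |θ * x - y| := by
        have := abs_sub_abs_le_abs_sub (θ * x) (y:ℝ)
        have := abs_sub (θ * (x:ℝ)) (y:ℝ)
        calc |(y:ℝ)| = |θ * x - (θ * x - y)| := by ring_nf
          _ ≤ |θ * (x:ℝ)| + |θ * x - y| := abs_sub _ _
      have h3 : |θ * (x:ℝ)| ≤ |θ| * B := by
        rw [abs_mul]
        exact mul_le_mul_of_nonneg_left hxB (abs_nonneg θ)
      rw [hC]
      linarith
    -- conclude membership
    have hxI : -⌈B⌉ ≤ x ∧ x ≤ ⌈B⌉ := by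
      have : |x| ≤ ⌈B⌉ := by
        have h1 : |(x:ℝ)| ≤ (⌈B⌉ : ℝ) := le_trans hxB (Int.le_ceil B)
        exact_mod_cast h1
      exact abs_le.mp this
    have hyI : -⌈C⌉ ≤ y ∧ y ≤ ⌈C⌉ := by
      have : |y| ≤ ⌈C⌉ := by
        have h1 : |(y:ℝ)| ≤ (⌈C⌉ : ℝ) := le_trans hyC (Int.le_ceil C)
        exact_mod_cast h1
      exact abs_le.mp this
    exact Set.mem_Icc.mpr ⟨⟨hxI.1, hyI.1⟩, ⟨hxI.2, hyI.2⟩⟩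
  -- infinitude at exponent 1 + γ
  have hinf : {xy : ℤ × ℤ | xy.1 ≠ 0 ∧ xy.2 ≠ 0 ∧
      |θ * (xy.1 : ℝ) - (xy.2 : ℝ)| ≤ |(xy.1 : ℝ)| ^ (-(1 + γ))}.Infinite := by
    apply Set.infinite_of_injective_forall_mem
      (f := fun k : ℕ => ((q k : ℤ), (p k : ℤ)))
    · intro i j hij
      have hmono : StrictMono q := strictMono_nat_of_lt_succ hqmono
      have : (q i : ℤ) = q j := (Prod.mk.injEq _ _ _ _).mp hij |>.1
      exact hmono.injective (by exact_mod_cast this)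
    · intro k
      refine ⟨by have := hqP k; simp; omega, by have := hpP k; simp; omega, ?_⟩
      have e1 : |((q k : ℤ) : ℝ)| = (q k : ℝ) := by
        rw [show ((q k : ℤ) : ℝ) = (q k : ℝ) from by push_cast; ring]
        exact abs_of_pos (hqR k)
      have e2 : |θ * ((q k : ℤ) : ℝ) - ((p k : ℤ) : ℝ)| = (-1:ℝ) ^ k * (θ * q k - p k) := by
        have h3 : θ * ((q k : ℤ) : ℝ) - ((p k : ℤ) : ℝ) = θ * (q k : ℝ) - (p k : ℝ) := by
          push_cast; ring
        rw [h3]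
        have h4 : |(-1:ℝ) ^ k * (θ * (q k : ℝ) - p k)| = (-1:ℝ) ^ k * (θ * q k - p k) :=
          abs_of_pos (hEpos k)
        rw [abs_mul, abs_pow, abs_neg, abs_one, one_pow, one_mul] at h4
        exact h4
      rw [e2, e1]
      have h5 : (-1:ℝ) ^ k * (θ * q k - p k) ≤ 1 / q (k + 1) := hup k
      have h6 : 1 / (q (k + 1) : ℝ) ≤ (q k : ℝ) ^ (-(1 + γ)) := by
        rw [Real.rpow_neg (le_of_lt (hqR k)), ← one_div]
        apply one_div_le_one_div_of_le (Real.rpow_pos_of_pos (hqR k) _)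
        exact hq_lower k
      linarith
  -- compute the sSup
  rw [regularExp]
  apply le_antisymm
  · apply sSup_le
    rintro g ⟨δ, rfl, hset⟩
    rw [EReal.coe_le_coe_iff]
    by_contra hcon
    push_neg at hcon
    exact hset (hfin δ hcon)
  · exact le_sSup ⟨1 + γ, rfl, hinf⟩
end
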